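/- arXiv:1511.08004 — 8 statements merged into one kernel-verified Lean document; each statement's English description precedes it below -/
import Mathlib

section
/- A tuple $\mathbf{i} = (i_1, \ldots, i_e) \in (\mathbb{Z}/e\mathbb{Z})^e$ is the residue sequence of some standard tableau whose shape is an $e$-hook partition $(k, 1^{e-k})$ if and only if $i_1 = 0$ and both $(1, 2, \ldots, i_e - 1)$ and $(e-1, e-2, \ldots, i_e + 1)$ are subsequences of $\mathbf{i}$ (where elements of $\mathbb{Z}/e\mathbb{Z}$ are identified with $\{0, 1, \ldots, e-1\}$). -/
/-- The `e`-residue of a box `(a, b)` (0-indexed), i.e. `b - a` mod `e`. -/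
def boxRes (e : ℕ) (c : ℕ × ℕ) : ZMod e := (((c.2 : ℤ) - (c.1 : ℤ)) : ℤ)

/-- A standard tableau of size `n`: an injective filling whose image is a Young
diagram (a lower set in `ℕ × ℕ`) and whose inverse increases along rows and
columns. -/
def IsStandardTableau (n : ℕ) (t : Fin n → ℕ × ℕ) : Prop :=
  Function.Injective t ∧
  IsLowerSet (↑(Finset.image t Finset.univ) : Set (ℕ × ℕ)) ∧
  (∀ m m' : Fin n, (t m).1 = (t m').1 → (t m).2 < (t m').2 → m < m') ∧
  (∀ m m' : Fin n, (t m).2 = (t m').2 → (t m).1 < (t m').1 → m < m')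

/-- The cells of the `e`-hook partition `(k, 1^{e-k})` (0-indexed). -/
def hookCells (e k : ℕ) : Finset (ℕ × ℕ) :=
  ((Finset.range k).image fun j => (0, j)) ∪
    ((Finset.range (e + 1 - k)).image fun a => (a, 0))

/-! In a standard tableau the entries increase along the product order on cells, so `1` sits in
the corner `(0, 0)` and `e` in a maximal cell of the hook, i.e. at the end of the arm or of the
leg; this pins `i_e` down to `k - 1` or `k`, and reading the arm and the leg in order yields the
two subsequences.

Conversely, `i₁ = 0`, `i_e` and the two subsequences already take all `e` residues, so `i` is a
bijection onto `ℤ/eℤ`. Put each entry `m` into the cell of the hook `(i_e + 1, 1^{e - 1 - i_e})`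
of residue `i m`: the residues `0, 1, …, i_e` occur in increasing positions along the arm and
`0, e - 1, …, i_e + 1` along the leg, so this filling is standard. -/

lemma mem_hookCells {e k : ℕ} {c : ℕ × ℕ} :
    c ∈ hookCells e k ↔ (c.1 = 0 ∧ c.2 < k) ∨ (c.2 = 0 ∧ c.1 < e + 1 - k) := by
  obtain ⟨x, y⟩ := c
  simp only [hookCells, Finset.mem_union, Finset.mem_image, Finset.mem_range, Prod.mk.injEq]
  constructor
  · rintro (⟨j, hj, rfl, rfl⟩ | ⟨a, ha, rfl, rfl⟩) <;> simp_all
  · rintro (⟨rfl, hy⟩ | ⟨rfl, hx⟩)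
    exacts [Or.inl ⟨y, hy, rfl, rfl⟩, Or.inr ⟨x, hx, rfl, rfl⟩]

lemma isLowerSet_hookCells (e k : ℕ) : IsLowerSet (hookCells e k : Set (ℕ × ℕ)) := by
  intro c c' hle hc
  simp only [Finset.mem_coe, mem_hookCells] at hc ⊢
  rw [Prod.le_def] at hle
  omega

lemma natCast_sub_eq_neg {e n : ℕ} (h : n ≤ e) : ((e - n : ℕ) : ZMod e) = -(n : ZMod e) := by
  rw [Nat.cast_sub h, ZMod.natCast_self, zero_sub]

lemma boxRes_row_zero (e j : ℕ) : boxRes e (0, j) = (j : ZMod e) := by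
  simp [boxRes]

lemma boxRes_col_zero (e a : ℕ) : boxRes e (a, 0) = -(a : ZMod e) := by
  simp [boxRes]

section StandardTableau

variable {n : ℕ} {t : Fin n → ℕ × ℕ}

lemma isStandardTableau_iff :
    IsStandardTableau n t ↔ Function.Injective t ∧
      IsLowerSet (↑(Finset.image t Finset.univ) : Set (ℕ × ℕ)) ∧
      ∀ m m', t m < t m' → m < m' := by
  refine ⟨fun ⟨hinj, hlow, hrow, hcol⟩ => ⟨hinj, hlow, fun m m' hlt => ?_⟩,
    fun ⟨hinj, hlow, hmono⟩ => ⟨hinj, hlow, ?_, ?_⟩⟩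
  · -- pass through the corner cell in the row of `t m` and the column of `t m'`
    obtain ⟨m'', -, hm''⟩ := Finset.mem_image.1 <| hlow
      (show ((t m).1, (t m').2) ≤ t m' from ⟨hlt.le.1, le_rfl⟩)
      (Finset.mem_image_of_mem t (Finset.mem_univ m'))
    have hrow' : m ≤ m'' := by
      rcases (show (t m).2 ≤ (t m').2 from hlt.le.2).lt_or_eq with h | h
      · exact (hrow m m'' (by rw [hm'']) (by rw [hm'']; exact h)).le
      · exact (hinj (hm''.trans (Prod.ext rfl h.symm))).ge
    have hcol' : m'' ≤ m' := by
      rcases (show (t m).1 ≤ (t m').1 from hlt.le.1).lt_or_eq with h | h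
      · exact (hcol m'' m' (by rw [hm'']) (by rw [hm'']; exact h)).le
      · exact (hinj (hm''.trans (Prod.ext h rfl))).le
    exact (hrow'.trans hcol').lt_of_ne (fun h => hlt.ne (congrArg t h))
  · intro m m' h1 h2
    exact hmono m m' (Prod.lt_iff.2 (Or.inr ⟨h1.le, h2⟩))
  · intro m m' h2 h1
    exact hmono m m' (Prod.lt_iff.2 (Or.inl ⟨h1, h2.le⟩))

lemma IsStandardTableau.lt_of_lt (ht : IsStandardTableau n t) {m m' : Fin n}
    (h : t m < t m') : m < m' :=
  (isStandardTableau_iff.1 ht).2.2 m m' h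

lemma IsStandardTableau.apply_bot [NeZero n] (ht : IsStandardTableau n t) : t ⊥ = (0, 0) := by
  have h00 : (0, 0) ≤ t ⊥ := Prod.mk_le_mk.2 ⟨Nat.zero_le _, Nat.zero_le _⟩
  obtain ⟨m, -, hm⟩ := Finset.mem_image.1 <|
    ht.2.1 h00 (Finset.mem_image_of_mem t (Finset.mem_univ _))
  refine (h00.lt_or_eq.resolve_left fun hlt => ?_).symm
  exact not_lt_bot (ht.lt_of_lt (hm ▸ hlt : t m < t ⊥))

lemma IsStandardTableau.maximal_apply_top [NeZero n] (ht : IsStandardTableau n t) :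
    Maximal (· ∈ Finset.univ.image t) (t ⊤) := by
  refine maximal_iff_forall_gt.2 ⟨Finset.mem_image_of_mem t (Finset.mem_univ _), ?_⟩
  intro c hlt hc
  obtain ⟨m, -, rfl⟩ := Finset.mem_image.1 hc
  exact not_top_lt (ht.lt_of_lt hlt)

lemma IsStandardTableau.exists_strictMono_preimage (ht : IsStandardTableau n t) {N : ℕ}
    {c : Fin N → ℕ × ℕ} (hc : StrictMono c) (hmem : ∀ l, c l ∈ Finset.univ.image t) :
    ∃ p : Fin N → Fin n, StrictMono p ∧ ∀ l, t (p l) = c l := by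
  choose p hp using fun l => Finset.mem_image.1 (hmem l)
  refine ⟨p, fun l l' hll' => ht.lt_of_lt ?_, fun l => (hp l).2⟩
  rw [(hp l).2, (hp l').2]
  exact hc hll'

end StandardTableau

lemma eq_of_maximal_mem_hookCells {e k : ℕ} {c : ℕ × ℕ} (hk1 : 1 ≤ k) (hke : k ≤ e)
    (hc : Maximal (· ∈ hookCells e k) c) : c = (0, k - 1) ∨ (c = (e - k, 0) ∧ k < e) := by
  obtain ⟨hmem, hmax⟩ := maximal_iff_forall_gt.1 hc
  have harm : (0, k - 1) ∈ hookCells e k := mem_hookCells.2 (Or.inl ⟨rfl, by omega⟩)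
  have hleg : (e - k, 0) ∈ hookCells e k := mem_hookCells.2 (Or.inr ⟨rfl, by omega⟩)
  obtain ⟨x, y⟩ := c
  rcases mem_hookCells.1 hmem with ⟨rfl, hy⟩ | ⟨rfl, hx⟩
  · rcases (Nat.le_sub_one_of_lt hy).lt_or_eq with hlt | rfl
    · exact (hmax (Prod.mk_lt_mk_iff_right.2 hlt) harm).elim
    · exact Or.inl rfl
  · rcases (Nat.le_sub_of_add_le (by omega : x + k ≤ e)).lt_or_eq with hlt | rfl
    · exact (hmax (Prod.mk_lt_mk_iff_left.2 hlt) hleg).elim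
    by_cases hk : k < e
    · exact Or.inr ⟨rfl, hk⟩
    -- for `k = e` the leg is just the corner `(0, 0)`
    obtain rfl : k = e := by omega
    rcases hk1.eq_or_lt with rfl | hk1
    · exact Or.inl rfl
    · exact (hmax (Prod.mk_lt_mk.2 (Or.inr ⟨by omega, by omega⟩)) harm).elim

theorem subsequences_of_isStandardTableau_hook {e k : ℕ} [NeZero e] {i : Fin e → ZMod e}
    {t : Fin e → ℕ × ℕ} (hk1 : 1 ≤ k) (hke : k ≤ e) (ht : IsStandardTableau e t)
    (himage : Finset.univ.image t = hookCells e k) (hres : ∀ m, boxRes e (t m) = i m) :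
    i ⊥ = 0 ∧
      (∃ a : Fin ((i ⊤).val - 1) → Fin e, StrictMono a ∧
        ∀ l, i (a l) = (((l : ℕ) + 1 : ℕ) : ZMod e)) ∧
      (∃ b : Fin (e - 1 - (i ⊤).val) → Fin e,
        StrictMono b ∧ ∀ l, i (b l) = ((e - 1 - (l : ℕ) : ℕ) : ZMod e)) := by
  set v := (i ⊤).val with hv
  have hvk : k - 1 ≤ v ∧ v ≤ k := by
    have hmax := ht.maximal_apply_top
    rw [himage] at hmax
    rw [hv, ← hres]
    rcases eq_of_maximal_mem_hookCells hk1 hke hmax with h | ⟨h, hk⟩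
    · rw [h, boxRes_row_zero, ZMod.val_natCast_of_lt (by omega)]
      omega
    · rw [h, boxRes_col_zero, ← natCast_sub_eq_neg (by omega), Nat.sub_sub_self hke,
        ZMod.val_natCast_of_lt hk]
      omega
  refine ⟨?_, ?_, ?_⟩
  · rw [← hres, ht.apply_bot, boxRes_row_zero, Nat.cast_zero]
  · obtain ⟨a, ha, hta⟩ := ht.exists_strictMono_preimage
      (c := fun l : Fin (v - 1) => (0, (l : ℕ) + 1))
      (fun l l' h => Prod.mk_lt_mk_iff_right.2 (Nat.succ_lt_succ h))
      (fun l => himage ▸ mem_hookCells.2 (Or.inl ⟨rfl, by omega⟩))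
    exact ⟨a, ha, fun l => by rw [← hres, hta, boxRes_row_zero]⟩
  · obtain ⟨b, hb, htb⟩ := ht.exists_strictMono_preimage
      (c := fun l : Fin (e - 1 - v) => ((l : ℕ) + 1, 0))
      (fun l l' h => Prod.mk_lt_mk_iff_left.2 (Nat.succ_lt_succ h))
      (fun l => himage ▸ mem_hookCells.2 (Or.inr ⟨rfl, by omega⟩))
    refine ⟨b, hb, fun l => ?_⟩
    rw [← hres, htb, boxRes_col_zero, ← natCast_sub_eq_neg (by omega)]
    congr 1
    omega

/-- The inverse of `boxRes e` on `hookCells e (v + 1)`: the residues `0, …, v` label the arm,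
the residues `v + 1, …, e - 1` the leg. -/
def hookCellOfRes (e v : ℕ) (r : ZMod e) : ℕ × ℕ :=
  if r.val ≤ v then (0, r.val) else (e - r.val, 0)

section HookCellOfRes

variable {e v : ℕ}

lemma hookCellOfRes_boxRes (hv : v < e) {c : ℕ × ℕ} (hc : c ∈ hookCells e (v + 1)) :
    hookCellOfRes e v (boxRes e c) = c := by
  obtain ⟨x, y⟩ := c
  rcases mem_hookCells.1 hc with ⟨rfl, hy⟩ | ⟨rfl, hx⟩
  · rw [boxRes_row_zero, hookCellOfRes, ZMod.val_natCast_of_lt (by omega), if_pos (by omega)]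
  · rcases Nat.eq_zero_or_pos x with rfl | hx0
    · simp [hookCellOfRes, boxRes]
    rw [boxRes_col_zero, ← natCast_sub_eq_neg (by omega), hookCellOfRes,
      ZMod.val_natCast_of_lt (by omega), if_neg (by omega), Nat.sub_sub_self (by omega)]

variable [NeZero e]

lemma boxRes_hookCellOfRes (r : ZMod e) : boxRes e (hookCellOfRes e v r) = r := by
  unfold hookCellOfRes
  split_ifs
  · rw [boxRes_row_zero, ZMod.natCast_zmod_val]
  · rw [boxRes_col_zero, natCast_sub_eq_neg (ZMod.val_lt r).le, neg_neg, ZMod.natCast_zmod_val]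

lemma hookCellOfRes_injective : Function.Injective (hookCellOfRes e v) :=
  Function.LeftInverse.injective boxRes_hookCellOfRes

lemma image_hookCellOfRes (hv : v < e) :
    Finset.univ.image (hookCellOfRes e v) = hookCells e (v + 1) := by
  ext c
  refine ⟨?_, fun hc => Finset.mem_image.2 ⟨_, Finset.mem_univ _, hookCellOfRes_boxRes hv hc⟩⟩
  intro hc
  obtain ⟨r, -, rfl⟩ := Finset.mem_image.1 hc
  have := ZMod.val_lt r
  rw [mem_hookCells, hookCellOfRes]
  split_ifs <;> simp only [true_and] <;> omega

lemma lt_of_hookCellOfRes_lt {r r' : ZMod e} (h : hookCellOfRes e v r < hookCellOfRes e v r') :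
    r.val = 0 ∧ r'.val ≠ 0 ∨ 0 < r.val ∧ r.val < r'.val ∧ r'.val ≤ v ∨
      v < r'.val ∧ r'.val < r.val := by
  have := ZMod.val_lt r
  unfold hookCellOfRes at h
  split_ifs at h <;> rw [Prod.mk_lt_mk] at h <;> omega

end HookCellOfRes

section Subsequences

variable {e : ℕ} [NeZero e] {i : Fin e → ZMod e}

lemma surjective_of_subsequences (hi0 : i ⊥ = 0)
    {a : Fin ((i ⊤).val - 1) → Fin e} (hai : ∀ l, i (a l) = (((l : ℕ) + 1 : ℕ) : ZMod e))
    {b : Fin (e - 1 - (i ⊤).val) → Fin e}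
    (hbi : ∀ l, i (b l) = ((e - 1 - (l : ℕ) : ℕ) : ZMod e)) :
    Function.Surjective i := by
  intro r
  have hr := ZMod.val_lt r
  rcases lt_trichotomy r.val (i ⊤).val with h | h | h
  · rcases Nat.eq_zero_or_pos r.val with h0 | h0
    · exact ⟨⊥, hi0.trans ((ZMod.val_eq_zero r).1 h0).symm⟩
    · refine ⟨a ⟨r.val - 1, by omega⟩, ?_⟩
      rw [hai, Nat.sub_add_cancel h0, ZMod.natCast_zmod_val]
  · exact ⟨⊤, ZMod.val_injective e h.symm⟩
  · refine ⟨b ⟨e - 1 - r.val, by omega⟩, ?_⟩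
    rw [hbi, Nat.sub_sub_self (by omega), ZMod.natCast_zmod_val]

lemma lt_of_val_eq_zero_of_val_ne_zero (hi : Function.Injective i) (hi0 : i ⊥ = 0)
    {m m' : Fin e} (h : (i m).val = 0) (h' : (i m').val ≠ 0) : m < m' := by
  obtain rfl : m = ⊥ := hi (by rw [hi0, ← ZMod.val_eq_zero, h])
  exact bot_lt_iff_ne_bot.2 fun hm' => h' (by rw [hm', hi0, ZMod.val_zero])

lemma lt_of_pos_of_val_lt_of_le_val_top (hi : Function.Injective i)
    {a : Fin ((i ⊤).val - 1) → Fin e} (ha : StrictMono a)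
    (hai : ∀ l, i (a l) = (((l : ℕ) + 1 : ℕ) : ZMod e)) {m m' : Fin e}
    (h0 : 0 < (i m).val) (h : (i m).val < (i m').val) (h' : (i m').val ≤ (i ⊤).val) :
    m < m' := by
  have hv := ZMod.val_lt (i ⊤)
  have key : ∀ p (l : Fin ((i ⊤).val - 1)), (i p).val = l + 1 → p = a l := fun p l hl =>
    hi (ZMod.val_injective e (by rw [hai, ZMod.val_natCast_of_lt (by omega), hl]))
  rcases h'.lt_or_eq with h' | h'
  · calc m = a ⟨(i m).val - 1, by omega⟩ := key m _ (by simp only; omega)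
      _ < a ⟨(i m').val - 1, by omega⟩ := ha (Fin.mk_lt_mk.2 (by omega))
      _ = m' := (key m' _ (by simp only; omega)).symm
  · obtain rfl : m' = ⊤ := hi (ZMod.val_injective e h')
    exact lt_top_iff_ne_top.2 fun hm => h.ne (by rw [hm])

lemma lt_of_val_top_lt_of_val_lt (hi : Function.Injective i)
    {b : Fin (e - 1 - (i ⊤).val) → Fin e} (hb : StrictMono b)
    (hbi : ∀ l, i (b l) = ((e - 1 - (l : ℕ) : ℕ) : ZMod e)) {m m' : Fin e}
    (h : (i ⊤).val < (i m').val) (h' : (i m').val < (i m).val) : m < m' := by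
  have hm := ZMod.val_lt (i m)
  have key : ∀ p (l : Fin (e - 1 - (i ⊤).val)), (i p).val = e - 1 - l → p = b l := fun p l hl =>
    hi (ZMod.val_injective e (by rw [hbi, ZMod.val_natCast_of_lt (by omega), hl]))
  calc m = b ⟨e - 1 - (i m).val, by omega⟩ := key m _ (by simp only; omega)
    _ < b ⟨e - 1 - (i m').val, by omega⟩ := hb (Fin.mk_lt_mk.2 (by omega))
    _ = m' := (key m' _ (by simp only; omega)).symm

theorem exists_hook_tableau_of_subsequences (hi0 : i ⊥ = 0)
    {a : Fin ((i ⊤).val - 1) → Fin e} (ha : StrictMono a)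
    (hai : ∀ l, i (a l) = (((l : ℕ) + 1 : ℕ) : ZMod e))
    {b : Fin (e - 1 - (i ⊤).val) → Fin e} (hb : StrictMono b)
    (hbi : ∀ l, i (b l) = ((e - 1 - (l : ℕ) : ℕ) : ZMod e)) :
    ∃ (t : Fin e → ℕ × ℕ) (k : ℕ), 1 ≤ k ∧ k ≤ e ∧ IsStandardTableau e t ∧
      Finset.univ.image t = hookCells e k ∧ ∀ m, boxRes e (t m) = i m := by
  have hsurj := surjective_of_subsequences hi0 hai hbi
  have hinj : Function.Injective i :=
    ((Fintype.bijective_iff_surjective_and_card i).2 ⟨hsurj, by simp [ZMod.card]⟩).1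
  have hv : (i ⊤).val < e := ZMod.val_lt _
  have himage :
      Finset.univ.image (hookCellOfRes e (i ⊤).val ∘ i) = hookCells e ((i ⊤).val + 1) := by
    rw [← Finset.image_image, Finset.image_univ_of_surjective hsurj, image_hookCellOfRes hv]
  refine ⟨hookCellOfRes e (i ⊤).val ∘ i, (i ⊤).val + 1, by omega, hv,
    isStandardTableau_iff.2 ⟨hookCellOfRes_injective.comp hinj, ?_, fun m m' h => ?_⟩, himage,
    fun m => boxRes_hookCellOfRes _⟩
  · rw [himage]
    exact isLowerSet_hookCells e _
  · rcases lt_of_hookCellOfRes_lt h with ⟨h1, h2⟩ | ⟨h0, h1, h2⟩ | ⟨h1, h2⟩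
    · exact lt_of_val_eq_zero_of_val_ne_zero hinj hi0 h1 h2
    · exact lt_of_pos_of_val_lt_of_le_val_top hinj ha hai h0 h1 h2
    · exact lt_of_val_top_lt_of_val_lt hinj hb hbi h1 h2

end Subsequences

/-- A tuple `i ∈ (ℤ/eℤ)^e` is the residue sequence of a standard tableau of
`e`-hook shape `(k, 1^{e-k})` if and only if `i₁ = 0` and both
`(1, 2, …, i_e - 1)` and `(e-1, e-2, …, i_e + 1)` are subsequences of `i`. -/
theorem hook_residue_sequence_iff (e : ℕ) (he : 2 ≤ e) [NeZero e]
    (i : Fin e → ZMod e) :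
    (∃ (t : Fin e → ℕ × ℕ) (k : ℕ), 1 ≤ k ∧ k ≤ e ∧ IsStandardTableau e t ∧
        Finset.image t Finset.univ = hookCells e k ∧
        ∀ m : Fin e, boxRes e (t m) = i m) ↔
      (i ⟨0, by omega⟩ = 0 ∧
        (∃ a : Fin ((i ⟨e - 1, by omega⟩).val - 1) → Fin e, StrictMono a ∧
          ∀ l, i (a l) = (((l : ℕ) + 1 : ℕ) : ZMod e)) ∧
        (∃ b : Fin (e - 1 - (i ⟨e - 1, by omega⟩).val) → Fin e, StrictMono b ∧
          ∀ l, i (b l) = ((e - 1 - (l : ℕ) : ℕ) : ZMod e))) := by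
  -- `⊥` and `⊤` in `Fin e` unfold to `⟨0, _⟩` and `⟨e - 1, _⟩`
  constructor
  · rintro ⟨t, k, hk1, hke, ht, himage, hres⟩
    exact subsequences_of_isStandardTableau_hook hk1 hke ht himage hres
  · rintro ⟨hi0, ⟨a, ha, hai⟩, ⟨b, hb, hbi⟩⟩
    exact exists_hook_tableau_of_subsequences hi0 ha hai hb hbi
end

section
/- Let $e \ge 2$ and let $\mathbf{i} \in (\mathbb{Z}/e\mathbb{Z})^e$ be the residue sequence of some standard tableau whose shape is an $e$-hook partition. Then there are exactly two standard tableaux of size $e$ with residue sequence $\mathbf{i}$: one of shape $(i_e+1, 1^{e-i_e-1})$ and degree $1$, and one of shape $(i_e, 1^{e-i_e})$ and degree $0$ (where $i_e$ is identified with its representative in $\{0,\ldots,e-1\}$; in particular the shapes of both tableaux are $e$-hook partitions). -/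
/-- `a` is an addable node for the diagram with cell set `S`. -/
def Addable (S : Finset (ℕ × ℕ)) (a : ℕ × ℕ) : Prop :=
  a ∉ S ∧ IsLowerSet (insert a (↑S : Set (ℕ × ℕ)))

/-- `a` is a removable node of the diagram with cell set `S`. -/
def Removable (S : Finset (ℕ × ℕ)) (a : ℕ × ℕ) : Prop :=
  a ∈ S ∧ IsLowerSet ((↑S : Set (ℕ × ℕ)) \ {a})

open scoped Classical in
/-- `d_a(S)`: the number of addable nodes of residue `res a` strictly below `a`
minus the number of removable nodes of residue `res a` strictly below `a`. -/
noncomputable def dNode (e : ℕ) (S : Finset (ℕ × ℕ)) (a : ℕ × ℕ) : ℤ :=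
  (((((Finset.range (S.card + 1)) ×ˢ (Finset.range (S.card + 1))).filter
      (fun b => Addable S b ∧ boxRes e b = boxRes e a ∧ a.1 < b.1)).card : ℤ)) -
  (((S.filter (fun b => Removable S b ∧ boxRes e b = boxRes e a ∧ a.1 < b.1)).card : ℤ))

/-- The degree of a standard tableau, defined recursively:
`deg(t) = d_{t(n)}(Shape(t)) + deg(t_{≤ n-1})`, with the empty tableau of degree 0. -/
noncomputable def tabDeg (e : ℕ) : (n : ℕ) → (Fin n → ℕ × ℕ) → ℤ
  | 0, _ => 0
  | n + 1, t => dNode e (Finset.image t Finset.univ) (t (Fin.last n)) +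
      tabDeg e n (t ∘ Fin.castSucc)

/-!
Hook cells have pairwise distinct residues (arm `(0, j)` has residue `j`, leg `(a, 0)` has
residue `-a`), so `i` is a bijection onto `ZMod e`. A standard tableau with residue sequence `i`
is then a hook tableau, since `(0, 0)` and `(1, 1)` would share a residue; on the hook with arm
length `K` every entry is forced into the unique cell of its residue, and this filling is
standard iff the residues `< K` occur in increasing order and the residues `≥ K` in decreasing
order. As the last entry `i_e` sits in a corner, this happens exactly for `K ∈ {i_e, i_e + 1}`.

Along such a tableau every prefix is a hook. Adding the leg end never contributes to the degree;
adding the arm end `(0, A)` contributes `1` exactly when the addable node at the bottom of the leg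
has the same residue, i.e. when the hook has `e` cells, which happens only at the last step.
-/

section Nodes

variable {S : Finset (ℕ × ℕ)} {a c : ℕ × ℕ}

lemma Addable.mem_of_lt (ha : Addable S a) (hc : c < a) : c ∈ S := by
  rcases ha.2 hc.le (Set.mem_insert a _) with h | h
  · exact absurd h hc.ne
  · exact h

lemma Removable.not_lt (ha : Removable S a) (hc : c ∈ S) : ¬ a < c :=
  fun hac => (ha.2 hac.le ⟨hc, hac.ne'⟩).2 rfl

end Nodes

namespace HookTableau

open Finset

/-- The hook with arm length `A` and leg length `L`, both counting the corner;
`hookCells e k` is `hook k (e + 1 - k)` by definition. -/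
def hook (A L : ℕ) : Finset (ℕ × ℕ) :=
  ((range A).image fun j => (0, j)) ∪ ((range L).image fun a => (a, 0))

lemma mem_hook {A L : ℕ} {c : ℕ × ℕ} :
    c ∈ hook A L ↔ c.1 = 0 ∧ c.2 < A ∨ c.2 = 0 ∧ c.1 < L := by
  obtain ⟨x, y⟩ := c
  simp only [hook, mem_union, mem_image, mem_range, Prod.mk.injEq]
  constructor
  · rintro (⟨j, hj, rfl, rfl⟩ | ⟨a, ha, rfl, rfl⟩) <;> simp [*]
  · rintro (⟨rfl, hy⟩ | ⟨rfl, hx⟩)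
    exacts [Or.inl ⟨y, hy, rfl, rfl⟩, Or.inr ⟨x, hx, rfl, rfl⟩]

lemma isLowerSet_hook (A L : ℕ) : IsLowerSet (hook A L : Set (ℕ × ℕ)) := by
  intro a b hba ha
  simp only [mem_coe, mem_hook, Prod.le_def] at *
  omega

lemma card_hook {A L : ℕ} (hA : 1 ≤ A) (hL : 1 ≤ L) : (hook A L).card = A + L - 1 := by
  have harm : ((range A).image fun j => ((0 : ℕ), j)).card = A := by
    rw [card_image_of_injective _ fun _ _ h => (Prod.mk.inj h).2, card_range]
  have hleg : ((range L).image fun a => (a, (0 : ℕ))).card = L := by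
    rw [card_image_of_injective _ fun _ _ h => (Prod.mk.inj h).1, card_range]
  have hcorner : ((range A).image fun j => ((0 : ℕ), j)) ∩ ((range L).image fun a => (a, 0))
      = {(0, 0)} := by
    ext ⟨x, y⟩
    simp only [mem_inter, mem_image, mem_range, Prod.mk.injEq, mem_singleton]
    constructor
    · rintro ⟨⟨j, -, rfl, rfl⟩, ⟨a, -, rfl, h⟩⟩
      exact ⟨rfl, h.symm⟩
    · rintro ⟨rfl, rfl⟩
      exact ⟨⟨0, hA, rfl, rfl⟩, ⟨0, hL, rfl, rfl⟩⟩
  have := card_union_add_card_inter ((range A).image fun j => ((0 : ℕ), j))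
    ((range L).image fun a => (a, (0 : ℕ)))
  rw [harm, hleg, hcorner, card_singleton] at this
  rw [hook]
  omega

lemma insert_hook_arm (A L : ℕ) : insert (0, A) (hook A L) = hook (A + 1) L := by
  ext c
  simp only [mem_insert, mem_hook, Prod.ext_iff]
  omega

lemma insert_hook_leg (A L : ℕ) : insert (L, 0) (hook A L) = hook A (L + 1) := by
  ext c
  simp only [mem_insert, mem_hook, Prod.ext_iff]
  omega

lemma addable_hook {A L : ℕ} {b : ℕ × ℕ} (hA : 1 ≤ A) (hL : 1 ≤ L)
    (hb : Addable (hook A L) b) :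
    b = (0, A) ∨ b = (L, 0) ∨ (b = (1, 1) ∧ 2 ≤ A) := by
  have h₁ := mt (hb.mem_of_lt (c := (0, A)))
  have h₂ := mt (hb.mem_of_lt (c := (L, 0)))
  have h₃ := mt (hb.mem_of_lt (c := (0, 1)))
  have h₄ := mt (hb.mem_of_lt (c := (1, 1)))
  have h₅ := hb.1
  simp only [mem_hook, Prod.lt_iff, Prod.ext_iff] at *
  omega

lemma addable_hook_leg {A L : ℕ} (hL : 1 ≤ L) : Addable (hook A L) (L, 0) := by
  refine ⟨by simp [mem_hook]; omega, ?_⟩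
  rw [← coe_insert, insert_hook_leg]
  exact isLowerSet_hook A (L + 1)

lemma removable_hook_of_pos {A L : ℕ} {b : ℕ × ℕ} (hb : Removable (hook A L) b)
    (hb₁ : 0 < b.1) : b = (L - 1, 0) := by
  have h₁ := hb.not_lt (c := (b.1 + 1, 0))
  have h₂ := hb.1
  simp only [mem_hook, Prod.lt_iff, Prod.ext_iff, true_and] at *
  omega

lemma boxRes_eq_boxRes_iff {e : ℕ} {c c' : ℕ × ℕ} :
    boxRes e c = boxRes e c' ↔ (e : ℤ) ∣ ((c'.2 : ℤ) - c'.1) - ((c.2 : ℤ) - c.1) :=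
  ZMod.intCast_eq_intCast_iff_dvd_sub _ _ _

lemma boxRes_ne_boxRes {e : ℕ} {c c' : ℕ × ℕ} (hlt : (c.2 : ℤ) - c.1 < (c'.2 : ℤ) - c'.1)
    (hle : ((c'.2 : ℤ) - c'.1) - ((c.2 : ℤ) - c.1) < e) : boxRes e c ≠ boxRes e c' :=
  fun h => absurd (Int.le_of_dvd (by omega) (boxRes_eq_boxRes_iff.1 h)) (by omega)

lemma dNode_eq_card_sub_card {e : ℕ} {S : Finset (ℕ × ℕ)} {a : ℕ × ℕ}
    (X Y : Finset (ℕ × ℕ))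
    (hX : ∀ b, b ∈ X ↔ Addable S b ∧ boxRes e b = boxRes e a ∧ a.1 < b.1)
    (hXS : ∀ b ∈ X, b.1 ≤ S.card ∧ b.2 ≤ S.card)
    (hY : ∀ b, b ∈ Y ↔ Removable S b ∧ boxRes e b = boxRes e a ∧ a.1 < b.1) :
    dNode e S a = X.card - Y.card := by
  unfold dNode
  congr 3
  · ext b
    simp only [mem_filter, mem_product, mem_range, hX]
    constructor
    · exact fun h => h.2
    · intro h
      have := hXS b ((hX b).2 h)
      exact ⟨⟨by omega, by omega⟩, h⟩
  · ext b
    simp only [mem_filter, hY]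
    exact ⟨fun h => h.2, fun h => ⟨h.1.1, h⟩⟩

lemma boxRes_leg_eq_boxRes_arm_iff {e A L : ℕ} (hL : 1 ≤ L) (hAL : A + L ≤ e) :
    boxRes e (L, 0) = boxRes e (0, A) ↔ A + L = e := by
  rw [boxRes_eq_boxRes_iff]
  push_cast
  refine ⟨fun h => ?_, fun h => ⟨1, by omega⟩⟩
  have := Int.le_of_dvd (by omega) h
  omega

lemma dNode_hook_arm_end {e A L : ℕ} (hL : 1 ≤ L) (hAL : A + L ≤ e) :
    dNode e (hook (A + 1) L) (0, A) = if A + L = e then 1 else 0 := by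
  have hleg := boxRes_leg_eq_boxRes_arm_iff hL hAL
  have hX : ∀ b, b ∈ (if A + L = e then {(L, 0)} else ∅ : Finset (ℕ × ℕ)) ↔
      Addable (hook (A + 1) L) b ∧ boxRes e b = boxRes e (0, A) ∧ (0, A).1 < b.1 := by
    intro b
    constructor
    · intro hb
      split_ifs at hb with h
      · rw [mem_singleton.1 hb]
        exact ⟨addable_hook_leg hL, hleg.2 h, hL⟩
      · simp at hb
    · rintro ⟨hadd, hres, hbelow⟩
      rcases addable_hook (by omega) hL hadd with rfl | rfl | ⟨rfl, hA⟩
      · simp at hbelow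
      · simp [hleg.1 hres]
      · exact absurd hres (boxRes_ne_boxRes (by push_cast; omega) (by push_cast; omega))
  have hY : ∀ b, b ∈ (∅ : Finset (ℕ × ℕ)) ↔
      Removable (hook (A + 1) L) b ∧ boxRes e b = boxRes e (0, A) ∧ (0, A).1 < b.1 := by
    refine fun b => ⟨fun h => absurd h (notMem_empty b), ?_⟩
    rintro ⟨hrem, hres, hbelow⟩
    obtain rfl := removable_hook_of_pos hrem hbelow
    exact absurd hres (boxRes_ne_boxRes (by push_cast; omega) (by push_cast; omega))
  have hXS : ∀ b ∈ (if A + L = e then {(L, 0)} else ∅ : Finset (ℕ × ℕ)),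
      b.1 ≤ (hook (A + 1) L).card ∧ b.2 ≤ (hook (A + 1) L).card := by
    intro b hb
    split_ifs at hb
    · rw [mem_singleton.1 hb, card_hook (by omega) hL]
      omega
    · simp at hb
  rw [dNode_eq_card_sub_card _ _ hX hXS hY]
  split_ifs <;> simp

lemma dNode_hook_leg_end {e A L : ℕ} (he : 2 ≤ e) (hA : 1 ≤ A) (hL : 1 ≤ L) :
    dNode e (hook A (L + 1)) (L, 0) = 0 := by
  have hX : ∀ b, b ∈ (∅ : Finset (ℕ × ℕ)) ↔
      Addable (hook A (L + 1)) b ∧ boxRes e b = boxRes e (L, 0) ∧ (L, 0).1 < b.1 := by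
    refine fun b => ⟨fun h => absurd h (notMem_empty b), ?_⟩
    rintro ⟨hadd, hres, hbelow⟩
    rcases addable_hook hA (by omega) hadd with rfl | rfl | ⟨rfl, -⟩
    · simp at hbelow
    · exact absurd hres (boxRes_ne_boxRes (by push_cast; omega) (by push_cast; omega))
    · simp at hbelow
      omega
  have hY : ∀ b, b ∈ (∅ : Finset (ℕ × ℕ)) ↔
      Removable (hook A (L + 1)) b ∧ boxRes e b = boxRes e (L, 0) ∧ (L, 0).1 < b.1 := by
    refine fun b => ⟨fun h => absurd h (notMem_empty b), ?_⟩
    rintro ⟨hrem, -, hbelow⟩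
    obtain rfl := removable_hook_of_pos hrem (by simp at hbelow; omega)
    simp at hbelow
  simpa using dNode_eq_card_sub_card _ _ hX (by simp) hY

end HookTableau

lemma Fin.image_univ_eq_insert_last {α : Type*} [DecidableEq α] {n : ℕ}
    (t : Fin (n + 1) → α) :
    Finset.univ.image t = insert (t (Fin.last n)) (Finset.univ.image (t ∘ Fin.castSucc)) := by
  rw [Fin.univ_castSuccEmb, Finset.cons_eq_insert, Finset.image_insert, Finset.map_eq_image,
    Finset.image_image]
  rfl

namespace IsStandardTableau

open Finset HookTableau

variable {n : ℕ}

lemma exists_apply_eq_of_le {t : Fin n → ℕ × ℕ} (ht : IsStandardTableau n t) {c : ℕ × ℕ}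
    {m : Fin n} (hc : c ≤ t m) : ∃ p, t p = c := by
  simpa using ht.2.1 hc (by simp)

lemma le_of_apply_le {t : Fin n → ℕ × ℕ} (ht : IsStandardTableau n t) {m m' : Fin n}
    (h : t m ≤ t m') : m ≤ m' := by
  obtain ⟨h₁, h₂⟩ := Prod.le_def.1 h
  obtain ⟨q, hq⟩ :=
    ht.exists_apply_eq_of_le (c := ((t m).1, (t m').2)) (Prod.mk_le_mk.2 ⟨h₁, le_rfl⟩)
  have hmq : m ≤ q := by
    rcases h₂.lt_or_eq with hlt | heq
    · exact (ht.2.2.1 m q (by rw [hq]) (by rw [hq]; exact hlt)).le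
    · exact (ht.1 (hq.trans (Prod.ext rfl heq.symm))).ge
  have hqm' : q ≤ m' := by
    rcases h₁.lt_or_eq with hlt | heq
    · exact (ht.2.2.2 q m' (by rw [hq]) (by rw [hq]; exact hlt)).le
    · exact (ht.1 (hq.trans (Prod.ext heq rfl))).le
  exact hmq.trans hqm'

lemma fst_eq_zero_or_snd_eq_zero {e : ℕ} {t : Fin n → ℕ × ℕ}
    (ht : IsStandardTableau n t) (hinj : Function.Injective fun m => boxRes e (t m)) (m : Fin n) :
    (t m).1 = 0 ∨ (t m).2 = 0 := by
  by_contra! h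
  obtain ⟨p, hp⟩ := ht.exists_apply_eq_of_le (m := m) (c := (0, 0)) zero_le
  obtain ⟨q, hq⟩ := ht.exists_apply_eq_of_le (m := m) (c := (1, 1))
    (Prod.mk_le_mk.2 ⟨by omega, by omega⟩)
  have hpq : p = q := hinj (by simp [hp, hq, boxRes])
  simp [hpq, hq] at hp

variable {t : Fin (n + 1) → ℕ × ℕ}

lemma apply_zero (ht : IsStandardTableau (n + 1) t) : t 0 = (0, 0) := by
  obtain ⟨q, hq⟩ := ht.exists_apply_eq_of_le (m := 0) (c := (0, 0)) zero_le
  have hq₀ : q = 0 := Fin.le_zero_iff.1 (ht.le_of_apply_le (m := q) (m' := 0) (hq ▸ zero_le))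
  rwa [hq₀] at hq

lemma castSucc (ht : IsStandardTableau (n + 1) t) : IsStandardTableau n (t ∘ Fin.castSucc) := by
  refine ⟨ht.1.comp (Fin.castSucc_injective n), ?_, fun m m' h₁ h₂ => ?_,
    fun m m' h₁ h₂ => ?_⟩
  · rintro b c hbc hc
    obtain ⟨m, -, rfl⟩ := mem_image.1 (mem_coe.1 hc)
    obtain ⟨p, rfl⟩ := ht.exists_apply_eq_of_le hbc
    obtain ⟨p', rfl⟩ := Fin.exists_castSucc_eq.2
      (ne_of_lt (lt_of_le_of_lt (ht.le_of_apply_le hbc) (Fin.castSucc_lt_last m)))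
    exact mem_coe.2 (mem_image_of_mem _ (mem_univ p'))
  · exact Fin.castSucc_lt_castSucc_iff.1 (ht.2.2.1 _ _ h₁ h₂)
  · exact Fin.castSucc_lt_castSucc_iff.1 (ht.2.2.2 _ _ h₁ h₂)

lemma addable_last (ht : IsStandardTableau (n + 1) t) :
    Addable (image (t ∘ Fin.castSucc) univ) (t (Fin.last n)) := by
  refine ⟨fun hmem => ?_, ?_⟩
  · obtain ⟨m, -, hm⟩ := mem_image.1 hmem
    exact Fin.castSucc_ne_last m (ht.1 hm)
  · rw [← coe_insert, ← Fin.image_univ_eq_insert_last]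
    exact ht.2.1

lemma apply_last_eq_of_image_castSucc_eq_hook (ht : IsStandardTableau (n + 1) t)
    (hlast : (t (Fin.last n)).1 = 0 ∨ (t (Fin.last n)).2 = 0) {A L : ℕ} (hA : 1 ≤ A)
    (hL : 1 ≤ L) (himage : image (t ∘ Fin.castSucc) univ = hook A L) :
    t (Fin.last n) = (0, A) ∨ t (Fin.last n) = (L, 0) := by
  rcases addable_hook hA hL (himage ▸ ht.addable_last) with h | h | ⟨h, -⟩
  exacts [.inl h, .inr h, by simp [h] at hlast]

lemma image_eq_hook (ht : IsStandardTableau (n + 1) t)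
    (hcells : ∀ m, (t m).1 = 0 ∨ (t m).2 = 0) :
    ∃ A L, 1 ≤ A ∧ 1 ≤ L ∧ A + L = n + 2 ∧ image t univ = hook A L := by
  induction n with
  | zero =>
    refine ⟨1, 1, le_rfl, le_rfl, rfl, ?_⟩
    ext c
    simp [univ_unique, Fin.default_eq_zero, ht.apply_zero, mem_hook, Prod.ext_iff]
    omega
  | succ n ih =>
    obtain ⟨A, L, hA, hL, hAL, himage⟩ := ih ht.castSucc fun m => hcells _
    rw [Fin.image_univ_eq_insert_last, himage]
    rcases ht.apply_last_eq_of_image_castSucc_eq_hook (hcells _) hA hL himage with h | h <;>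
      rw [h]
    · exact ⟨A + 1, L, by omega, hL, by omega, insert_hook_arm A L⟩
    · exact ⟨A, L + 1, hA, by omega, by omega, insert_hook_leg A L⟩

lemma tabDeg_eq {e : ℕ} (he : 2 ≤ e) (hn : n + 1 ≤ e) (ht : IsStandardTableau (n + 1) t)
    (hcells : ∀ m, (t m).1 = 0 ∨ (t m).2 = 0) :
    tabDeg e (n + 1) t = if n + 1 = e ∧ (t (Fin.last n)).1 = 0 then 1 else 0 := by
  induction n with
  | zero =>
    obtain ⟨A, L, hA, hL, hAL, himage⟩ := ht.image_eq_hook hcells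
    obtain ⟨rfl, rfl⟩ : A = 1 ∧ L = 1 := by omega
    have h0 : t (Fin.last 0) = (0, 0) := ht.apply_zero
    have hdeg : dNode e (hook (0 + 1) 1) (0, 0) = 0 := by
      rw [dNode_hook_arm_end le_rfl (by omega), if_neg (by omega)]
    rw [tabDeg, tabDeg, himage, h0, hdeg, if_neg (by omega)]
    rfl
  | succ n ih =>
    obtain ⟨A, L, hA, hL, hAL, himage⟩ := ht.castSucc.image_eq_hook fun m => hcells _
    have hprefix : tabDeg e (n + 1) (t ∘ Fin.castSucc) = 0 := by
      rw [ih (by omega) ht.castSucc fun _ => hcells _, if_neg (by omega)]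
    rw [tabDeg, hprefix, add_zero, Fin.image_univ_eq_insert_last, himage]
    rcases ht.apply_last_eq_of_image_castSucc_eq_hook (hcells _) hA hL himage with h | h <;>
      rw [h]
    · rw [insert_hook_arm, dNode_hook_arm_end hL (by omega)]
      simp [show A + L = n + 2 from hAL]
    · rw [insert_hook_leg, dNode_hook_leg_end he hA hL]
      simp
      omega

end IsStandardTableau

namespace HookTableau

open Finset

variable {e n : ℕ}

lemma boxRes_row_zero (y : ℕ) : boxRes e (0, y) = y := by
  simp [boxRes]

lemma boxRes_col_zero {x : ℕ} (hx : x ≤ e) : boxRes e (x, 0) = ((e - x : ℕ) : ZMod e) := by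
  simp [boxRes, Nat.cast_sub hx]

/-- The only cell of residue `r` in `hookCells e K`. -/
def hookCell (e K : ℕ) (r : ZMod e) : ℕ × ℕ :=
  if r.val < K then (0, r.val) else (e - r.val, 0)

lemma hookCell_boxRes {A : ℕ} (hA : 1 ≤ A) (hAe : A ≤ e) {c : ℕ × ℕ}
    (hc : c ∈ hook A (e + 1 - A)) : hookCell e A (boxRes e c) = c := by
  obtain ⟨x, y⟩ := c
  rcases mem_hook.1 hc with ⟨rfl, hy⟩ | ⟨rfl, hx⟩
  · rw [boxRes_row_zero, hookCell, ZMod.val_cast_of_lt (by omega), if_pos hy]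
  · rcases Nat.eq_zero_or_pos x with rfl | hx₀
    · simp [hookCell, boxRes]
      omega
    · rw [boxRes_col_zero (by omega), hookCell, ZMod.val_cast_of_lt (by omega), if_neg (by omega),
        Nat.sub_sub_self (by omega)]

lemma eq_hookCell_comp_of_mem_hook {A : ℕ} {t : Fin n → ℕ × ℕ} {i : Fin n → ZMod e}
    (hA : 1 ≤ A) (hAe : A ≤ e) (hmem : ∀ m, t m ∈ hook A (e + 1 - A))
    (hres : ∀ m, boxRes e (t m) = i m) : t = hookCell e A ∘ i :=
  funext fun m => by rw [Function.comp_apply, ← hres m, hookCell_boxRes hA hAe (hmem m)]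

/-- `hookCell e K ∘ i` increases along the arm and down the leg, read off on residues. -/
def ResidueOrdered (i : Fin n → ZMod e) (K : ℕ) : Prop :=
  (∀ m m', (i m).val < (i m').val → (i m').val < K → m < m') ∧
  (∀ m m', K ≤ (i m').val → (i m').val < (i m).val → m < m')

lemma val_last_ne_zero {i : Fin (n + 1) → ZMod e} (hinj : Function.Injective i)
    (h₀ : i 0 = 0) (hn : 1 ≤ n) :
    (i (Fin.last n)).val ≠ 0 := by
  intro h
  have : Fin.last n = 0 := hinj (by rw [(ZMod.val_eq_zero _).1 h, h₀])
  simp [Fin.ext_iff] at this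
  omega

variable [NeZero e]

lemma surjective_of_injective {i : Fin e → ZMod e} (hinj : Function.Injective i) :
    Function.Surjective i :=
  ((Fintype.bijective_iff_injective_and_card i).2 ⟨hinj, by simp⟩).2

lemma boxRes_hookCell (K : ℕ) (r : ZMod e) : boxRes e (hookCell e K r) = r := by
  unfold hookCell
  split_ifs
  · rw [boxRes_row_zero, ZMod.natCast_zmod_val]
  · rw [boxRes_col_zero (Nat.sub_le _ _), Nat.sub_sub_self r.val_lt.le, ZMod.natCast_zmod_val]

lemma hookCell_injective (K : ℕ) : Function.Injective (hookCell e K) :=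
  Function.LeftInverse.injective (boxRes_hookCell K)

lemma image_hookCell_comp {i : Fin e → ZMod e} (hinj : Function.Injective i) {K : ℕ}
    (hK : 1 ≤ K) (hKe : K ≤ e) : image (hookCell e K ∘ i) univ = hook K (e + 1 - K) := by
  refine eq_of_subset_of_card_le ?_ ?_
  · intro c hc
    obtain ⟨m, -, rfl⟩ := mem_image.1 hc
    have := (i m).val_lt
    simp only [Function.comp_apply, hookCell, mem_hook]
    split_ifs <;> simp <;> omega
  · rw [card_image_of_injective _ ((hookCell_injective K).comp hinj), card_univ,
      Fintype.card_fin, card_hook hK (by omega)]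
    omega

lemma residueOrdered_of_isStandardTableau {i : Fin n → ZMod e} {K : ℕ}
    (ht : IsStandardTableau n (hookCell e K ∘ i)) : ResidueOrdered i K := by
  constructor
  · intro m m' h h'
    have hm : (i m).val < K := h.trans h'
    apply ht.2.2.1 m m' <;> simp [hookCell, hm, h', h]
  · intro m m' h h'
    have hm : ¬ (i m).val < K := by omega
    have hm' : ¬ (i m').val < K := by omega
    have := (i m).val_lt
    refine ht.2.2.2 m m' (by simp [hookCell, hm, hm']) ?_
    simp [hookCell, hm, hm']
    omega

lemma isStandardTableau_hookCell_comp {i : Fin e → ZMod e} (hinj : Function.Injective i)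
    (h₀ : i 0 = 0) {K : ℕ} (hK : 1 ≤ K) (hKe : K ≤ e) (hord : ResidueOrdered i K) :
    IsStandardTableau e (hookCell e K ∘ i) := by
  refine ⟨(hookCell_injective K).comp hinj, ?_, fun m m' h₁ h₂ => ?_,
    fun m m' h₁ h₂ => ?_⟩
  · rw [image_hookCell_comp hinj hK hKe]
    exact isLowerSet_hook _ _
  all_goals
    have := (i m).val_lt
    have := (i m').val_lt
    by_cases hm : (i m).val < K <;> by_cases hm' : (i m').val < K <;>
      simp only [Function.comp_apply, hookCell, hm, hm', if_true, if_false] at h₁ h₂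
  · exact hord.1 m m' h₂ hm'
  all_goals try omega
  · have hm₀ : m = 0 := hinj (by rw [h₀, ← ZMod.val_eq_zero]; exact h₁)
    subst hm₀
    exact Fin.pos_iff_ne_zero.2 fun hm'₀ => by simp [hm'₀, h₀] at hm'; omega
  · exact hord.2 m m' (by omega) (by omega)

lemma tabDeg_hookCell_comp {i : Fin (n + 1) → ZMod (n + 1)} {K : ℕ} (hn : 1 ≤ n)
    (ht : IsStandardTableau (n + 1) (hookCell (n + 1) K ∘ i)) :
    tabDeg (n + 1) (n + 1) (hookCell (n + 1) K ∘ i) =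
      if (i (Fin.last n)).val < K then 1 else 0 := by
  have hcells : ∀ m, (hookCell (n + 1) K (i m)).1 = 0 ∨ (hookCell (n + 1) K (i m)).2 = 0 :=
    fun m => by unfold hookCell; split_ifs <;> simp
  have := (i (Fin.last n)).val_lt
  rw [ht.tabDeg_eq (by omega) le_rfl hcells]
  by_cases hv : (i (Fin.last n)).val < K
  · simp [hookCell, hv]
  · simp [hookCell, hv]
    omega

section

variable {i : Fin (n + 1) → ZMod e} {K : ℕ}

lemma ResidueOrdered.val_last_add_one_eq_or_val_last_eq (hord : ResidueOrdered i K)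
    (hsurj : Function.Surjective i) (hKe : K ≤ e) :
    (i (Fin.last n)).val + 1 = K ∨ (i (Fin.last n)).val = K := by
  have hv := (i (Fin.last n)).val_lt
  by_contra! h
  rcases lt_or_gt_of_ne h.1 with hlt | hgt
  · obtain ⟨m, hm⟩ := hsurj ((K - 1 : ℕ) : ZMod e)
    have hval : (i m).val = K - 1 := by rw [hm, ZMod.val_cast_of_lt (by omega)]
    exact (Fin.le_last m).not_gt (hord.1 _ m (by omega) (by omega))
  · obtain ⟨m, hm⟩ := hsurj (K : ZMod e)
    have hval : (i m).val = K := by rw [hm, ZMod.val_cast_of_lt (by omega)]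
    exact (Fin.le_last m).not_gt (hord.2 _ m (by omega) (by omega))

lemma ResidueOrdered.of_lt_iff_lt (hord : ResidueOrdered i K) (hinj : Function.Injective i)
    {K' : ℕ} (hKK' : ∀ x ≠ (i (Fin.last n)).val, x < K ↔ x < K') : ResidueOrdered i K' := by
  have hlast : ∀ m, m ≠ Fin.last n → (i m).val ≠ (i (Fin.last n)).val :=
    fun m hm h => hm (hinj (ZMod.val_injective e h))
  refine ⟨fun m m' h h' => ?_, fun m m' h h' => ?_⟩ <;>
    rcases eq_or_ne m' (Fin.last n) with rfl | hm'
  · exact Fin.lt_last_iff_ne_last.2 fun hm => by simp [hm] at h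
  · exact hord.1 m m' h ((hKK' _ (hlast m' hm')).2 h')
  · exact Fin.lt_last_iff_ne_last.2 fun hm => by simp [hm] at h'
  · exact hord.2 m m' (not_lt.1 fun h'' => not_lt.2 h ((hKK' _ (hlast m' hm')).1 h'')) h'

end

lemma eq_hookCell_comp_of_isStandardTableau {i : Fin (n + 1) → ZMod (n + 1)}
    (hinj : Function.Injective i) {t : Fin (n + 1) → ℕ × ℕ}
    (ht : IsStandardTableau (n + 1) t)
    (hres : ∀ m, boxRes (n + 1) (t m) = i m) :
    t = hookCell (n + 1) ((i (Fin.last n)).val + 1) ∘ i ∨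
      t = hookCell (n + 1) (i (Fin.last n)).val ∘ i := by
  have hcells := ht.fst_eq_zero_or_snd_eq_zero (e := n + 1) (by simpa only [hres] using hinj)
  obtain ⟨A, L, hA, hL, hAL, himage⟩ := ht.image_eq_hook hcells
  obtain rfl : L = n + 1 + 1 - A := by omega
  have htA : t = hookCell (n + 1) A ∘ i := eq_hookCell_comp_of_mem_hook hA (by omega)
    (fun m => himage ▸ mem_image_of_mem t (mem_univ m)) hres
  rcases (residueOrdered_of_isStandardTableau (htA ▸ ht)).val_last_add_one_eq_or_val_last_eq
    (surjective_of_injective hinj) (by omega) with h | h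
  · exact .inl (h ▸ htA)
  · exact .inr (h ▸ htA)

end HookTableau

open Finset HookTableau

/-- If `i` is the residue sequence of a standard tableau of `e`-hook shape, then
there are exactly two standard tableaux of size `e` with residue sequence `i`:
one of shape `(i_e + 1, 1^{e - i_e - 1})` and degree `1`, and one of shape
`(i_e, 1^{e - i_e})` and degree `0`. -/
theorem two_hook_tableaux_with_residue_sequence (e : ℕ) (he : 2 ≤ e)
    (i : Fin e → ZMod e)
    (hi : ∃ (t : Fin e → ℕ × ℕ) (k : ℕ), 1 ≤ k ∧ k ≤ e ∧ IsStandardTableau e t ∧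
      Finset.image t Finset.univ = hookCells e k ∧
      ∀ m : Fin e, boxRes e (t m) = i m) :
    ∃ t₁ t₂ : Fin e → ℕ × ℕ,
      IsStandardTableau e t₁ ∧
      Finset.image t₁ Finset.univ = hookCells e ((i ⟨e - 1, by omega⟩).val + 1) ∧
      (∀ m : Fin e, boxRes e (t₁ m) = i m) ∧ tabDeg e e t₁ = 1 ∧
      IsStandardTableau e t₂ ∧
      Finset.image t₂ Finset.univ = hookCells e ((i ⟨e - 1, by omega⟩).val) ∧
      (∀ m : Fin e, boxRes e (t₂ m) = i m) ∧ tabDeg e e t₂ = 0 ∧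
      t₁ ≠ t₂ ∧
      ∀ t : Fin e → ℕ × ℕ, IsStandardTableau e t →
        (∀ m : Fin e, boxRes e (t m) = i m) → t = t₁ ∨ t = t₂ := by
  obtain ⟨n, rfl⟩ : ∃ n, e = n + 1 := ⟨e - 1, by omega⟩
  obtain ⟨t, k, hk, hke, ht, himage, hres⟩ := hi
  have hmem : ∀ m, t m ∈ hookCells (n + 1) k :=
    fun m => himage ▸ mem_image_of_mem t (mem_univ m)
  have htk : t = hookCell (n + 1) k ∘ i := eq_hookCell_comp_of_mem_hook hk hke hmem hres
  have hinj : Function.Injective i := (htk ▸ ht.1).of_comp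
  have h₀ : i 0 = 0 := by simp [← hres 0, ht.apply_zero, boxRes]
  have hord := residueOrdered_of_isStandardTableau (htk ▸ ht)
  have hlast := hord.val_last_add_one_eq_or_val_last_eq (surjective_of_injective hinj) hke
  have hv := (i (Fin.last n)).val_lt
  have hv₀ := val_last_ne_zero hinj h₀ (by omega)
  have hst₁ := isStandardTableau_hookCell_comp hinj h₀ (by omega) hv
    (hord.of_lt_iff_lt hinj fun x hx => by omega)
  have hst₂ := isStandardTableau_hookCell_comp hinj h₀ (by omega) hv.le
    (hord.of_lt_iff_lt hinj fun x hx => by omega)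
  refine ⟨_, _, hst₁, image_hookCell_comp hinj (by omega) hv, fun m => boxRes_hookCell _ _,
    by rw [tabDeg_hookCell_comp (by omega) hst₁, if_pos (by omega)],
    hst₂, image_hookCell_comp hinj (by omega) hv.le, fun m => boxRes_hookCell _ _,
    by rw [tabDeg_hookCell_comp (by omega) hst₂, if_neg (by omega)], fun h => ?_,
    fun t ht hres => eq_hookCell_comp_of_isStandardTableau hinj ht hres⟩
  have := congrFun h (Fin.last n)
  simp [hookCell] at this
  omega
end

section
/- Let $A$ be a finite-dimensional graded algebra over a field $F$, and let $B$ be a unital graded subalgebra of $A$ that is isomorphic, as a graded algebra, to the endomorphism algebra $\mathrm{END}(V)$ of a finite-dimensional graded vector space $V$. Let $C = C_A(B)$ be the centralizer of $B$ in $A$. Then the map $B \otimes_F C \to A$, $b \otimes c \mapsto bc$, is an isomorphism of graded algebras. -/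
/-!
A subalgebra `B ≅ Mₙ(F)` comes with matrix units `E i j`. For `a : A` the elements
`c i j = ∑ₖ E k i * a * E j k` commute with every `E p q`, hence lie in the centralizer `C`,
and `a = ∑ᵢⱼ E i j * c i j`. The map `a ↦ ∑ᵢⱼ E i j ⊗ c i j` is therefore a right inverse of
multiplication `B ⊗ C → A`; it is also a left inverse because for `b ∈ B` the `c i j` of `b` are
the scalars `Φ b i j`, and taking the `c i j` commutes with right multiplication by `C`.
-/

open scoped TensorProduct

/-- The grading on the endomorphism algebra `END(V)` of a graded vector space `V`:
an endomorphism has degree `n` iff it maps each homogeneous piece `V_m`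
into `V_{n+m}`. -/
def endGrade (F V : Type*) [Field F] [AddCommGroup V] [Module F V]
    (ℬ : ℤ → Submodule F V) (n : ℤ) : Submodule F (Module.End F V) where
  carrier := {g | ∀ (m : ℤ), ∀ v ∈ ℬ m, g v ∈ ℬ (n + m)}
  add_mem' := by
    intro g h hg hh m v hv
    simpa using Submodule.add_mem _ (hg m v hv) (hh m v hv)
  zero_mem' := by
    intro m v hv
    simp only [Set.mem_setOf_eq, LinearMap.zero_apply] at *
    exact Submodule.zero_mem (ℬ (n + m))
  smul_mem' := by
    intro c g hg m v hv
    simpa using Submodule.smul_mem _ c (hg m v hv)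

open Matrix TensorProduct

namespace Subalgebra

variable {R A : Type*} [CommRing R] [Ring A] [Algebra R A]

def mulCentralizer (B : Subalgebra R A) : B ⊗[R] centralizer R (B : Set A) →ₐ[R] A :=
  Algebra.TensorProduct.lift B.val (centralizer R (B : Set A)).val fun b c => c.2 b b.2

@[simp]
theorem mulCentralizer_tmul (B : Subalgebra R A) (b : B) (c : centralizer R (B : Set A)) :
    mulCentralizer B (b ⊗ₜ c) = b * c :=
  rfl

variable {n : Type*} [Fintype n] [DecidableEq n] {B : Subalgebra R A} (Φ : B ≃ₐ[R] Matrix n n R)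

def matrixUnit (i j : n) : B := Φ.symm (single i j 1)

theorem matrixUnit_mul_matrixUnit (i j k l : n) :
    matrixUnit Φ i j * matrixUnit Φ k l = if j = k then matrixUnit Φ i l else 0 := by
  unfold matrixUnit
  split_ifs with h
  · rw [h, ← map_mul, single_mul_single_same, one_mul]
  · rw [← map_mul, single_mul_single_of_ne (h := h), map_zero]

theorem sum_matrixUnit_self : ∑ i, matrixUnit Φ i i = 1 := by
  simp only [matrixUnit, ← map_sum, sum_single_one, map_one]

theorem eq_sum_smul_matrixUnit (b : B) : b = ∑ i, ∑ j, Φ b i j • matrixUnit Φ i j := by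
  conv_lhs => rw [← Φ.symm_apply_apply b, matrix_eq_sum_single (Φ b)]
  simp only [matrixUnit, map_sum, ← map_smul, smul_single, smul_eq_mul, mul_one]

theorem matrixUnit_mul_mul_matrixUnit (b : B) (i j k l : n) :
    matrixUnit Φ k i * b * matrixUnit Φ j l = Φ b i j • matrixUnit Φ k l := by
  conv_lhs => rw [← Φ.symm_apply_apply b]
  rw [matrixUnit, matrixUnit, ← map_mul, ← map_mul, single_mul_mul_single, one_mul, mul_one,
    matrixUnit, ← map_smul, smul_single, smul_eq_mul, mul_one]

def centralizerCoeff (i j : n) : A →ₗ[R] A :=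
  ∑ k, LinearMap.mulLeftRight R ((matrixUnit Φ k i : A), (matrixUnit Φ j k : A))

theorem centralizerCoeff_apply (a : A) (i j : n) :
    centralizerCoeff Φ i j a = ∑ k, (matrixUnit Φ k i : A) * a * matrixUnit Φ j k := by
  simp [centralizerCoeff]

theorem coe_matrixUnit_mul_matrixUnit (i j k l : n) :
    (matrixUnit Φ i j : A) * matrixUnit Φ k l = if j = k then (matrixUnit Φ i l : A) else 0 := by
  rw [← Subalgebra.coe_mul, matrixUnit_mul_matrixUnit]
  split_ifs <;> rfl

theorem matrixUnit_mul_centralizerCoeff (a : A) (i j p q : n) :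
    matrixUnit Φ p q * centralizerCoeff Φ i j a = matrixUnit Φ p i * a * matrixUnit Φ j q := by
  simp only [centralizerCoeff_apply, Finset.mul_sum, ← mul_assoc, coe_matrixUnit_mul_matrixUnit,
    ite_mul, zero_mul, Finset.sum_ite_eq, Finset.mem_univ, if_true]

theorem centralizerCoeff_mul_matrixUnit (a : A) (i j p q : n) :
    centralizerCoeff Φ i j a * matrixUnit Φ p q = matrixUnit Φ p i * a * matrixUnit Φ j q := by
  simp only [centralizerCoeff_apply, Finset.sum_mul, mul_assoc, coe_matrixUnit_mul_matrixUnit,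
    mul_ite, mul_zero, Finset.sum_ite_eq', Finset.mem_univ, if_true]

theorem centralizerCoeff_mem (a : A) (i j : n) :
    centralizerCoeff Φ i j a ∈ centralizer R (B : Set A) := by
  suffices ∀ b : B, (b : A) * centralizerCoeff Φ i j a = centralizerCoeff Φ i j a * b from
    fun b hb => this ⟨b, hb⟩
  intro b
  rw [eq_sum_smul_matrixUnit Φ b]
  simp only [AddSubmonoidClass.coe_finsetSum, coe_smul, Finset.sum_mul, Finset.mul_sum,
    smul_mul_assoc, mul_smul_comm, matrixUnit_mul_centralizerCoeff, centralizerCoeff_mul_matrixUnit]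

theorem centralizerCoeff_coe (b : B) (i j : n) :
    centralizerCoeff Φ i j b = algebraMap R A (Φ b i j) := by
  have h := congrArg B.val (Finset.sum_congr rfl fun k (_ : k ∈ Finset.univ) =>
    matrixUnit_mul_mul_matrixUnit Φ b i j k k)
  simpa only [map_sum, map_mul, ← Finset.smul_sum, sum_matrixUnit_self, map_smul, map_one,
    coe_val, Algebra.algebraMap_eq_smul_one, ← centralizerCoeff_apply] using h

theorem centralizerCoeff_mul_of_mem_centralizer {c : A} (hc : c ∈ centralizer R (B : Set A))
    (a : A) (i j : n) : centralizerCoeff Φ i j (a * c) = centralizerCoeff Φ i j a * c := by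
  simp only [centralizerCoeff_apply, Finset.sum_mul, mul_assoc, hc _ (matrixUnit Φ _ _).2]

theorem sum_matrixUnit_mul_centralizerCoeff (a : A) :
    ∑ i, ∑ j, (matrixUnit Φ i j : A) * centralizerCoeff Φ i j a = a := by
  have h := congrArg B.val (sum_matrixUnit_self Φ)
  simp only [map_sum, coe_val, map_one] at h
  simp only [matrixUnit_mul_centralizerCoeff, ← Finset.mul_sum, ← Finset.sum_mul, h, mul_one,
    one_mul]

def tensorCentralizerInv : A →ₗ[R] B ⊗[R] centralizer R (B : Set A) :=
  ∑ i, ∑ j, (TensorProduct.mk R B _ (matrixUnit Φ i j)).comp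
    ((centralizerCoeff Φ i j).codRestrict (centralizer R (B : Set A)).toSubmodule
      fun a => centralizerCoeff_mem Φ a i j)

theorem tensorCentralizerInv_apply (a : A) :
    tensorCentralizerInv Φ a =
      ∑ i, ∑ j, matrixUnit Φ i j ⊗ₜ ⟨centralizerCoeff Φ i j a, centralizerCoeff_mem Φ a i j⟩ := by
  simp only [tensorCentralizerInv, LinearMap.coe_sum, Finset.sum_apply, LinearMap.comp_apply,
    mk_apply]
  rfl

theorem mulCentralizer_tensorCentralizerInv (a : A) :
    mulCentralizer B (tensorCentralizerInv Φ a) = a := by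
  simp only [tensorCentralizerInv_apply, map_sum, mulCentralizer_tmul,
    sum_matrixUnit_mul_centralizerCoeff]

theorem tensorCentralizerInv_mul (b : B) (c : centralizer R (B : Set A)) :
    tensorCentralizerInv Φ (b * c) = b ⊗ₜ c := by
  have hcoeff (i j : n) : (⟨centralizerCoeff Φ i j (b * c), centralizerCoeff_mem Φ _ i j⟩ :
      centralizer R (B : Set A)) = Φ b i j • c := by
    ext
    change centralizerCoeff Φ i j (b * c) = _
    rw [centralizerCoeff_mul_of_mem_centralizer Φ c.2, centralizerCoeff_coe, coe_smul,
      Algebra.smul_def]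
  conv_rhs => rw [eq_sum_smul_matrixUnit Φ b]
  simp only [tensorCentralizerInv_apply, hcoeff, tmul_smul, sum_tmul, smul_tmul']

theorem bijective_mulCentralizer (Φ : B ≃ₐ[R] Matrix n n R) :
    Function.Bijective (mulCentralizer B) := by
  refine ⟨Function.LeftInverse.injective (g := tensorCentralizerInv Φ) fun x => ?_,
    fun a => ⟨tensorCentralizerInv Φ a, mulCentralizer_tensorCentralizerInv Φ a⟩⟩
  induction x using TensorProduct.induction_on with
  | zero => simp
  | tmul b c => rw [mulCentralizer_tmul, tensorCentralizerInv_mul]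
  | add x y hx hy => rw [map_add, map_add, hx, hy]

end Subalgebra

theorem graded_subalgebra_tensor_centralizer_general (F A V : Type*) [Field F] [Ring A]
    [Algebra F A] [AddCommGroup V] [Module F V]
    [FiniteDimensional F V]
    (𝒜 : ℤ → Submodule F A) [GradedAlgebra 𝒜]
    (B : Subalgebra F A)
    (φ : B ≃ₐ[F] Module.End F V) :
    Function.Bijective
      (Algebra.TensorProduct.lift B.val (Subalgebra.centralizer F (B : Set A)).val
        (fun b c => (c.2 b b.2 : (b : A) * (c : A) = (c : A) * (b : A)))) ∧
      (∀ (n m : ℤ) (b : B) (c : Subalgebra.centralizer F (B : Set A)),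
        (b : A) ∈ 𝒜 n → (c : A) ∈ 𝒜 m → (b : A) * (c : A) ∈ 𝒜 (n + m)) :=
  ⟨Subalgebra.bijective_mulCentralizer (φ.trans (algEquivMatrix (Module.finBasis F V))),
    fun _ _ _ _ hb hc => SetLike.mul_mem_graded hb hc⟩

/-- Let `A` be a finite-dimensional graded algebra over a field `F`, and `B` a
unital graded subalgebra isomorphic, as a graded algebra, to `END(V)` for a
finite-dimensional graded vector space `V`.  Then multiplication induces an
isomorphism of graded algebras `B ⊗ C_A(B) ≅ A`. -/
theorem graded_subalgebra_tensor_centralizer (F A V : Type*) [Field F] [Ring A]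
    [Algebra F A] [FiniteDimensional F A] [AddCommGroup V] [Module F V]
    [FiniteDimensional F V]
    (𝒜 : ℤ → Submodule F A) [GradedAlgebra 𝒜]
    (ℬ : ℤ → Submodule F V) [DirectSum.Decomposition ℬ]
    (B : Subalgebra F A)
    (hBgraded : ∀ b ∈ B, ∀ n : ℤ, (DirectSum.decompose 𝒜 b n : A) ∈ B)
    (φ : B ≃ₐ[F] Module.End F V)
    (hφ : ∀ (b : B) (n : ℤ), (b : A) ∈ 𝒜 n ↔ φ b ∈ endGrade F V ℬ n) :
    Function.Bijective
      (Algebra.TensorProduct.lift B.val (Subalgebra.centralizer F (B : Set A)).val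
        (fun b c => (c.2 b b.2 : (b : A) * (c : A) = (c : A) * (b : A)))) ∧
      (∀ (n m : ℤ) (b : B) (c : Subalgebra.centralizer F (B : Set A)),
        (b : A) ∈ 𝒜 n → (c : A) ∈ 𝒜 m → (b : A) * (c : A) ∈ 𝒜 (n + m)) :=
  graded_subalgebra_tensor_centralizer_general F A V 𝒜 B φ
end

section
/- Let $A$ be a finite-dimensional graded algebra over a field $F$, $B$ a unital graded subalgebra of $A$ isomorphic as graded algebra to $\mathrm{END}(V)$ for a finite-dimensional graded vector space $V$, $C = C_A(B)$, and $\varepsilon$ a homogeneous primitive idempotent of $B$. Then the map $C \to \varepsilon A \varepsilon$, $c \mapsto \varepsilon c$, is an isomorphism of graded algebras. -/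
def IsPrimitiveIdempotent {R : Type*} [NonUnitalNonAssocSemiring R] (p : R) : Prop :=
  IsIdempotentElem p ∧ p ≠ 0 ∧ ∀ e₁ e₂ : R, IsIdempotentElem e₁ → IsIdempotentElem e₂ →
    e₁ * e₂ = 0 → e₂ * e₁ = 0 → p = e₁ + e₂ → e₁ = 0 ∨ e₂ = 0

namespace IsPrimitiveIdempotent

variable {R S : Type*}

theorem map [NonUnitalNonAssocSemiring R] [NonUnitalNonAssocSemiring S] {p : R}
    (hp : IsPrimitiveIdempotent p) (σ : R ≃+* S) : IsPrimitiveIdempotent (σ p) := by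
  obtain ⟨hidem, hne, hprim⟩ := hp
  refine ⟨hidem.map σ, (map_ne_zero_iff σ σ.injective).mpr hne, ?_⟩
  intro e₁ e₂ h₁ h₂ h₁₂ h₂₁ hsum
  have := hprim (σ.symm e₁) (σ.symm e₂) (h₁.map σ.symm) (h₂.map σ.symm)
    (by rw [← map_mul, h₁₂, map_zero]) (by rw [← map_mul, h₂₁, map_zero])
    (by rw [← map_add, ← hsum, σ.symm_apply_apply])
  simpa using this

theorem eq_of_mul_eq_of_mul_eq [NonUnitalNonAssocRing R] {p e : R}
    (hp : IsPrimitiveIdempotent p) (he : IsIdempotentElem e) (he0 : e ≠ 0)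
    (hep : e * p = e) (hpe : p * e = e) : e = p := by
  have horth₁ : e * (p - e) = 0 := by rw [mul_sub, hep, he.eq, sub_self]
  have horth₂ : (p - e) * e = 0 := by rw [sub_mul, hpe, he.eq, sub_self]
  rcases hp.2.2 e (p - e) he (he.sub hp.1 hep hpe) horth₁ horth₂ (add_sub_cancel e p).symm
    with h | h
  · exact absurd h he0
  · exact (sub_eq_zero.mp h).symm

end IsPrimitiveIdempotent

namespace Module.End

variable {K V : Type*} [Field K] [AddCommGroup V] [Module K V]

theorem exists_eq_smulRight_of_isPrimitiveIdempotent {p : Module.End K V}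
    (hp : IsPrimitiveIdempotent p) :
    ∃ (f : Module.Dual K V) (w : V), f w = 1 ∧ p = f.smulRight w := by
  obtain ⟨x, hx⟩ : ∃ x, p x ≠ 0 := by
    by_contra! h
    exact hp.2.1 (LinearMap.ext h)
  have hpp : ∀ y, p (p y) = p y := fun y => LinearMap.congr_fun hp.1.eq y
  obtain ⟨f₀, hf₀⟩ := Module.Projective.exists_dual_eq_one K hx
  -- `(f₀ ∘ₗ p).smulRight (p x)` is a nonzero idempotent below `p`, so primitivity makes it `p`.
  refine ⟨f₀ ∘ₗ p, p x, by simp [hpp, hf₀],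
    (hp.eq_of_mul_eq_of_mul_eq ?idem ?ne_zero ?mul_left ?mul_right).symm⟩
  case idem => ext y; simp [hpp, hf₀]
  case ne_zero => exact fun h => hx (by simpa [hpp, hf₀] using LinearMap.congr_fun h (p x))
  case mul_left => ext y; simp [hpp]
  case mul_right => ext y; simp [hpp]

end Module.End

namespace LinearMap

variable {K V : Type*} [CommSemiring K] [AddCommMonoid V] [Module K V]

theorem smulRight_mul_mul_smulRight (f : Module.Dual K V) (w : V) (G : Module.End K V) :
    f.smulRight w * G * f.smulRight w = f (G w) • f.smulRight w := by
  ext y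
  simpa using smul_comm (f y) (f (G w)) w

theorem sum_smulRight_mul_smulRight_mul_smulRight {ι : Type*} [Fintype ι]
    (b : Module.Basis ι K V) {f : Module.Dual K V} {w : V} (hfw : f w = 1) :
    ∑ i, f.smulRight (b i) * f.smulRight w * (b.coord i).smulRight w = 1 := by
  ext y
  simp [hfw, b.sum_repr]

end LinearMap

namespace Subalgebra

variable {R A ι : Type*} [CommSemiring R] [Semiring A] [Algebra R A] [Fintype ι]
  {B : Subalgebra R A} {e : B} {s : B → R} {u v : ι → B} {x : A}

def sandwichSum (u v : ι → B) (x : A) : A := ∑ i, (u i : A) * x * v i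

theorem mul_mul_eq_smul_of_mul_eq_self_left (hs : ∀ b, e * b * e = s b • e) (b : B)
    (hx : (e : A) * x = x) : (e : A) * b * x = s b • x :=
  calc (e : A) * b * x = ((e * b * e : B) : A) * x := by
        simp only [Subalgebra.coe_mul, mul_assoc, hx]
    _ = s b • x := by rw [hs b, Subalgebra.coe_smul, smul_mul_assoc, hx]

theorem mul_mul_eq_smul_of_mul_eq_self_right (hs : ∀ b, e * b * e = s b • e) (b : B)
    (hx : x * e = x) : x * b * e = s b • x :=
  calc x * b * e = x * ((e * b * e : B) : A) := by
        simp only [Subalgebra.coe_mul, ← mul_assoc, hx]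
    _ = s b • x := by rw [hs b, Subalgebra.coe_smul, mul_smul_comm, hx]

theorem eq_sandwichSum_of_mem_centralizer (hunit : ∑ i, u i * e * v i = 1) {c : A}
    (hc : c ∈ centralizer R (B : Set A)) : c = sandwichSum u v (e * c) := by
  have hcomm (i : ι) : (v i : A) * c = c * v i := (mem_centralizer_iff R).mp hc _ (v i).2
  calc c = ((∑ i, u i * e * v i : B) : A) * c := by rw [hunit, Subalgebra.coe_one, one_mul]
    _ = sandwichSum u v (e * c) := by
      simp only [AddSubmonoidClass.coe_finsetSum, Subalgebra.coe_mul, Finset.sum_mul, sandwichSum,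
        mul_assoc, hcomm]

theorem sum_smul_mul_eq_self (hunit : ∑ i, u i * e * v i = 1)
    (hs : ∀ b, e * b * e = s b • e) (hx : x * e = x) : ∑ i, s (u i) • (x * v i) = x :=
  calc ∑ i, s (u i) • (x * v i) = ∑ i, x * u i * e * v i := by
        simp only [mul_mul_eq_smul_of_mul_eq_self_right hs _ hx, smul_mul_assoc]
    _ = x * ((∑ i, u i * e * v i : B) : A) := by
        simp only [AddSubmonoidClass.coe_finsetSum, Subalgebra.coe_mul, Finset.mul_sum, mul_assoc]
    _ = x := by rw [hunit, Subalgebra.coe_one, mul_one]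

theorem mul_sandwichSum_eq_self (hunit : ∑ i, u i * e * v i = 1) (hs : ∀ b, e * b * e = s b • e)
    (hxl : (e : A) * x = x) (hxr : x * e = x) : (e : A) * sandwichSum u v x = x :=
  calc (e : A) * sandwichSum u v x = ∑ i, s (u i) • (x * v i) := by
        simp only [sandwichSum, Finset.mul_sum, ← mul_assoc,
          mul_mul_eq_smul_of_mul_eq_self_left hs _ hxl, smul_mul_assoc]
    _ = x := sum_smul_mul_eq_self hunit hs hxr

theorem mul_sandwichSum_eq_sum (hunit : ∑ i, u i * e * v i = 1) (hs : ∀ b, e * b * e = s b • e)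
    (hx : (e : A) * x = x) (b : B) :
    b * sandwichSum u v x = ∑ i, ∑ k, s (v i * b * u k) • ((u i : A) * x * v k) :=
  calc (b : A) * sandwichSum u v x
      = ((∑ i, u i * e * v i : B) : A) * b * sandwichSum u v x := by
        rw [hunit, Subalgebra.coe_one, one_mul]
    _ = ∑ i, ∑ k, (u i : A) * ((e : A) * ((v i * b * u k : B) : A) * x) * v k := by
        simp only [AddSubmonoidClass.coe_finsetSum, Subalgebra.coe_mul, sandwichSum, Finset.sum_mul,
          Finset.mul_sum, mul_assoc]
        exact Finset.sum_comm
    _ = ∑ i, ∑ k, s (v i * b * u k) • ((u i : A) * x * v k) := by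
        simp only [mul_mul_eq_smul_of_mul_eq_self_left hs _ hx, mul_smul_comm, smul_mul_assoc,
          mul_assoc]

theorem sandwichSum_mul_eq_sum (hunit : ∑ i, u i * e * v i = 1) (hs : ∀ b, e * b * e = s b • e)
    (hx : x * e = x) (b : B) :
    sandwichSum u v x * b = ∑ i, ∑ k, s (v i * b * u k) • ((u i : A) * x * v k) :=
  calc sandwichSum u v x * b
      = sandwichSum u v x * b * ((∑ k, u k * e * v k : B) : A) := by
        rw [hunit, Subalgebra.coe_one, mul_one]
    _ = ∑ i, ∑ k, (u i : A) * (x * ((v i * b * u k : B) : A) * e) * v k := by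
        simp only [AddSubmonoidClass.coe_finsetSum, Subalgebra.coe_mul, sandwichSum, Finset.sum_mul,
          Finset.mul_sum, mul_assoc]
        exact Finset.sum_comm
    _ = ∑ i, ∑ k, s (v i * b * u k) • ((u i : A) * x * v k) := by
        simp only [mul_mul_eq_smul_of_mul_eq_self_right hs _ hx, mul_smul_comm, smul_mul_assoc,
          mul_assoc]

theorem sandwichSum_mem_centralizer (hunit : ∑ i, u i * e * v i = 1)
    (hs : ∀ b, e * b * e = s b • e) (hxl : (e : A) * x = x) (hxr : x * e = x) :
    sandwichSum u v x ∈ centralizer R (B : Set A) := by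
  rw [mem_centralizer_iff]
  intro b hb
  rw [mul_sandwichSum_eq_sum hunit hs hxl ⟨b, hb⟩, sandwichSum_mul_eq_sum hunit hs hxr ⟨b, hb⟩]

theorem mul_left_injective_centralizer (hunit : ∑ i, u i * e * v i = 1) :
    Function.Injective (fun c : centralizer R (B : Set A) => (e : A) * c) := by
  intro c c' h
  apply Subtype.ext
  rw [eq_sandwichSum_of_mem_centralizer hunit c.2, eq_sandwichSum_of_mem_centralizer hunit c'.2]
  exact congrArg _ h

theorem range_mul_left_centralizer (he : IsIdempotentElem e) (hunit : ∑ i, u i * e * v i = 1)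
    (hs : ∀ b, e * b * e = s b • e) :
    Set.range (fun c : centralizer R (B : Set A) => (e : A) * c) =
      {x : A | ∃ a : A, x = e * a * e} := by
  have he' : IsIdempotentElem (e : A) := he.map B.val
  ext x
  constructor
  · rintro ⟨c, rfl⟩
    refine ⟨c, ?_⟩
    rw [mul_assoc, ← (mem_centralizer_iff R).mp c.2 e e.2, he'.mul_self_mul]
  · rintro ⟨a, rfl⟩
    have hxl : (e : A) * (e * a * e) = e * a * e := by rw [mul_assoc, he'.mul_self_mul]
    have hxr : (e : A) * a * e * e = e * a * e := he'.mul_mul_self _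
    exact ⟨⟨_, sandwichSum_mem_centralizer hunit hs hxl hxr⟩,
      mul_sandwichSum_eq_self hunit hs hxl hxr⟩

end Subalgebra

theorem IsIdempotentElem.mul_mul_mul_of_commute {M : Type*} [Semigroup M] {e c : M}
    (he : IsIdempotentElem e) (hc : Commute e c) (c' : M) :
    e * (c * c') = e * c * (e * c') :=
  calc e * (c * c') = e * (e * c) * c' := by rw [he.mul_self_mul, mul_assoc]
    _ = e * (c * e) * c' := by rw [hc.eq]
    _ = e * c * (e * c') := by simp only [mul_assoc]

theorem GradedRing.eq_zero_of_isIdempotentElem {ι R σ : Type*} [DecidableEq ι]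
    [AddLeftCancelMonoid ι] [Semiring R] [SetLike σ R] [AddSubmonoidClass σ R]
    (𝒜 : ι → σ) [GradedRing 𝒜] {e : R} {n : ι} (he : IsIdempotentElem e) (he0 : e ≠ 0)
    (hn : e ∈ 𝒜 n) : n = 0 := by
  by_contra hn0
  have h2n : e ∈ 𝒜 (n + n) := he.eq ▸ SetLike.mul_mem_graded hn hn
  have hne : n + n ≠ n := fun h => hn0 (add_eq_left.mp h)
  apply he0
  rw [← DirectSum.decompose_of_mem_same 𝒜 hn, DirectSum.decompose_of_mem_ne 𝒜 h2n hne]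

theorem centralizer_iso_idempotent_truncation_general (F A V : Type*) [Field F] [Ring A]
    [Algebra F A] [AddCommGroup V] [Module F V]
    [FiniteDimensional F V]
    (𝒜 : ℤ → Submodule F A) [GradedAlgebra 𝒜]
    (B : Subalgebra F A)
    (φ : B ≃ₐ[F] Module.End F V)
    (ε : B) (hεhom : ∃ n : ℤ, (ε : A) ∈ 𝒜 n)
    (hidem : IsIdempotentElem ε) (hne : ε ≠ 0)
    (hprim : ∀ e₁ e₂ : B, IsIdempotentElem e₁ → IsIdempotentElem e₂ →
      e₁ * e₂ = 0 → e₂ * e₁ = 0 → ε = e₁ + e₂ → e₁ = 0 ∨ e₂ = 0) :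
    Function.Injective
        (fun c : Subalgebra.centralizer F (B : Set A) => (ε : A) * (c : A)) ∧
      Set.range (fun c : Subalgebra.centralizer F (B : Set A) =>
          (ε : A) * (c : A)) =
        {x : A | ∃ a : A, x = (ε : A) * a * (ε : A)} ∧
      (∀ c c' : Subalgebra.centralizer F (B : Set A),
        (ε : A) * ((c : A) * (c' : A)) =
          ((ε : A) * (c : A)) * ((ε : A) * (c' : A))) ∧
      (∀ (c : Subalgebra.centralizer F (B : Set A)) (n : ℤ),
        (c : A) ∈ 𝒜 n → (ε : A) * (c : A) ∈ 𝒜 n) := by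
  obtain ⟨f, w, hfw, hrank⟩ := Module.End.exists_eq_smulRight_of_isPrimitiveIdempotent
    ((show IsPrimitiveIdempotent ε from ⟨hidem, hne, hprim⟩).map φ.toRingEquiv)
  let b := Module.finBasis F V
  let u i := φ.symm (f.smulRight (b i))
  let v i := φ.symm ((b.coord i).smulRight w)
  have hunit : ∑ i, u i * ε * v i = 1 := φ.injective <| by
    simpa [u, v, map_sum, ← hrank] using LinearMap.sum_smulRight_mul_smulRight_mul_smulRight b hfw
  have hs (x : B) : ε * x * ε = f (φ x w) • ε := φ.injective <| by
    simpa [← hrank] using LinearMap.smulRight_mul_mul_smulRight f w (φ x)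
  have hidemA : IsIdempotentElem (ε : A) := hidem.map B.val
  obtain ⟨n, hn⟩ := hεhom
  have hε₀ : (ε : A) ∈ 𝒜 0 :=
    GradedRing.eq_zero_of_isIdempotentElem 𝒜 hidemA (by simpa using hne) hn ▸ hn
  refine ⟨Subalgebra.mul_left_injective_centralizer hunit,
    Subalgebra.range_mul_left_centralizer hidem hunit hs,
    fun c c' => hidemA.mul_mul_mul_of_commute
      ((Subalgebra.mem_centralizer_iff F).mp c.2 ε ε.2) c',
    fun c m hc => by simpa using SetLike.mul_mem_graded hε₀ hc⟩

/-- Let `A` be a finite-dimensional graded algebra over a field `F`, `B` a unital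
graded subalgebra isomorphic as a graded algebra to `END(V)` for a
finite-dimensional graded vector space `V`, `C = C_A(B)` the centralizer, and
`ε` a homogeneous primitive idempotent of `B`.  Then `c ↦ ε c` is an isomorphism
of graded algebras from `C` onto the idempotent truncation `ε A ε`. -/
theorem centralizer_iso_idempotent_truncation (F A V : Type*) [Field F] [Ring A]
    [Algebra F A] [FiniteDimensional F A] [AddCommGroup V] [Module F V]
    [FiniteDimensional F V]
    (𝒜 : ℤ → Submodule F A) [GradedAlgebra 𝒜]
    (ℬ : ℤ → Submodule F V) [DirectSum.Decomposition ℬ]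
    (B : Subalgebra F A)
    (hBgraded : ∀ b ∈ B, ∀ n : ℤ, (DirectSum.decompose 𝒜 b n : A) ∈ B)
    (φ : B ≃ₐ[F] Module.End F V)
    (hφ : ∀ (b : B) (n : ℤ), (b : A) ∈ 𝒜 n ↔ φ b ∈ endGrade F V ℬ n)
    (ε : B) (hεhom : ∃ n : ℤ, (ε : A) ∈ 𝒜 n)
    (hidem : IsIdempotentElem ε) (hne : ε ≠ 0)
    (hprim : ∀ e₁ e₂ : B, IsIdempotentElem e₁ → IsIdempotentElem e₂ →
      e₁ * e₂ = 0 → e₂ * e₁ = 0 → ε = e₁ + e₂ → e₁ = 0 ∨ e₂ = 0) :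
    Function.Injective
        (fun c : Subalgebra.centralizer F (B : Set A) => (ε : A) * (c : A)) ∧
      Set.range (fun c : Subalgebra.centralizer F (B : Set A) =>
          (ε : A) * (c : A)) =
        {x : A | ∃ a : A, x = (ε : A) * a * (ε : A)} ∧
      (∀ c c' : Subalgebra.centralizer F (B : Set A),
        (ε : A) * ((c : A) * (c' : A)) =
          ((ε : A) * (c : A)) * ((ε : A) * (c' : A))) ∧
      (∀ (c : Subalgebra.centralizer F (B : Set A)) (n : ℤ),
        (c : A) ∈ 𝒜 n → (ε : A) * (c : A) ∈ 𝒜 n) :=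
  centralizer_iso_idempotent_truncation_general F A V 𝒜 B φ ε hεhom hidem hne hprim
end

section
/- For every integer $m \ge 0$, the sum over all partitions $\mu$ of $m$ of the square of the number of standard Young tableaux of shape $\mu$ equals $m!$. -/
/-- The multiset of row lengths of a finite set of cells. -/
def rowLensMultiset (S : Finset (ℕ × ℕ)) : Multiset ℕ :=
  (S.image Prod.fst).val.map fun a => (S.filter (fun c => c.1 = a)).card

/-!
Young's lattice is a differential poset. A Young diagram has exactly one more addable than
removable cell (they alternate along its boundary), and for distinct cells `c ≠ c'`, adding `c`
and then removing `c'` is possible exactly when removing `c'` and then adding `c` is. Deleting the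
largest entry of a standard tableau leaves a standard tableau, so the number `f S` of standard
tableaux of shape `S` is `∑ f (S - c)` over the removable cells `c`. With the two facts above,
induction on `n = #S` gives `∑ f (S + c) = (n + 1) * f S` over the addable cells `c`. Counting
the pairs `S ⋖ T` with weight `f S * f T` in two ways then gives
`∑_{#T = n + 1} f T ^ 2 = (n + 1) * ∑_{#S = n} f S ^ 2`.
-/

open Finset

section LowerSet

variable {α : Type*} [LE α] [DecidableEq α] {S : Finset α} {c : α}

lemma isLowerSet_coe_erase_iff (hS : IsLowerSet (S : Set α)) :
    IsLowerSet (↑(S.erase c) : Set α) ↔ ∀ x ∈ S, c ≤ x → x = c := by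
  refine ⟨fun h x hx hcx => ?_, fun h => by simpa using hS.erase h⟩
  by_contra hne
  simpa using h hcx (mem_erase.2 ⟨hne, hx⟩)

lemma isLowerSet_coe_insert_iff (hS : IsLowerSet (S : Set α)) :
    IsLowerSet (↑(insert c S) : Set α) ↔ ∀ x ≤ c, x ≠ c → x ∈ S := by
  refine ⟨fun h x hx hne => by simpa [hne] using h hx (mem_insert_self c S), fun h => ?_⟩
  rintro x y hyx hx
  rw [coe_insert, Set.mem_insert_iff, mem_coe] at hx ⊢
  rcases hx with rfl | hx
  · exact or_iff_not_imp_left.2 (h y hyx)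
  · exact Or.inr (hS hyx hx)

end LowerSet

section Snoc

variable {α : Type*} [DecidableEq α] {n : ℕ}

lemma image_snoc_univ (t : Fin n → α) (c : α) :
    image (Fin.snoc t c : Fin (n + 1) → α) univ = insert c (image t univ) :=
  coe_injective (by simp)

lemma image_init_univ {t : Fin (n + 1) → α} (ht : Function.Injective t) :
    image (Fin.init t) univ = (image t univ).erase (t (Fin.last n)) := by
  have hlast : t (Fin.last n) ∉ image (Fin.init t) univ := fun hmem => by
    obtain ⟨k, -, hk⟩ := mem_image.1 hmem
    exact (Fin.castSucc_lt_last k).ne (ht hk)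
  rw [← erase_insert hlast, ← image_snoc_univ, Fin.snoc_init_self]

end Snoc

namespace Nat.Partition

variable {m : ℕ}

noncomputable def youngDiagram (μ : m.Partition) : YoungDiagram :=
  YoungDiagram.ofRowLens (μ.parts.sort (· ≥ ·)) (Multiset.pairwise_sort _ _).sortedGE

lemma rowLens_youngDiagram (μ : m.Partition) :
    (μ.youngDiagram.rowLens : Multiset ℕ) = μ.parts := by
  rw [youngDiagram, YoungDiagram.rowLens_ofRowLens_eq_self
    fun x hx => μ.parts_pos ((Multiset.mem_sort _).1 hx), Multiset.sort_eq]

lemma youngDiagram_injective : Function.Injective (youngDiagram (m := m)) := fun μ ν h =>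
  Nat.Partition.ext <| by rw [← μ.rowLens_youngDiagram, ← ν.rowLens_youngDiagram, h]

end Nat.Partition

lemma card_eq_sum_rowLensMultiset (S : Finset (ℕ × ℕ)) : #S = (rowLensMultiset S).sum :=
  card_eq_sum_card_image Prod.fst S

lemma rowLensMultiset_cells (ν : YoungDiagram) : rowLensMultiset ν.cells = ν.rowLens := by
  have himg : ν.cells.image Prod.fst = range (ν.colLen 0) := by
    ext i
    simp only [mem_image, mem_range, ← YoungDiagram.mem_iff_lt_colLen]
    exact ⟨fun ⟨⟨i, j⟩, h, hi⟩ => hi ▸ ν.up_left_mem le_rfl (Nat.zero_le j) h,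
      fun h => ⟨_, h, rfl⟩⟩
  rw [rowLensMultiset, himg, range_val, YoungDiagram.rowLens, ← Multiset.map_coe]
  congr 1
  funext i
  rw [YoungDiagram.rowLen_eq_card]
  rfl

lemma rowLensMultiset_eq_parts_iff {m : ℕ} {μ : m.Partition} {S : Finset (ℕ × ℕ)}
    (hS : IsLowerSet (S : Set (ℕ × ℕ))) :
    rowLensMultiset S = μ.parts ↔ S = μ.youngDiagram.cells := by
  refine ⟨fun h => ?_, fun h => by rw [h, rowLensMultiset_cells, μ.rowLens_youngDiagram]⟩
  have h' : ((⟨S, hS⟩ : YoungDiagram).rowLens : Multiset ℕ) = μ.youngDiagram.rowLens := by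
    rw [← rowLensMultiset_cells, μ.rowLens_youngDiagram]
    exact h
  have hrows := List.Perm.eq_of_pairwise' (YoungDiagram.rowLens_sorted _).pairwise
    (YoungDiagram.rowLens_sorted _).pairwise (Multiset.coe_eq_coe.1 h')
  exact congrArg YoungDiagram.cells (YoungDiagram.equivListRowLens.injective (Subtype.ext hrows))

lemma card_youngDiagram_cells {m : ℕ} (μ : m.Partition) : #μ.youngDiagram.cells = m := by
  rw [card_eq_sum_rowLensMultiset, rowLensMultiset_cells, μ.rowLens_youngDiagram, μ.parts_sum]

lemma isStandardTableau_iff_le {n : ℕ} {t : Fin n → ℕ × ℕ} :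
    IsStandardTableau n t ↔ Function.Injective t ∧
      IsLowerSet (↑(image t univ) : Set (ℕ × ℕ)) ∧ ∀ k k', t k ≤ t k' → k ≤ k' := by
  constructor
  · rintro ⟨hinj, hlow, hrow, hcol⟩
    refine ⟨hinj, hlow, fun k k' hle => ?_⟩
    -- pass through the cell in the row of `t k` and the column of `t k'`
    obtain ⟨j, -, hj⟩ := mem_image.1 <| hlow (show ((t k).1, (t k').2) ≤ t k' from ⟨hle.1, le_rfl⟩)
      (mem_image_of_mem t (mem_univ k'))
    have hkj : k ≤ j := by
      rcases hle.2.lt_or_eq with h | h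
      · exact (hrow k j (by rw [hj]) (by rw [hj]; exact h)).le
      · exact (hinj (hj.trans (Prod.ext rfl h.symm))).ge
    have hjk' : j ≤ k' := by
      rcases hle.1.lt_or_eq with h | h
      · exact (hcol j k' (by rw [hj]) (by rw [hj]; exact h)).le
      · exact (hinj (hj.trans (Prod.ext h rfl))).le
    exact hkj.trans hjk'
  · rintro ⟨hinj, hlow, hle⟩
    refine ⟨hinj, hlow, fun k k' h1 h2 => ?_, fun k k' h2 h1 => ?_⟩ <;>
      exact (hle k k' ⟨h1.le, h2.le⟩).lt_of_ne (by rintro rfl; omega)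

namespace YoungLattice

variable {S : Finset (ℕ × ℕ)} {c c' : ℕ × ℕ} {n : ℕ}

def rowLen (S : Finset (ℕ × ℕ)) (i : ℕ) : ℕ := #{c ∈ S | c.1 = i}

lemma rowLen_eq_youngDiagram_rowLen (hS : IsLowerSet (S : Set (ℕ × ℕ))) (i : ℕ) :
    rowLen S i = (⟨S, hS⟩ : YoungDiagram).rowLen i := by
  rw [YoungDiagram.rowLen_eq_card]
  rfl

lemma mem_iff_lt_rowLen (hS : IsLowerSet (S : Set (ℕ × ℕ))) {i j : ℕ} :
    (i, j) ∈ S ↔ j < rowLen S i := by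
  rw [rowLen_eq_youngDiagram_rowLen hS]
  exact YoungDiagram.mem_iff_lt_rowLen (μ := ⟨S, hS⟩)

lemma rowLen_antitone (hS : IsLowerSet (S : Set (ℕ × ℕ))) : Antitone (rowLen S) := by
  intro i i' h
  simp only [rowLen_eq_youngDiagram_rowLen hS]
  exact YoungDiagram.rowLen_anti _ i i' h

open scoped Classical in
noncomputable def removableCells (S : Finset (ℕ × ℕ)) : Finset (ℕ × ℕ) :=
  {c ∈ S | IsLowerSet (↑(S.erase c) : Set (ℕ × ℕ))}

/- Only `(0, 0)` and the cells just below or right of a cell of `S` can be added to `S`; this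
candidate set just makes the definition a finset. -/
open scoped Classical in
noncomputable def addableCells (S : Finset (ℕ × ℕ)) : Finset (ℕ × ℕ) :=
  {c ∈ insert (0, 0) (S.image (fun c => (c.1 + 1, c.2)) ∪ S.image (fun c => (c.1, c.2 + 1))) |
    c ∉ S ∧ IsLowerSet (↑(insert c S) : Set (ℕ × ℕ))}

@[simp]
lemma mem_removableCells :
    c ∈ removableCells S ↔ c ∈ S ∧ IsLowerSet (↑(S.erase c) : Set (ℕ × ℕ)) := by
  simp [removableCells]

@[simp]
lemma mem_addableCells :
    c ∈ addableCells S ↔ c ∉ S ∧ IsLowerSet (↑(insert c S) : Set (ℕ × ℕ)) := by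
  simp only [addableCells, mem_filter, and_iff_right_iff_imp]
  rintro ⟨hcS, hlow⟩
  have below_mem {d : ℕ × ℕ} (hd : d ≤ c) (hne : d ≠ c) : d ∈ S := by
    simpa [hne] using hlow hd (mem_insert_self c S)
  obtain ⟨_ | i, _ | j⟩ := c
  · exact mem_insert_self _ _
  · refine mem_insert_of_mem (mem_union_right _ (mem_image.2 ⟨(0, j), below_mem ?_ ?_, rfl⟩))
      <;> simp [Prod.le_def]
  all_goals
    refine mem_insert_of_mem (mem_union_left _ (mem_image.2 ⟨(i, _), below_mem ?_ ?_, rfl⟩))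
      <;> simp [Prod.le_def]

lemma mem_removableCells_iff (hS : IsLowerSet (S : Set (ℕ × ℕ))) {i j : ℕ} :
    (i, j) ∈ removableCells S ↔ (i, j) ∈ S ∧ (i, j + 1) ∉ S ∧ (i + 1, j) ∉ S := by
  rw [mem_removableCells, isLowerSet_coe_erase_iff hS]
  refine and_congr_right fun hc => ⟨fun h => ⟨fun h' => ?_, fun h' => ?_⟩, ?_⟩
  · simpa using h _ h' (by simp [Prod.le_def])
  · simpa using h _ h' (by simp [Prod.le_def])
  · rintro ⟨hright, hbelow⟩ ⟨a, b⟩ hx ⟨ha, hb⟩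
    rcases ha.lt_or_eq with ha | rfl
    · exact absurd (hS (show (i + 1, j) ≤ (a, b) from ⟨ha, hb⟩) hx) hbelow
    rcases hb.lt_or_eq with hb | rfl
    · exact absurd (hS (show (i, j + 1) ≤ (i, b) from ⟨le_rfl, hb⟩) hx) hright
    rfl

lemma mem_removableCells_iff_rowLen (hS : IsLowerSet (S : Set (ℕ × ℕ))) {i j : ℕ} :
    (i, j) ∈ removableCells S ↔ j + 1 = rowLen S i ∧ rowLen S (i + 1) < rowLen S i := by
  simp only [mem_removableCells_iff hS, mem_iff_lt_rowLen hS]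
  omega

lemma mem_addableCells_iff_rowLen (hS : IsLowerSet (S : Set (ℕ × ℕ))) {i j : ℕ} :
    (i, j) ∈ addableCells S ↔ j = rowLen S i ∧ (i = 0 ∨ rowLen S i < rowLen S (i - 1)) := by
  rw [mem_addableCells, isLowerSet_coe_insert_iff hS, mem_iff_lt_rowLen hS]
  constructor
  · rintro ⟨hnot, h⟩
    have hleft : j = 0 ∨ j - 1 < rowLen S i := by
      refine or_iff_not_imp_left.2 fun hj => (mem_iff_lt_rowLen hS).1 ?_
      exact h (i, j - 1) ⟨le_rfl, Nat.sub_le j 1⟩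
        (by simp only [ne_eq, Prod.mk.injEq, true_and]; omega)
    have hup : i = 0 ∨ j < rowLen S (i - 1) := by
      refine or_iff_not_imp_left.2 fun hi => (mem_iff_lt_rowLen hS).1 ?_
      exact h (i - 1, j) ⟨Nat.sub_le i 1, le_rfl⟩
        (by simp only [ne_eq, Prod.mk.injEq, and_true]; omega)
    omega
  · rintro ⟨rfl, hi⟩
    refine ⟨lt_irrefl _, fun ⟨a, b⟩ ⟨ha, hb⟩ hne => (mem_iff_lt_rowLen hS).2 ?_⟩
    rcases (show a ≤ i from ha).lt_or_eq with ha | rfl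
    · have := rowLen_antitone hS (show a ≤ i - 1 by omega)
      omega
    · simp only [ne_eq, Prod.mk.injEq, true_and] at hne
      omega

lemma addableCells_eq (hS : IsLowerSet (S : Set (ℕ × ℕ))) :
    addableCells S = insert (0, rowLen S 0)
      ((removableCells S).image fun c => (c.1 + 1, rowLen S (c.1 + 1))) := by
  ext ⟨i, j⟩
  simp only [mem_insert, mem_image, Prod.exists, Prod.mk.injEq, mem_addableCells_iff_rowLen hS,
    mem_removableCells_iff_rowLen hS]
  constructor
  · rintro ⟨rfl, rfl | hi⟩
    · exact Or.inl ⟨rfl, rfl⟩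
    · obtain _ | a := i
      · simp at hi
      rw [Nat.add_sub_cancel] at hi
      exact Or.inr ⟨a, rowLen S a - 1, ⟨by omega, hi⟩, rfl, rfl⟩
  · rintro (⟨rfl, rfl⟩ | ⟨a, b, ⟨-, ha⟩, rfl, rfl⟩)
    · exact ⟨rfl, Or.inl rfl⟩
    · exact ⟨rfl, Or.inr (by rwa [Nat.add_sub_cancel])⟩

lemma card_addableCells (hS : IsLowerSet (S : Set (ℕ × ℕ))) :
    #(addableCells S) = #(removableCells S) + 1 := by
  rw [addableCells_eq hS, card_insert_of_notMem (by simp), card_image_of_injOn]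
  rintro ⟨a, b⟩ hab ⟨a', b'⟩ hab' heq
  simp only [mem_coe, mem_removableCells_iff_rowLen hS] at hab hab'
  simp only [Prod.mk.injEq, add_left_inj] at heq ⊢
  obtain ⟨rfl, -⟩ := heq
  omega

lemma mem_addableCells_removableCells_comm (hS : IsLowerSet (S : Set (ℕ × ℕ))) :
    c ∈ addableCells S ∧ c' ∈ (removableCells (insert c S)).erase c ↔
      c ∈ (addableCells (S.erase c')).erase c' ∧ c' ∈ removableCells S := by
  by_cases hne : c' = c
  · simp [hne]
  -- `insert c S` and `S.erase c'` are the union and the intersection of `S` with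
  -- `insert c (S.erase c')`
  have hlower (hc : c ∉ S) (hM : IsLowerSet (↑(insert c (S.erase c')) : Set (ℕ × ℕ))) :
      IsLowerSet (↑(insert c S) : Set (ℕ × ℕ)) ∧
        IsLowerSet (↑(S.erase c') : Set (ℕ × ℕ)) := by
    constructor
    · convert hM.union hS using 1
      ext x
      simp only [coe_insert, coe_erase, Set.mem_insert_iff, Set.mem_union, Set.mem_sdiff,
        Set.mem_singleton_iff, mem_coe]
      tauto
    · convert hM.inter hS using 1
      ext x
      simp only [coe_erase, coe_insert, Set.mem_inter_iff, Set.mem_insert_iff, mem_coe]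
      aesop
  simp only [mem_erase, mem_addableCells, mem_removableCells, mem_insert,
    erase_insert_of_ne (Ne.symm hne)]
  tauto

noncomputable def shapes (n : ℕ) : Finset (Finset (ℕ × ℕ)) :=
  univ.image fun μ : n.Partition => μ.youngDiagram.cells

lemma mem_shapes : S ∈ shapes n ↔ #S = n ∧ IsLowerSet (S : Set (ℕ × ℕ)) := by
  refine ⟨fun hS => ?_, fun ⟨hcard, hS⟩ => ?_⟩
  · obtain ⟨μ, -, rfl⟩ := mem_image.1 hS
    exact ⟨card_youngDiagram_cells μ, μ.youngDiagram.isLowerSet⟩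
  · let μ : n.Partition :=
      { parts := rowLensMultiset S
        parts_pos := fun hx => YoungDiagram.pos_of_mem_rowLens ⟨S, hS⟩ _ <| by
          rwa [← Multiset.mem_coe, ← rowLensMultiset_cells ⟨S, hS⟩]
        parts_sum := by rw [← hcard, card_eq_sum_rowLensMultiset] }
    exact mem_image.2 ⟨μ, mem_univ _, ((rowLensMultiset_eq_parts_iff hS).1 rfl).symm⟩

lemma sum_removableCells_eq_sum_addableCells {M : Type*} [AddCommMonoid M]
    (g : Finset (ℕ × ℕ) → Finset (ℕ × ℕ) → M) :
    ∑ T ∈ shapes (n + 1), ∑ c ∈ removableCells T, g (T.erase c) T =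
      ∑ S ∈ shapes n, ∑ c ∈ addableCells S, g S (insert c S) := by
  rw [sum_sigma', sum_sigma']
  refine sum_nbij' (fun p => ⟨p.1.erase p.2, p.2⟩) (fun p => ⟨insert p.2 p.1, p.2⟩)
    ?_ ?_ ?_ ?_ ?_
  · rintro ⟨T, c⟩ hp
    simp only [mem_sigma, mem_shapes, mem_removableCells, mem_addableCells] at hp ⊢
    obtain ⟨⟨hcard, hT⟩, hcT, hlow⟩ := hp
    refine ⟨⟨by rw [card_erase_of_mem hcT, hcard]; rfl, hlow⟩, notMem_erase c T, ?_⟩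
    rwa [insert_erase hcT]
  · rintro ⟨S, c⟩ hp
    simp only [mem_sigma, mem_shapes, mem_removableCells, mem_addableCells] at hp ⊢
    obtain ⟨⟨hcard, hS⟩, hcS, hlow⟩ := hp
    refine ⟨⟨by rw [card_insert_of_notMem hcS, hcard], hlow⟩, mem_insert_self c S, ?_⟩
    rwa [erase_insert hcS]
  all_goals
    rintro ⟨S, c⟩ hp
    simp only [mem_sigma, mem_removableCells, mem_addableCells] at hp
  · simp [insert_erase hp.2.1]
  · simp [erase_insert hp.2.1]
  · simp [insert_erase hp.2.1]

open scoped Classical in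
noncomputable def stdTableaux (n : ℕ) (S : Finset (ℕ × ℕ)) : Finset (Fin n → ℕ × ℕ) :=
  {t ∈ Fintype.piFinset fun _ => S | IsStandardTableau n t ∧ image t univ = S}

@[simp]
lemma mem_stdTableaux {t : Fin n → ℕ × ℕ} :
    t ∈ stdTableaux n S ↔ IsStandardTableau n t ∧ image t univ = S := by
  simp only [stdTableaux, mem_filter, Fintype.mem_piFinset, and_iff_right_iff_imp]
  rintro ⟨-, rfl⟩ k
  exact mem_image_of_mem t (mem_univ k)

lemma card_stdTableaux_zero : #(stdTableaux 0 ∅) = 1 := by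
  refine card_eq_one.2
    ⟨Fin.elim0, eq_singleton_iff_unique_mem.2 ⟨?_, fun _ _ => Subsingleton.elim _ _⟩⟩
  simp [isStandardTableau_iff_le, Function.injective_of_subsingleton, isLowerSet_empty]

lemma _root_.IsStandardTableau.last_mem_removableCells {t : Fin (n + 1) → ℕ × ℕ}
    (h : IsStandardTableau (n + 1) t) : t (Fin.last n) ∈ removableCells (image t univ) := by
  obtain ⟨-, hlow, hle⟩ := isStandardTableau_iff_le.1 h
  rw [mem_removableCells, isLowerSet_coe_erase_iff hlow]
  refine ⟨mem_image_of_mem t (mem_univ _), fun x hx hlast => ?_⟩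
  obtain ⟨k, -, rfl⟩ := mem_image.1 hx
  rw [Fin.last_le_iff.1 (hle _ _ hlast)]

lemma _root_.IsStandardTableau.init {t : Fin (n + 1) → ℕ × ℕ}
    (h : IsStandardTableau (n + 1) t) : IsStandardTableau n (Fin.init t) := by
  obtain ⟨hinj, -, hle⟩ := isStandardTableau_iff_le.1 h
  refine isStandardTableau_iff_le.2
    ⟨hinj.comp (Fin.castSucc_injective n), ?_, fun k k' => hle _ _⟩
  rw [image_init_univ hinj]
  exact (mem_removableCells.1 h.last_mem_removableCells).2

lemma _root_.IsStandardTableau.snoc {t : Fin n → ℕ × ℕ} (h : IsStandardTableau n t)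
    (hS : IsLowerSet (S : Set (ℕ × ℕ))) (hc : c ∈ removableCells S)
    (himg : image t univ = S.erase c) : IsStandardTableau (n + 1) (Fin.snoc t c) := by
  obtain ⟨hinj, -, hle⟩ := isStandardTableau_iff_le.1 h
  obtain ⟨hcS, hmax⟩ := mem_removableCells.1 hc
  rw [isLowerSet_coe_erase_iff hS] at hmax
  have hmem (k : Fin n) : t k ∈ S.erase c := himg ▸ mem_image_of_mem t (mem_univ k)
  refine isStandardTableau_iff_le.2 ⟨?_, ?_, fun k k' => ?_⟩
  · exact Fin.snoc_injective_iff.2 ⟨hinj, fun ⟨k, hk⟩ => ne_of_mem_erase (hmem k) hk⟩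
  · rwa [image_snoc_univ, himg, insert_erase hcS]
  · induction k using Fin.lastCases <;> induction k' using Fin.lastCases
    · simp
    · simp only [Fin.snoc_last, Fin.snoc_castSucc]
      exact fun hlast =>
        absurd (hmax _ (mem_of_mem_erase (hmem _)) hlast) (ne_of_mem_erase (hmem _))
    · simp [Fin.le_last]
    · simpa using hle _ _

lemma card_stdTableaux_succ (hS : IsLowerSet (S : Set (ℕ × ℕ))) :
    #(stdTableaux (n + 1) S) = ∑ c ∈ removableCells S, #(stdTableaux n (S.erase c)) := by
  rw [card_eq_sum_card_fiberwise (f := fun t => t (Fin.last n)) (t := removableCells S)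
    fun t ht => by
      obtain ⟨hstd, rfl⟩ := mem_stdTableaux.1 (mem_coe.1 ht)
      exact hstd.last_mem_removableCells]
  refine sum_congr rfl fun c hc => card_nbij' Fin.init (Fin.snoc · c) ?_ ?_ ?_ ?_
  · intro t ht
    simp only [coe_filter, mem_stdTableaux, Set.mem_ofPred_eq] at ht
    obtain ⟨⟨hstd, rfl⟩, rfl⟩ := ht
    exact mem_stdTableaux.2 ⟨hstd.init, image_init_univ (isStandardTableau_iff_le.1 hstd).1⟩
  · intro t ht
    obtain ⟨hstd, himg⟩ := mem_stdTableaux.1 (mem_coe.1 ht)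
    simp only [coe_filter, mem_stdTableaux, Set.mem_ofPred_eq, Fin.snoc_last, and_true]
    refine ⟨hstd.snoc hS hc himg, ?_⟩
    rw [image_snoc_univ, himg, insert_erase (mem_removableCells.1 hc).1]
  · intro t ht
    simp only [coe_filter, Set.mem_ofPred_eq] at ht
    exact ht.2 ▸ Fin.snoc_init_self t
  · intro t _
    exact Fin.init_snoc _ _

lemma sum_card_stdTableaux_insert_eq_add_sum (hS : IsLowerSet (S : Set (ℕ × ℕ))) :
    ∑ c ∈ addableCells S, #(stdTableaux (n + 1) (insert c S)) =
      (#(removableCells S) + 1) * #(stdTableaux n S) +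
        ∑ c' ∈ removableCells S, ∑ c ∈ (addableCells (S.erase c')).erase c',
          #(stdTableaux n (insert c (S.erase c'))) := by
  have hsplit : ∀ c ∈ addableCells S, #(stdTableaux (n + 1) (insert c S)) =
      #(stdTableaux n S) + ∑ c' ∈ (removableCells (insert c S)).erase c,
        #(stdTableaux n (insert c (S.erase c'))) := by
    intro c hc
    obtain ⟨hcS, hlow⟩ := mem_addableCells.1 hc
    have hcrem : c ∈ removableCells (insert c S) :=
      mem_removableCells.2 ⟨mem_insert_self c S, by rwa [erase_insert hcS]⟩
    rw [card_stdTableaux_succ hlow, ← add_sum_erase _ _ hcrem, erase_insert hcS]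
    exact congrArg _ (sum_congr rfl fun c' hc' => by
      rw [erase_insert_of_ne (ne_of_mem_erase hc').symm])
  rw [sum_congr rfl hsplit, sum_add_distrib, sum_const, card_addableCells hS, smul_eq_mul,
    sum_comm' fun _ _ => mem_addableCells_removableCells_comm hS]

lemma sum_card_stdTableaux_insert (hS : IsLowerSet (S : Set (ℕ × ℕ))) (hcard : #S = n) :
    ∑ c ∈ addableCells S, #(stdTableaux (n + 1) (insert c S)) =
      (n + 1) * #(stdTableaux n S) := by
  induction n generalizing S with
  | zero =>
    obtain rfl := card_eq_zero.1 hcard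
    have : removableCells ∅ = ∅ := by ext; simp
    rw [sum_card_stdTableaux_insert_eq_add_sum hS, this]
    simp
  | succ k ih =>
    set F := #(stdTableaux (k + 1) S)
    have hterm : ∀ c' ∈ removableCells S, F + ∑ c ∈ (addableCells (S.erase c')).erase c',
        #(stdTableaux (k + 1) (insert c (S.erase c'))) =
          (k + 1) * #(stdTableaux k (S.erase c')) := by
      intro c' hc'
      obtain ⟨hc'S, hlow⟩ := mem_removableCells.1 hc'
      have hadd : c' ∈ addableCells (S.erase c') :=
        mem_addableCells.2 ⟨notMem_erase c' S, by rwa [insert_erase hc'S]⟩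
      rw [← ih hlow (by rw [card_erase_of_mem hc'S, hcard]; rfl), ← add_sum_erase _ _ hadd,
        insert_erase hc'S]
    calc _ = F + ∑ c' ∈ removableCells S, (F + ∑ c ∈ (addableCells (S.erase c')).erase c',
            #(stdTableaux (k + 1) (insert c (S.erase c')))) := by
          rw [sum_card_stdTableaux_insert_eq_add_sum hS, sum_add_distrib, sum_const, smul_eq_mul]
          ring
      _ = F + (k + 1) * ∑ c' ∈ removableCells S, #(stdTableaux k (S.erase c')) := by
          rw [sum_congr rfl hterm, mul_sum]
      _ = (k + 1 + 1) * F := by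
          rw [← card_stdTableaux_succ hS]
          ring

lemma sum_sq_card_stdTableaux (n : ℕ) :
    ∑ S ∈ shapes n, #(stdTableaux n S) ^ 2 = n.factorial := by
  induction n with
  | zero =>
    have : shapes 0 = {∅} := by
      ext S
      rw [mem_shapes, mem_singleton, card_eq_zero]
      exact ⟨And.left, fun h => ⟨h, by simp [h, isLowerSet_empty]⟩⟩
    rw [this, sum_singleton, card_stdTableaux_zero]
    rfl
  | succ n ih =>
    calc ∑ T ∈ shapes (n + 1), #(stdTableaux (n + 1) T) ^ 2
        = ∑ T ∈ shapes (n + 1), ∑ c ∈ removableCells T,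
            #(stdTableaux n (T.erase c)) * #(stdTableaux (n + 1) T) :=
          sum_congr rfl fun T hT => by
            rw [sq, card_stdTableaux_succ (mem_shapes.1 hT).2, sum_mul]
      _ = ∑ S ∈ shapes n, ∑ c ∈ addableCells S,
            #(stdTableaux n S) * #(stdTableaux (n + 1) (insert c S)) :=
          sum_removableCells_eq_sum_addableCells fun S T =>
            #(stdTableaux n S) * #(stdTableaux (n + 1) T)
      _ = ∑ S ∈ shapes n, (n + 1) * #(stdTableaux n S) ^ 2 :=
          sum_congr rfl fun S hS => by
            rw [← mul_sum, sum_card_stdTableaux_insert (mem_shapes.1 hS).2 (mem_shapes.1 hS).1]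
            ring
      _ = (n + 1).factorial := by rw [← mul_sum, ih, Nat.factorial_succ]

end YoungLattice

/-- For every `m ≥ 0`, the sum over all partitions `μ` of `m` of the square of
the number of standard Young tableaux of shape `μ` equals `m!`. -/
theorem sum_squares_card_std_tableaux (m : ℕ) :
    ∑ μ : Nat.Partition m,
      (Nat.card {t : Fin m → ℕ × ℕ // IsStandardTableau m t ∧
        rowLensMultiset (Finset.image t Finset.univ) = μ.parts}) ^ 2 =
      m.factorial := by
  have hcard (μ : m.Partition) : Nat.card {t : Fin m → ℕ × ℕ // IsStandardTableau m t ∧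
      rowLensMultiset (image t univ) = μ.parts} =
        #(YoungLattice.stdTableaux m μ.youngDiagram.cells) := by
    rw [← Nat.card_eq_finsetCard]
    refine Nat.card_congr (Equiv.subtypeEquivRight fun t => ?_)
    rw [YoungLattice.mem_stdTableaux]
    exact and_congr_right fun h => rowLensMultiset_eq_parts_iff h.2.1
  rw [← YoungLattice.sum_sq_card_stdTableaux, YoungLattice.shapes,
    sum_image fun μ _ ν _ h => Nat.Partition.youngDiagram_injective (YoungDiagram.ext h)]
  exact sum_congr rfl fun μ _ => by rw [hcard]
end

section
/- Let $e \ge 2$, let $\xi$ be an element of a field $F$ with $1 + \xi + \cdots + \xi^{e-1} = 0$ and $e$ minimal with this property. For $i \in \mathbb{Z}/e\mathbb{Z}$, define constants $Q_i^{(0)} \in F$ as follows. If $\xi = 1$ (so $e = \mathrm{char}\, F$ is prime): $Q_0^{(0)} = 1$; $Q_i^{(0)} = 1 - i^{-1}$ for $i \notin \{0, 1, -1\}$; $Q_{-1}^{(0)} = 2$ and $Q_1^{(0)} = 1$ if $e \ne 2$; $Q_1^{(0)} = 1$ if $e = 2$. If $\xi \ne 1$: $Q_0^{(0)} = 1 -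 \xi$; $Q_i^{(0)} = \xi(\xi^{i-1}-1)/(\xi^i - 1)$ for $i \notin \{0,1,-1\}$; $Q_{-1}^{(0)} = \xi(\xi^{-2}-1)/(\xi^{-1}-1)^2$ and $Q_1^{(0)} = 1$ if $e \ne 2$; $Q_1^{(0)} = 1/(\xi - 1)$ if $e = 2$. Then $Q_0^{(0)} Q_1^{(0)} \cdots Q_{e-1}^{(0)} = -1$. -/
/-!
Write `[k] = 1 + ξ + ⋯ + ξ ^ (k - 1)`, so that `[k] = k` when `ξ = 1`. In both cases of the
definition, `Q_k = ξ [k - 1] / [k]` for `2 ≤ k ≤ e - 2`, hence these factors telescope to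
`ξ ^ (e - 3) / [e - 2]`, where `[e - 2] ≠ 0` by minimality of `e`. Moreover `Q_1 = 1` and
`Q_0 Q_{-1} = ξ [2]`, so the product is `ξ ^ (e - 2) [2] / [e - 2]`, and this is `-1` because
`[e - 2] + ξ ^ (e - 2) [2] = [e] = 0`.
-/

open scoped Classical in
/-- The constant coefficients `Q_i^{(0)}` of the power series `Q_i` appearing in
the Brundan–Kleshchev isomorphism. -/
noncomputable def Qconst (e : ℕ) [NeZero e] {F : Type*} [Field F] (ξ : F)
    (i : ZMod e) : F :=
  if ξ = 1 then
    (if i = 0 then 1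
     else if e = 2 then 1
     else if i = 1 then 1
     else if i = -1 then 2
     else 1 - ((i.val : F))⁻¹)
  else
    (if i = 0 then 1 - ξ
     else if e = 2 then 1 / (ξ - 1)
     else if i = 1 then 1
     else if i = -1 then ξ * ((ξ⁻¹) ^ 2 - 1) / (ξ⁻¹ - 1) ^ 2
     else ξ * (ξ ^ (i.val - 1) - 1) / (ξ ^ i.val - 1))

open Finset

theorem ZMod.prod_univ_eq_prod_range {M : Type*} [CommMonoid M] (n : ℕ) [NeZero n]
    (f : ZMod n → M) : ∏ i, f i = ∏ k ∈ range n, f k :=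
  prod_nbij' ZMod.val Nat.cast (by simp [ZMod.val_lt]) (by simp) (by simp)
    (fun k hk => ZMod.val_natCast_of_lt (mem_range.1 hk)) (by simp)

theorem geom_sum_range_add {R : Type*} [Semiring R] (x : R) (m n : ℕ) :
    ∑ i ∈ range (m + n), x ^ i = ∑ i ∈ range m, x ^ i + x ^ m * ∑ i ∈ range n, x ^ i := by
  simp only [sum_range_add, mul_sum, pow_add]

theorem prod_range_div_succ_of_ne_zero {K : Type*} [CommGroupWithZero K] (f : ℕ → K) (n : ℕ)
    (hf : ∀ i ≤ n, f i ≠ 0) : ∏ i ∈ range n, f i / f (i + 1) = f 0 / f n := by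
  induction n with
  | zero => simp [div_self (hf 0 le_rfl)]
  | succ n ih =>
    rw [prod_range_succ, ih fun i hi => hf i (by omega),
      div_mul_div_cancel₀ (hf n (by omega))]

section

variable {F : Type*} [Field F] {e : ℕ} [NeZero e] (ξ : F)

theorem Qconst_two_zero_mul_one (hξ : 1 + ξ = 0) : Qconst 2 ξ 0 * Qconst 2 ξ 1 = -1 := by
  obtain rfl : ξ = -1 := eq_neg_of_add_eq_zero_right hξ
  by_cases h : (-1 : F) = 1
  · simp [Qconst, h]
  · have h2 : (-1 : F) - 1 ≠ 0 := sub_ne_zero.2 h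
    simp only [Qconst, h, if_false, if_true, one_ne_zero]
    field_simp
    ring

theorem Qconst_one (he : 3 ≤ e) : Qconst e ξ 1 = 1 := by
  have : Fact (1 < e) := ⟨by omega⟩
  simp [Qconst, show e ≠ 2 by omega]

theorem Qconst_zero_mul_Qconst_neg_one (he : 3 ≤ e) :
    Qconst e ξ 0 * Qconst e ξ (-1) = ξ * (1 + ξ) := by
  have : Fact (2 < e) := ⟨he⟩
  have : Fact (1 < e) := ⟨by omega⟩
  by_cases h1 : ξ = 1
  · simp only [Qconst, h1, ↓reduceIte, neg_eq_zero, one_ne_zero, show e ≠ 2 by omega,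
      ZMod.neg_one_ne_one, one_mul]
    norm_num
  by_cases h0 : ξ = 0
  · simp [Qconst, h0, show e ≠ 2 by omega, ZMod.neg_one_ne_one]
  simp only [Qconst, h1, if_false, if_true, neg_eq_zero, one_ne_zero, show e ≠ 2 by omega,
    ZMod.neg_one_ne_one]
  have : ξ⁻¹ - 1 ≠ 0 := sub_ne_zero.2 (inv_ne_one.2 h1)
  have : 1 - ξ ≠ 0 := sub_ne_zero.2 (Ne.symm h1)
  field_simp
  ring

theorem Qconst_natCast {k : ℕ} (hk : 2 ≤ k) (hke : k + 1 < e)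
    (hq : ∑ j ∈ range k, ξ ^ j ≠ 0) :
    Qconst e ξ k = ξ * (∑ j ∈ range (k - 1), ξ ^ j) / ∑ j ∈ range k, ξ ^ j := by
  have h0 : (k : ZMod e) ≠ 0 := fun h =>
    absurd (Nat.le_of_dvd (by omega) ((ZMod.natCast_eq_zero_iff _ _).1 h)) (by omega)
  have h1 : (k : ZMod e) ≠ 1 := by
    rw [← Nat.cast_one, Ne, ZMod.natCast_eq_natCast_iff', Nat.mod_eq_of_lt (by omega),
      Nat.mod_eq_of_lt (by omega)]
    omega
  have hm1 : (k : ZMod e) ≠ -1 := fun h =>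
    absurd (Nat.le_of_dvd (by omega)
      ((ZMod.natCast_eq_zero_iff (k + 1) e).1 (by push_cast; rw [h, neg_add_cancel]))) (by omega)
  by_cases hξ : ξ = 1
  · subst hξ
    simp only [one_pow, sum_const, card_range, nsmul_eq_mul, mul_one] at hq ⊢
    simp only [Qconst, ↓reduceIte, h0, show e ≠ 2 by omega, h1, hm1,
      ZMod.val_natCast_of_lt (show k < e by omega), one_mul]
    field_simp
    rw [Nat.cast_sub (by omega)]
    push_cast; ring
  · have : ξ - 1 ≠ 0 := sub_ne_zero.2 hξ
    simp only [geom_sum_eq hξ] at hq ⊢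
    simp only [Qconst, hξ, ↓reduceIte, h0, show e ≠ 2 by omega, h1, hm1,
      ZMod.val_natCast_of_lt (show k < e by omega)]
    field_simp

theorem prod_range_Qconst_add_two {n : ℕ} (hn : n + 3 ≤ e)
    (hq : ∀ k ≤ n, ∑ j ∈ range (k + 1), ξ ^ j ≠ 0) :
    ∏ k ∈ range n, Qconst e ξ ((k + 1 + 1 : ℕ) : ZMod e) = ξ ^ n / ∑ j ∈ range (n + 1), ξ ^ j := by
  calc ∏ k ∈ range n, Qconst e ξ ((k + 1 + 1 : ℕ) : ZMod e)
      = ∏ k ∈ range n, ξ * ((∑ j ∈ range (k + 1), ξ ^ j) / ∑ j ∈ range (k + 1 + 1), ξ ^ j) :=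
        prod_congr rfl fun k hk => by
          have hk := mem_range.1 hk
          rw [Qconst_natCast ξ (by omega) (by omega) (hq (k + 1) (by omega)), mul_div_assoc]
          rfl
    _ = ξ ^ n / ∑ j ∈ range (n + 1), ξ ^ j := by
        rw [prod_mul_distrib, prod_const, card_range,
          prod_range_div_succ_of_ne_zero (fun k => ∑ j ∈ range (k + 1), ξ ^ j) n hq]
        simp [div_eq_mul_inv]

end

/-- `Q_0^{(0)} Q_1^{(0)} ⋯ Q_{e-1}^{(0)} = -1`, where `e` is the quantum
characteristic of `ξ`. -/
theorem Qconst_prod_eq_neg_one (F : Type*) [Field F] (e : ℕ) (he : 2 ≤ e)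
    [NeZero e] (ξ : F)
    (hsum : ∑ k ∈ Finset.range e, ξ ^ k = 0)
    (hmin : ∀ e' : ℕ, 2 ≤ e' → e' < e → ∑ k ∈ Finset.range e', ξ ^ k ≠ 0) :
    ∏ i : ZMod e, Qconst e ξ i = -1 := by
  rw [ZMod.prod_univ_eq_prod_range]
  obtain rfl | he3 := he.eq_or_lt
  · simp only [prod_range_succ, prod_range_zero, one_mul, Nat.cast_zero, Nat.cast_one]
    exact Qconst_two_zero_mul_one ξ (by simpa [sum_range_succ] using hsum)
  obtain ⟨n, rfl⟩ : ∃ n, e = n + 3 := ⟨e - 3, by omega⟩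
  have hq : ∀ k ≤ n + 1, ∑ j ∈ range (k + 1), ξ ^ j ≠ 0 := by
    intro k hk
    rcases Nat.eq_zero_or_pos k with rfl | hk0
    · simp
    · exact hmin (k + 1) (by omega) (by omega)
  have hneg : ((n + 2 : ℕ) : ZMod (n + 3)) = -1 := by
    have := ZMod.natCast_self (n + 3)
    push_cast at this ⊢
    linear_combination this
  have hsplit : ξ ^ (n + 1) * (1 + ξ) = -∑ j ∈ range (n + 1), ξ ^ j := by
    have h2 : ∑ j ∈ range 2, ξ ^ j = 1 + ξ := by simp [sum_range_succ]
    rw [geom_sum_range_add ξ (n + 1) 2, h2] at hsum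
    linear_combination hsum
  rw [prod_range_succ, prod_range_succ', prod_range_succ', prod_range_Qconst_add_two ξ le_rfl
    fun k hk => hq k (by omega), hneg]
  calc _ = Qconst (n + 3) ξ 0 * Qconst (n + 3) ξ (-1) * Qconst (n + 3) ξ 1 *
        (ξ ^ n / ∑ j ∈ range (n + 1), ξ ^ j) := by
        simp only [Nat.cast_zero, zero_add, Nat.cast_one]
        ring
    _ = ξ ^ (n + 1) * (1 + ξ) / ∑ j ∈ range (n + 1), ξ ^ j := by
        rw [Qconst_one ξ (by omega), Qconst_zero_mul_Qconst_neg_one ξ (by omega)]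
        ring
    _ = -1 := by rw [hsplit, neg_div_self (hq n (by omega))]
end

section
/- Let $e \ge 2$, $d \ge 1$, and let $\mathbf{i}^{(1)}, \ldots, \mathbf{i}^{(d)} \in (\mathbb{Z}/e\mathbb{Z})^e$ each be a permutation-type tuple of content $\delta$ (i.e. containing each residue exactly once). If the concatenation $\mathbf{i}^{(1)} \cdots \mathbf{i}^{(d)}$ belongs to $\mathcal{E}_d$ (defined via partitions of $\{1,\ldots,de\}$ into $d$ blocks of size $e$ whose induced subtuples are residue sequences of standard $e$-hook tableaux) and if for some $k > 0$ the first $k$ tuples $\mathbf{i}^{(1)}, \ldots, \mathbf{i}^{(k)}$ each contain every residue exactly once, then each of $\mathbf{i}^{(1)}, \ldots, \mathbf{i}^{(k)}$ is itself the residue sequence of a standard tableau of $e$-hook shape. -/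
/-- `v` is the residue sequence of a standard tableau of `e`-hook shape. -/
def IsHookResidueSeq (e : ℕ) (v : Fin e → ZMod e) : Prop :=
  ∃ (t : Fin e → ℕ × ℕ) (k : ℕ), 1 ≤ k ∧ k ≤ e ∧ IsStandardTableau e t ∧
    Finset.image t Finset.univ = hookCells e k ∧ ∀ m : Fin e, boxRes e (t m) = v m

/-- The position of the `l`-th entry of the `r`-th block of size `e`. -/
def blockPos (d e : ℕ) (r : Fin d) (l : Fin e) : Fin (d * e) :=
  ⟨r.val * e + l.val, by
    calc r.val * e + l.val < r.val * e + e := by omega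
      _ = (r.val + 1) * e := by ring
      _ ≤ d * e := Nat.mul_le_mul_right e r.isLt⟩

/-- `w` is a minimal-length left coset representative of the Young subgroup
`𝔖_{(e,…,e)}` of `𝔖_{de}`: it is increasing on each block of the composition. -/
def CosetMinLeft (d e : ℕ) (w : Equiv.Perm (Fin (d * e))) : Prop :=
  ∀ k k' : Fin (d * e), k < k' → k.val / e = k'.val / e → w k < w k'

/-- `i ∈ 𝓔_d`: `i = w · (i⁽¹⁾ ⋯ i⁽ᵈ⁾)` for a minimal-length coset representative
`w` and residue sequences `i⁽ʳ⁾` of standard tableaux of `e`-hook shape. -/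
def MemEd (d e : ℕ) (i : Fin (d * e) → ZMod e) : Prop :=
  ∃ w : Equiv.Perm (Fin (d * e)), CosetMinLeft d e w ∧
    ∃ v : Fin d → Fin e → ZMod e, (∀ r : Fin d, IsHookResidueSeq e (v r)) ∧
      ∀ (r : Fin d) (l : Fin e), i (w (blockPos d e r l)) = v r l

/-- The alternative description of `𝓔_d`: `{1, …, de}` can be partitioned into
`d` subsets of size `e` whose induced subtuples (in increasing order of
positions) are residue sequences of standard tableaux of `e`-hook shape. -/
def MemEdPartition (d e : ℕ) (i : Fin (d * e) → ZMod e) : Prop :=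
  ∃ (Y : Fin (d * e) → Fin d)
    (h : ∀ r : Fin d, (Finset.univ.filter fun k => Y k = r).card = e),
      ∀ r : Fin d, IsHookResidueSeq e fun l =>
        i (((Finset.univ.filter fun k => Y k = r).orderIsoOfFin (h r) l : Fin (d * e)))

/-!
A standard tableau puts its first entry in the box `(0, 0)`, so every hook residue sequence
starts with residue `0`. Hence, in a partition witnessing `𝓔_d`, the least position of every
class carries residue `0`. Since each block `v r` of the concatenation contains `0` only once,
distinct classes start in distinct blocks, and an induction along the positions shows that the
classes are exactly the blocks; the subtuple read off the class of block `r` is then `v r`.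
-/

open Finset Function

theorem IsStandardTableau.apply_zero_s13 {n : ℕ} {t : Fin n → ℕ × ℕ} (ht : IsStandardTableau n t)
    (hn : 0 < n) : t ⟨0, hn⟩ = (0, 0) := by
  obtain ⟨-, hlower, hrow, hcol⟩ := ht
  have hmem : ∀ x ≤ t ⟨0, hn⟩, ∃ m, t m = x := fun x hx => by
    simpa using hlower hx (by simp)
  obtain ⟨m, hm⟩ := hmem (t ⟨0, hn⟩ |>.1, 0) ⟨le_rfl, Nat.zero_le _⟩
  obtain ⟨m', hm'⟩ := hmem (0, 0) ⟨Nat.zero_le _, Nat.zero_le _⟩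
  have hcol0 : (t ⟨0, hn⟩).2 = 0 := by
    by_contra h
    exact absurd (hrow m ⟨0, hn⟩ (by rw [hm]) (by rw [hm]; omega)) (Nat.not_lt_zero _)
  have hrow0 : (t ⟨0, hn⟩).1 = 0 := by
    by_contra h
    exact absurd (hcol m' ⟨0, hn⟩ (by rw [hm', hcol0]) (by rw [hm']; omega)) (Nat.not_lt_zero _)
  exact Prod.ext hrow0 hcol0

theorem IsHookResidueSeq.pos {e : ℕ} {v : Fin e → ZMod e} (hv : IsHookResidueSeq e v) : 0 < e := by
  obtain ⟨-, k, hk, hke, -⟩ := hv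
  omega

theorem IsHookResidueSeq.apply_zero_s13 {e : ℕ} {v : Fin e → ZMod e} (hv : IsHookResidueSeq e v) :
    v ⟨0, hv.pos⟩ = 0 := by
  obtain ⟨t, -, -, -, ht, -, hres⟩ := hv
  rw [← hres, ht.apply_zero_s13]
  simp [boxRes]

theorem IsHookResidueSeq.apply_min'_eq_zero {α : Type*} [LinearOrder α] {s : Finset α} {e : ℕ}
    (h : #s = e) {f : α → ZMod e} (hf : IsHookResidueSeq e fun l => f (s.orderIsoOfFin h l))
    (hs : s.Nonempty) : f (s.min' hs) = 0 := by
  have := hf.apply_zero_s13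
  rwa [coe_orderIsoOfFin_apply, orderEmbOfFin_zero] at this

section Fibers

variable {α β γ : Type*} [LinearOrder α]

theorem exists_isLeast_fiber_le [WellFoundedLT α] (Y : α → β) (x : α) :
    ∃ m ≤ x, Y m = Y x ∧ IsLeast {q | Y q = Y m} m := by
  obtain ⟨m, hmx, hmin⟩ := wellFounded_lt.has_min {q | Y q = Y x} ⟨x, rfl⟩
  refine ⟨m, not_lt.1 (hmin x rfl), hmx, rfl, fun q hq => not_lt.1 (hmin q (hq.trans hmx))⟩

variable [Fintype α] [DecidableEq β]

theorem apply_eq_zero_of_isLeast_fiber {Y : α → β} {e : ℕ} (hcard : ∀ b, #{q | Y q = b} = e)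
    {f : α → ZMod e}
    (hY : ∀ b, IsHookResidueSeq e fun l => f (({q | Y q = b} : Finset α).orderIsoOfFin (hcard b) l))
    {p : α} (hp : IsLeast {q | Y q = Y p} p) : f p = 0 := by
  have hmin : ({q | Y q = Y p} : Finset α).min' ⟨p, by simp⟩ = p :=
    (isLeast_min' _ _).unique (by rwa [coe_filter_univ])
  rw [← hmin]
  exact (hY (Y p)).apply_min'_eq_zero _ _

variable [PartialOrder γ] [DecidableEq γ]

theorem filter_fiber_eq_of_injOn_isLeast {Y : α → β} {B : α → γ} (hB : Monotone B)
    (hcard : ∀ p, #{q | Y q = Y p} ≤ #{q | B q = B p})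
    (hmin : Set.InjOn B {p | IsLeast {q | Y q = Y p} p}) (p : α) :
    ({q | Y q = Y p} : Finset α) = ({q | B q = B p} : Finset α) := by
  induction p using WellFoundedLT.induction with
  | _ p ih =>
  by_cases hearlier : ∃ q < p, B q = B p
  · obtain ⟨q, hqp, hq⟩ := hearlier
    have hYq : Y p = Y q := by
      have : p ∈ ({x | B x = B q} : Finset α) := by simp [hq]
      simpa [← ih q hqp] using this
    rw [hYq, ih q hqp, hq]
  push Not at hearlier
  -- `p` starts its `B`-block, and by induction every earlier `Y`-class is an earlier `B`-block;
  -- so each `x` in the block of `p` has the least element of its `Y`-class in that block, i.e. `p`.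
  have hsep : ∀ q < p, ∀ x, B x = B p → Y x ≠ Y q := by
    intro q hq x hx hxq
    have : x ∈ ({x | B x = B q} : Finset α) := by simp [← ih q hq, hxq]
    exact hearlier q hq ((mem_filter.1 this).2 ▸ hx)
  have hpmin : IsLeast {q | Y q = Y p} p :=
    ⟨rfl, fun q hq => not_lt.1 fun hqp => hsep q hqp p rfl hq.symm⟩
  refine (eq_of_subset_of_card_le (fun x hx => ?_) (hcard p)).symm
  rw [mem_filter] at hx ⊢
  obtain ⟨m, hmx, hYm, hmmin⟩ := exists_isLeast_fiber_le Y x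
  have hpm : p ≤ m := not_lt.1 fun hmp => hsep m hmp x hx.2 hYm.symm
  have hBm : B m = B p := le_antisymm (hx.2 ▸ hB hmx) (hB hpm)
  exact ⟨mem_univ x, hYm ▸ congrArg Y (hmin hmmin hpmin hBm)⟩

end Fibers

section Blocks

variable {m n : ℕ}

theorem blockPos_eq_mkDivMod (r : Fin m) (l : Fin n) : blockPos m n r l = Fin.mkDivMod r l :=
  Fin.ext (by simp [blockPos, Nat.mul_comm])

theorem Fin.monotone_divNat : Monotone (Fin.divNat : Fin (m * n) → Fin m) :=
  fun _ _ h => Nat.div_le_div_right h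

theorem Fin.strictMono_mkDivMod (r : Fin m) : StrictMono (Fin.mkDivMod (n := n) r) :=
  fun _ _ h => by simp [Fin.lt_def, h]

theorem Fin.filter_divNat_eq (r : Fin m) :
    ({p | p.divNat = r} : Finset (Fin (m * n))) = univ.image (Fin.mkDivMod r) := by
  ext p
  simp only [mem_filter, mem_univ, true_and, mem_image]
  refine ⟨fun hp => ⟨p.modNat, by simp [← hp]⟩, ?_⟩
  rintro ⟨l, rfl⟩
  simp

theorem Fin.card_filter_divNat_eq (r : Fin m) :
    #({p | p.divNat = r} : Finset (Fin (m * n))) = n := by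
  rw [filter_divNat_eq, card_image_of_injective _ (strictMono_mkDivMod r).injective, card_univ,
    Fintype.card_fin]

theorem Fin.eq_of_divNat_eq {X : Type*} {f : Fin (m * n) → X}
    (hf : ∀ r, Injective fun l => f (Fin.mkDivMod r l)) {p q : Fin (m * n)} (hpq : f p = f q)
    (hdiv : p.divNat = q.divNat) : p = q := by
  rw [← divNat_mkDivMod_modNat p, ← divNat_mkDivMod_modNat q, hdiv] at hpq ⊢
  rw [hf _ hpq]

end Blocks

theorem first_blocks_are_hook_sequences_general (d e : ℕ)
    (v : Fin d → Fin e → ZMod e) (hv : ∀ r : Fin d, Function.Bijective (v r))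
    (i : Fin (d * e) → ZMod e)
    (hconc : ∀ (r : Fin d) (l : Fin e), i (blockPos d e r l) = v r l)
    (hEd : MemEdPartition d e i)
    (k : ℕ) :
    ∀ r : Fin d, r.val < k → IsHookResidueSeq e (v r) := by
  intro r _
  obtain ⟨Y, hcard, hY⟩ := hEd
  simp only [blockPos_eq_mkDivMod] at hconc
  have hinj : ∀ r, Injective fun l => i (Fin.mkDivMod r l) := fun r => by
    simpa only [hconc] using (hv r).injective
  have hfib := filter_fiber_eq_of_injOn_isLeast (Y := Y) Fin.monotone_divNat
    (fun p => by rw [hcard, Fin.card_filter_divNat_eq])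
    (fun p hp p' hp' => Fin.eq_of_divNat_eq hinj
      ((apply_eq_zero_of_isLeast_fiber hcard hY hp).trans
        (apply_eq_zero_of_isLeast_fiber hcard hY hp').symm))
  set c := Y (Fin.mkDivMod r ⟨0, (hY r).pos⟩)
  have hclass : ({q | Y q = c} : Finset _) = univ.image (Fin.mkDivMod r) := by
    rw [hfib, Fin.divNat_mkDivMod, Fin.filter_divNat_eq]
  have horder : ∀ l, (({q | Y q = c} : Finset _).orderIsoOfFin (hcard c) l : Fin (d * e)) =
      Fin.mkDivMod r l := fun l => by
    rw [coe_orderIsoOfFin_apply, ← orderEmbOfFin_unique (hcard c)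
      (fun l => hclass ▸ mem_image_of_mem _ (mem_univ l)) (Fin.strictMono_mkDivMod r)]
  simpa only [horder, hconc] using hY c

/-- If the concatenation of tuples `v⁽¹⁾, …, v⁽ᵈ⁾ ∈ (ℤ/eℤ)^e`, each containing
every residue exactly once, lies in `𝓔_d` (in its partition description), then
each of the first `k` tuples (`k > 0`) is itself the residue sequence of a
standard tableau of `e`-hook shape. -/
theorem first_blocks_are_hook_sequences (d e : ℕ) (hd : 1 ≤ d) (he : 2 ≤ e)
    (v : Fin d → Fin e → ZMod e) (hv : ∀ r : Fin d, Function.Bijective (v r))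
    (i : Fin (d * e) → ZMod e)
    (hconc : ∀ (r : Fin d) (l : Fin e), i (blockPos d e r l) = v r l)
    (hEd : MemEdPartition d e i)
    (k : ℕ) (hk0 : 0 < k) (hkd : k ≤ d) :
    ∀ r : Fin d, r.val < k → IsHookResidueSeq e (v r) :=
  first_blocks_are_hook_sequences_general d e v hv i hconc hEd k
end

section
/- Let $\rho$ be a Rouquier $e$-core for $d \ge 1$ witnessed by the abacus display $\mathsf{Ab}_N(\rho)$, let $1 \le r \le d$, and let $\mu \in \mathrm{Par}_e(\rho, r-1)$ and $\lambda \in \mathrm{Par}_e(\rho, r)$ with $\mu \subset \lambda$. Then the top-left corner box of the skew diagram $\lambda \setminus \mu$ has residue $-N + e\mathbb{Z}$ (given that $\lambda \setminus \mu$ is a translate of the Young diagram of an $e$-hook partition, by the Chuang–Kessar lemma). -/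
/-- Two boxes are adjacent if they differ by one in exactly one coordinate. -/
def BoxAdj (c c' : ℕ × ℕ) : Prop :=
  (c.1 = c'.1 ∧ (c.2 + 1 = c'.2 ∨ c'.2 + 1 = c.2)) ∨
  (c.2 = c'.2 ∧ (c.1 + 1 = c'.1 ∨ c'.1 + 1 = c.1))

/-- A finite set of boxes is connected. -/
def BoxConnected (S : Finset (ℕ × ℕ)) : Prop :=
  ∀ c ∈ S, ∀ c' ∈ S,
    Relation.ReflTransGen (fun u v => u ∈ S ∧ v ∈ S ∧ BoxAdj u v) c c'

/-- `S` contains no 2×2 square. -/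
def NoTwoByTwo (S : Finset (ℕ × ℕ)) : Prop :=
  ¬ ∃ a b : ℕ, (a, b) ∈ S ∧ (a + 1, b) ∈ S ∧ (a, b + 1) ∈ S ∧ (a + 1, b + 1) ∈ S

/-- An `e`-hook: a connected skew diagram of size `e` containing no 2×2 square. -/
def IsEHook (e : ℕ) (S : Finset (ℕ × ℕ)) : Prop :=
  S.card = e ∧ BoxConnected S ∧ NoTwoByTwo S

/-- An `e`-core: a partition from which no `e`-hook can be removed. -/
def IsECore (e : ℕ) (ρ : YoungDiagram) : Prop :=
  ¬ ∃ ν : YoungDiagram, ν ≤ ρ ∧ IsEHook e (ρ.cells \ ν.cells)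

/-- `λ ∈ Par_e(ρ, r)`: the partition `λ` has `e`-core `ρ` and `e`-weight `r`. -/
def HasCoreAndWeight (e r : ℕ) (ρ lam : YoungDiagram) : Prop :=
  IsECore e ρ ∧ ∃ chain : Fin (r + 1) → YoungDiagram,
    chain 0 = ρ ∧ chain (Fin.last r) = lam ∧
    ∀ j : Fin r, chain j.castSucc ≤ chain j.succ ∧
      IsEHook e ((chain j.succ).cells \ (chain j.castSucc).cells)

/-- The set of beta-numbers of a partition with at most `N` parts. -/
def betaSet (N : ℕ) (lam : YoungDiagram) : Finset ℕ :=
  (Finset.range N).image fun j => lam.rowLen j + (N - 1 - j)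

/-- The number of beads on runner `i` of the abacus display `Ab_N(λ)`. -/
def runnerBeads (e N i : ℕ) (lam : YoungDiagram) : ℕ :=
  ((betaSet N lam).filter fun m => m % e = i).card

/-- `ρ` is a Rouquier core for `d`, witnessed by the abacus display `Ab_N(ρ)`:
for all `0 ≤ i ≤ e - 2` runner `i + 1` carries at least `d - 1` more beads than
runner `i`. -/
def IsRouquierWitness (e d N : ℕ) (ρ : YoungDiagram) : Prop :=
  ρ.colLen 0 ≤ N ∧
    ∀ i : ℕ, i + 1 ≤ e - 1 →
      runnerBeads e N i ρ + (d - 1) ≤ runnerBeads e N (i + 1) ρ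

/-!
Work on the abacus with `N + C * e` beads, enough to display `μ` and the added hook; shifting by a
multiple of `e` keeps the Rouquier inequalities and does not change `-N` modulo `e`. Adding an
`e`-hook moves one bead one level down its runner, so the total bead level of `μ` exceeds that of
the flush abacus of its core by exactly its weight `r - 1 ≤ d - 1`. A bead at level `s` on runner
`u` next to a gap at level `s` on a runner `v > u` would cost at least `1 + (d - 1)` extra levels,
so every level of the abacus of `μ` is filled from the right. Adding the hook `(k, 1^{e-k})` with
corner `(a, b)` moves the bead `m` of row `a + e - k` to `m + e`, where `m, …, m + e - k` are beads
and `m + e - k + 1, …, m + e` are gaps; with right-filled levels this forces `m ≡ k - 1`, that is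
`b - a ≡ -N (mod e)`.
-/

open Finset

section BetaNumbers

variable {N : ℕ} {lam : YoungDiagram}

def betaNumber (N : ℕ) (lam : YoungDiagram) (j : ℕ) : ℕ := lam.rowLen j + (N - 1 - j)

lemma mem_betaSet {m : ℕ} : m ∈ betaSet N lam ↔ ∃ j < N, betaNumber N lam j = m := by
  simp [betaSet, betaNumber]

lemma betaNumber_lt_betaNumber {j j' : ℕ} (h : j < j') (h' : j' < N) :
    betaNumber N lam j' < betaNumber N lam j := by
  have := lam.rowLen_anti j j' h.le
  unfold betaNumber; omega

lemma betaNumber_le_betaNumber {j j' : ℕ} (h : j ≤ j') (h' : j' < N) :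
    betaNumber N lam j' ≤ betaNumber N lam j := by
  have := lam.rowLen_anti j j' h
  unfold betaNumber; omega

lemma eq_of_betaNumber_eq {j j' : ℕ} (hj : j < N) (hj' : j' < N)
    (h : betaNumber N lam j = betaNumber N lam j') : j = j' := by
  rcases lt_trichotomy j j' with hlt | rfl | hgt
  · exact absurd h (betaNumber_lt_betaNumber hlt hj').ne'
  · rfl
  · exact absurd h (betaNumber_lt_betaNumber hgt hj).ne

lemma rowLen_eq_zero_of_colLen_le {j : ℕ} (h : lam.colLen 0 ≤ j) : lam.rowLen j = 0 := by
  by_contra hz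
  have := YoungDiagram.mem_iff_lt_colLen.1
    (YoungDiagram.mem_iff_lt_rowLen.2 (Nat.pos_of_ne_zero hz))
  omega

lemma colLen_le_colLen {ν ξ : YoungDiagram} (h : ν ≤ ξ) : ν.colLen 0 ≤ ξ.colLen 0 := by
  by_contra hlt
  have := YoungDiagram.mem_iff_lt_colLen.1 (h (YoungDiagram.mem_iff_lt_colLen.2 (not_le.1 hlt)))
  omega

lemma betaSet_add_right {e : ℕ} (hN : lam.colLen 0 ≤ N) :
    betaSet (N + e) lam = (betaSet N lam).image (· + e) ∪ range e := by
  ext m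
  simp only [mem_union, mem_image, mem_range, mem_betaSet]
  constructor
  · rintro ⟨j, hj, rfl⟩
    rcases lt_or_ge j N with h | h
    · exact .inl ⟨betaNumber N lam j, ⟨j, h, rfl⟩, by unfold betaNumber; omega⟩
    · have := rowLen_eq_zero_of_colLen_le (lam := lam) (j := j) (by omega)
      right; unfold betaNumber; omega
  · rintro (⟨_, ⟨j, hj, rfl⟩, rfl⟩ | hm)
    · exact ⟨j, by omega, by unfold betaNumber; omega⟩
    · have := rowLen_eq_zero_of_colLen_le (lam := lam) (j := N + e - 1 - m) (by omega)
      exact ⟨N + e - 1 - m, by omega, by unfold betaNumber; omega⟩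

lemma runnerBeads_add_right {e i : ℕ} (hi : i < e) (hN : lam.colLen 0 ≤ N) :
    runnerBeads e (N + e) i lam = runnerBeads e N i lam + 1 := by
  have hshift : ((betaSet N lam).image (· + e)).filter (· % e = i) =
      ((betaSet N lam).filter (· % e = i)).image (· + e) := by
    ext m
    simp only [mem_filter, mem_image]
    constructor
    · rintro ⟨⟨q, hq, rfl⟩, hmod⟩
      exact ⟨q, ⟨hq, by rwa [Nat.add_mod_right] at hmod⟩, rfl⟩
    · rintro ⟨q, ⟨hq, hmod⟩, rfl⟩
      exact ⟨⟨q, hq, rfl⟩, by rwa [Nat.add_mod_right]⟩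
  have hbottom : (range e).filter (· % e = i) = {i} := by
    ext x; simp only [mem_filter, mem_range, mem_singleton]
    constructor
    · rintro ⟨hx, rfl⟩; exact (Nat.mod_eq_of_lt hx).symm
    · rintro rfl; exact ⟨hi, Nat.mod_eq_of_lt hi⟩
  have hdisj : Disjoint (((betaSet N lam).image (· + e)).filter (· % e = i))
      ((range e).filter (· % e = i)) := by
    simp only [disjoint_left, mem_filter, mem_image, mem_range]
    rintro _ ⟨⟨q, _, rfl⟩, _⟩ ⟨_, _⟩; omega
  unfold runnerBeads
  rw [betaSet_add_right hN, filter_union, card_union_of_disjoint hdisj, hshift, hbottom,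
    card_image_of_injective _ (add_left_injective e), card_singleton]

lemma runnerBeads_add_mul {e i : ℕ} (hi : i < e) (hN : lam.colLen 0 ≤ N) (c : ℕ) :
    runnerBeads e (N + c * e) i lam = runnerBeads e N i lam + c := by
  induction c with
  | zero => simp
  | succ c ih =>
    rw [add_mul, one_mul, ← add_assoc, runnerBeads_add_right hi (by nlinarith), ih, add_assoc]

end BetaNumbers

lemma IsRouquierWitness.add_mul {e d N : ℕ} {ρ : YoungDiagram} (h : IsRouquierWitness e d N ρ)
    (c : ℕ) : IsRouquierWitness e d (N + c * e) ρ := by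
  refine ⟨h.1.trans (Nat.le_add_right _ _), fun i hi => ?_⟩
  rw [runnerBeads_add_mul (by omega) h.1, runnerBeads_add_mul (by omega) h.1]
  have := h.2 i hi
  omega

lemma IsRouquierWitness.runnerBeads_add_le {e d N : ℕ} {ρ : YoungDiagram}
    (h : IsRouquierWitness e d N ρ) {u v : ℕ} (huv : u < v) (hv : v < e) :
    runnerBeads e N u ρ + (d - 1) ≤ runnerBeads e N v ρ := by
  induction v, huv using Nat.le_induction with
  | base => exact h.2 u (by omega)
  | succ v huv ih =>
    have := h.2 v (by omega)
    have := ih (by omega)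
    omega

section RimHooks

variable {ν ξ : YoungDiagram}

lemma mem_cells_sdiff_iff {x y : ℕ} :
    (x, y) ∈ ξ.cells \ ν.cells ↔ ν.rowLen x ≤ y ∧ y < ξ.rowLen x := by
  simp only [mem_sdiff, YoungDiagram.mem_cells, YoungDiagram.mem_iff_lt_rowLen, not_lt]
  tauto

lemma card_filter_fst_cells_sdiff (j : ℕ) :
    #{c ∈ ξ.cells \ ν.cells | c.1 = j} = ξ.rowLen j - ν.rowLen j := by
  have : {c ∈ ξ.cells \ ν.cells | c.1 = j} = (Ico (ν.rowLen j) (ξ.rowLen j)).image (j, ·) := by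
    ext ⟨x, y⟩
    simp only [mem_filter, mem_cells_sdiff_iff, mem_image, mem_Ico, Prod.mk.injEq]
    constructor
    · rintro ⟨h, rfl⟩; exact ⟨y, h, rfl, rfl⟩
    · rintro ⟨y, h, rfl, rfl⟩; exact ⟨h, rfl⟩
  rw [this, card_image_of_injective _ (Prod.mk_right_injective j), Nat.card_Ico]

lemma sum_Icc_tsub_add_eq {f g : ℕ → ℕ} {a a' : ℕ} (h : a ≤ a')
    (hle : ∀ j, a ≤ j → j ≤ a' → g j ≤ f j) (hsucc : ∀ j, a ≤ j → j < a' → f (j + 1) = g j + 1) :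
    ∑ j ∈ Icc a a', (f j - g j) + g a' + a = f a + a' := by
  induction a', h using Nat.le_induction with
  | base => simp [Nat.sub_add_cancel (hle a le_rfl le_rfl)]
  | succ a' h ih =>
    rw [sum_Icc_succ_top (by omega)]
    have := ih (fun j h1 h2 => hle j h1 (by omega)) (fun j h1 h2 => hsucc j h1 (by omega))
    have := hsucc a' h (by omega)
    have := hle (a' + 1) (by omega) le_rfl
    omega

/-- `ξ.cells \ ν.cells` is a rim hook with rows `a, …, a'`: consecutive rows overlap in exactly
one column. -/
structure IsRimHook (ν ξ : YoungDiagram) (a a' : ℕ) : Prop where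
  le : a ≤ a'
  rowLen_lt : ∀ j, a ≤ j → j ≤ a' → ν.rowLen j < ξ.rowLen j
  rowLen_eq : ∀ j, j < a ∨ a' < j → ξ.rowLen j = ν.rowLen j
  rowLen_succ : ∀ j, a ≤ j → j < a' → ξ.rowLen (j + 1) = ν.rowLen j + 1

namespace IsRimHook

variable {a a' N : ℕ}

lemma fst_mem (h : IsRimHook ν ξ a a') {x y : ℕ} (hxy : (x, y) ∈ ξ.cells \ ν.cells) :
    a ≤ x ∧ x ≤ a' := by
  rw [mem_cells_sdiff_iff] at hxy
  by_contra hx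
  have := h.rowLen_eq x (by omega)
  omega

lemma card_add (h : IsRimHook ν ξ a a') :
    #(ξ.cells \ ν.cells) + ν.rowLen a' + a = ξ.rowLen a + a' := by
  rw [card_eq_sum_card_fiberwise (f := Prod.fst) (t := Icc a a')
    (fun c hc => mem_Icc.2 (h.fst_mem (x := c.1) (y := c.2) hc))]
  simp only [card_filter_fst_cells_sdiff]
  exact sum_Icc_tsub_add_eq h.le (fun j h1 h2 => (h.rowLen_lt j h1 h2).le) h.rowLen_succ

lemma noTwoByTwo (h : IsRimHook ν ξ a a') : NoTwoByTwo (ξ.cells \ ν.cells) := by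
  rintro ⟨x, y, h00, h10, -, h11⟩
  have hx := h.fst_mem h10
  have hsucc := h.rowLen_succ x (h.fst_mem h00).1 (by omega)
  rw [mem_cells_sdiff_iff] at h00 h11
  omega

lemma boxConnected (h : IsRimHook ν ξ a a') : BoxConnected (ξ.cells \ ν.cells) := by
  set S := ξ.cells \ ν.cells
  let R := fun u v : ℕ × ℕ => u ∈ S ∧ v ∈ S ∧ BoxAdj u v
  have hR : ∀ u v, R u v → R v u := fun u v ⟨hu, hv, hadj⟩ => ⟨hv, hu, by unfold BoxAdj at *; omega⟩
  have symm : ∀ {u v}, Relation.ReflTransGen R u v → Relation.ReflTransGen R v u :=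
    fun huv => Relation.reflTransGen_swap.1 (Relation.ReflTransGen.mono hR _ _ huv)
  have row : ∀ x y, (x, y) ∈ S → Relation.ReflTransGen R (x, ν.rowLen x) (x, y) := by
    intro x y hxy
    have hy := (mem_cells_sdiff_iff.1 hxy)
    induction y, hy.1 using Nat.le_induction with
    | base => rfl
    | succ y hy' ih =>
      refine (ih (mem_cells_sdiff_iff.2 ⟨hy', by omega⟩) ⟨hy', by omega⟩).tail
        ⟨mem_cells_sdiff_iff.2 ⟨hy', by omega⟩, hxy, .inl ⟨rfl, .inl rfl⟩⟩
  have start : ∀ x, a ≤ x → x ≤ a' → (x, ν.rowLen x) ∈ S :=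
    fun x h1 h2 => mem_cells_sdiff_iff.2 ⟨le_rfl, h.rowLen_lt x h1 h2⟩
  -- consecutive rows meet in the column `ν.rowLen x`
  have down : ∀ x, a ≤ x → x < a' →
      Relation.ReflTransGen R (x, ν.rowLen x) (x + 1, ν.rowLen (x + 1)) := by
    intro x h1 h2
    have hsucc := h.rowLen_succ x h1 h2
    have hcorner : (x + 1, ν.rowLen x) ∈ S :=
      mem_cells_sdiff_iff.2 ⟨ν.rowLen_anti x (x + 1) (by omega), by omega⟩
    exact .head ⟨start x h1 h2.le, hcorner, .inr ⟨rfl, .inl rfl⟩⟩ (symm (row _ _ hcorner))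
  have toLast : ∀ x, a ≤ x → x ≤ a' →
      Relation.ReflTransGen R (x, ν.rowLen x) (a', ν.rowLen a') := by
    intro x h1 h2
    induction h2 using Nat.decreasingInduction with
    | self => rfl
    | of_succ x hx ih => exact (down x h1 hx).trans (ih (by omega))
  intro c hc c' hc'
  have hx := h.fst_mem (x := c.1) (y := c.2) hc
  have hx' := h.fst_mem (x := c'.1) (y := c'.2) hc'
  exact (symm (row c.1 c.2 hc)).trans ((toLast _ hx.1 hx.2).trans
    ((symm (toLast _ hx'.1 hx'.2)).trans (row c'.1 c'.2 hc')))

lemma isEHook (h : IsRimHook ν ξ a a') {e : ℕ} (he : #(ξ.cells \ ν.cells) = e) :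
    IsEHook e (ξ.cells \ ν.cells) :=
  ⟨he, h.boxConnected, h.noTwoByTwo⟩

lemma betaNumber_eq (h : IsRimHook ν ξ a a') (ha' : a' < N) :
    betaNumber N ξ a = betaNumber N ν a' + #(ξ.cells \ ν.cells) := by
  have := h.card_add
  have := h.le
  unfold betaNumber; omega

lemma betaNumber_eq_of_lt_or_lt (h : IsRimHook ν ξ a a') {j : ℕ} (hj : j < a ∨ a' < j) :
    betaNumber N ξ j = betaNumber N ν j := by
  unfold betaNumber; rw [h.rowLen_eq j hj]

lemma betaNumber_succ_eq (h : IsRimHook ν ξ a a') {j : ℕ} (h1 : a ≤ j) (h2 : j < a') (hN : a' < N) :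
    betaNumber N ξ (j + 1) = betaNumber N ν j := by
  have := h.rowLen_succ j h1 h2
  unfold betaNumber; omega

lemma betaNumber_lt (h : IsRimHook ν ξ a a') (ha' : a' < N) :
    betaNumber N ν a' < betaNumber N ξ a := by
  have hlt : betaNumber N ν a' < betaNumber N ξ a' := by
    have := h.rowLen_lt a' h.le le_rfl
    unfold betaNumber; omega
  rcases h.le.lt_or_eq with hlt' | rfl
  · exact hlt.trans (betaNumber_lt_betaNumber hlt' ha')
  · exact hlt

lemma betaSet_eq (h : IsRimHook ν ξ a a') (ha' : a' < N) :
    betaSet N ξ = insert (betaNumber N ξ a) ((betaSet N ν).erase (betaNumber N ν a')) := by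
  have := h.le
  ext q
  simp only [mem_insert, mem_erase, mem_betaSet]
  constructor
  · rintro ⟨x, hx, rfl⟩
    rcases lt_trichotomy x a with hxa | rfl | hxa
    · rw [h.betaNumber_eq_of_lt_or_lt (.inl hxa)]
      exact .inr ⟨fun he => by have := eq_of_betaNumber_eq hx ha' he; omega, x, hx, rfl⟩
    · exact .inl rfl
    · rcases le_or_gt x a' with hxa' | hxa'
      · have hx' := h.betaNumber_succ_eq (j := x - 1) (by omega) (by omega) ha'
        rw [Nat.sub_add_cancel (by omega)] at hx'
        rw [hx']
        exact .inr ⟨fun he => by have := eq_of_betaNumber_eq (by omega) ha' he; omega,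
          x - 1, by omega, rfl⟩
      · rw [h.betaNumber_eq_of_lt_or_lt (.inr hxa')]
        exact .inr ⟨fun he => by have := eq_of_betaNumber_eq hx ha' he; omega, x, hx, rfl⟩
  · rintro (rfl | ⟨hne, x, hx, rfl⟩)
    · exact ⟨a, by omega, rfl⟩
    · have hxa' : x ≠ a' := by rintro rfl; exact hne rfl
      by_cases hmid : a ≤ x ∧ x < a'
      · exact ⟨x + 1, by omega, h.betaNumber_succ_eq hmid.1 hmid.2 ha'⟩
      · exact ⟨x, hx, h.betaNumber_eq_of_lt_or_lt (by omega)⟩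

lemma betaNumber_notMem_betaSet (h : IsRimHook ν ξ a a') (ha' : a' < N) :
    betaNumber N ξ a ∉ betaSet N ν := by
  rw [mem_betaSet]
  rintro ⟨x, hx, hxa⟩
  have := h.le
  have hlt := h.betaNumber_lt ha'
  rcases lt_trichotomy x a' with hx' | rfl | hx'
  · by_cases hxa : x < a
    · have := betaNumber_lt_betaNumber (N := N) (lam := ξ) hxa (by omega)
      rw [h.betaNumber_eq_of_lt_or_lt (.inl hxa)] at this
      omega
    · have := h.betaNumber_succ_eq (by omega) hx' ha'
      have := betaNumber_lt_betaNumber (N := N) (lam := ξ) (j := a) (j' := x + 1) (by omega)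
        (by omega)
      omega
  · omega
  · have := betaNumber_lt_betaNumber (lam := ν) hx' hx
    omega


end IsRimHook

end RimHooks

section Paths

variable {S : Finset (ℕ × ℕ)}

lemma exists_mem_row_of_reflTransGen {u v : ℕ × ℕ} (hu : u ∈ S)
    (h : Relation.ReflTransGen (fun c c' => c ∈ S ∧ c' ∈ S ∧ BoxAdj c c') u v) {j : ℕ}
    (h1 : u.1 ≤ j) (h2 : j ≤ v.1) : ∃ y, (j, y) ∈ S := by
  induction h with
  | refl => exact ⟨u.2, by rwa [show j = u.1 by omega]⟩
  | @tail w v _ hwv ih =>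
    obtain ⟨-, hv, hadj⟩ := hwv
    by_cases hj : j ≤ w.1
    · exact ih hj
    · have : v.1 = j := by unfold BoxAdj at hadj; omega
      exact ⟨v.2, by rwa [← this]⟩

lemma fst_le_of_reflTransGen {j : ℕ} (hcut : ∀ y, (j, y) ∈ S → (j + 1, y) ∉ S) {u v : ℕ × ℕ}
    (h : Relation.ReflTransGen (fun c c' => c ∈ S ∧ c' ∈ S ∧ BoxAdj c c') u v) (hu : u.1 ≤ j) :
    v.1 ≤ j := by
  induction h with
  | refl => exact hu
  | @tail w v _ hwv ih =>
    obtain ⟨hw, hv, hadj⟩ := hwv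
    rcases hadj with ⟨h1, -⟩ | ⟨h2, h1 | h1⟩
    · omega
    · by_contra hj
      have hwj : w.1 = j := by omega
      apply hcut w.2 (by rwa [← hwj])
      rwa [← hwj, h1, h2]
    · omega

end Paths

lemma rowLen_le_rowLen {ν ξ : YoungDiagram} (h : ν ≤ ξ) (j : ℕ) : ν.rowLen j ≤ ξ.rowLen j := by
  by_contra hlt
  have := YoungDiagram.mem_iff_lt_rowLen.1 (h (YoungDiagram.mem_iff_lt_rowLen.2 (not_le.1 hlt)))
  omega

lemma IsEHook.exists_isRimHook {e : ℕ} {ν ξ : YoungDiagram} (hle : ν ≤ ξ)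
    (h : IsEHook e (ξ.cells \ ν.cells)) (he : 0 < e) : ∃ a a', IsRimHook ν ξ a a' := by
  obtain ⟨hcard, hconn, h22⟩ := h
  set S := ξ.cells \ ν.cells
  have hne : (S.image Prod.fst).Nonempty := (card_pos.1 (by omega)).image _
  obtain ⟨u, hu, hua⟩ := mem_image.1 ((S.image Prod.fst).min'_mem hne)
  obtain ⟨v, hv, hva⟩ := mem_image.1 ((S.image Prod.fst).max'_mem hne)
  set a := (S.image Prod.fst).min' hne
  set a' := (S.image Prod.fst).max' hne
  have hrows : ∀ x y, (x, y) ∈ S → a ≤ x ∧ x ≤ a' := fun x y hxy =>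
    ⟨min'_le _ _ (mem_image_of_mem Prod.fst hxy), le_max' _ _ (mem_image_of_mem Prod.fst hxy)⟩
  have hlt : ∀ j, a ≤ j → j ≤ a' → ν.rowLen j < ξ.rowLen j := by
    intro j h1 h2
    obtain ⟨y, hy⟩ := exists_mem_row_of_reflTransGen hu (hconn u hu v hv) (j := j) (by omega)
      (by omega)
    have := mem_cells_sdiff_iff.1 hy
    omega
  refine ⟨a, a', ⟨hua ▸ (hrows u.1 u.2 hu).2, hlt, fun j hj => ?_, fun j h1 h2 => ?_⟩⟩
  · refine le_antisymm (not_lt.1 fun hj' => ?_) (rowLen_le_rowLen hle j)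
    have := hrows _ _ (mem_cells_sdiff_iff.2 ⟨le_rfl, hj'⟩)
    omega
  · have hj := hlt j h1 h2.le
    have hj1 := hlt (j + 1) (by omega) h2
    have hanti := ν.rowLen_anti j (j + 1) (by omega)
    have hanti' := ξ.rowLen_anti j (j + 1) (by omega)
    have hupper : ξ.rowLen (j + 1) ≤ ν.rowLen j + 1 := by
      refine not_lt.1 fun hgt => h22 ⟨j, ν.rowLen j, ?_, ?_, ?_, ?_⟩ <;>
        exact mem_cells_sdiff_iff.2 ⟨by omega, by omega⟩
    -- otherwise no box of row `j` sits above a box of row `j + 1`, disconnecting the rows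
    have hlower : ν.rowLen j < ξ.rowLen (j + 1) := by
      refine not_le.1 fun hle' => ?_
      have hcut : ∀ y, (j, y) ∈ S → (j + 1, y) ∉ S := fun y hy hy' => by
        have := mem_cells_sdiff_iff.1 hy
        have := mem_cells_sdiff_iff.1 hy'
        omega
      have := fst_le_of_reflTransGen hcut (hconn u hu v hv) (by omega)
      omega
    omega


lemma IsEHook.betaSet_eq {e N : ℕ} {ν ξ : YoungDiagram} (hle : ν ≤ ξ)
    (h : IsEHook e (ξ.cells \ ν.cells)) (he : 0 < e) (hN : ξ.colLen 0 ≤ N) :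
    ∃ m ∈ betaSet N ν, m + e ∉ betaSet N ν ∧
      betaSet N ξ = insert (m + e) ((betaSet N ν).erase m) := by
  obtain ⟨a, a', hr⟩ := h.exists_isRimHook hle he
  have ha' : a' < N := by
    have := YoungDiagram.mem_iff_lt_colLen.1
      (ξ.up_left_mem le_rfl (Nat.zero_le _) (YoungDiagram.mem_iff_lt_rowLen.2
        (hr.rowLen_lt a' hr.le le_rfl)))
    omega
  have hbeta : betaNumber N ν a' + e = betaNumber N ξ a := by rw [hr.betaNumber_eq ha', h.1]
  exact ⟨betaNumber N ν a', mem_betaSet.2 ⟨a', ha', rfl⟩, hbeta ▸ hr.betaNumber_notMem_betaSet ha',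
    hbeta ▸ hr.betaSet_eq ha'⟩

lemma exists_le_rowLen_eq (ξ : YoungDiagram) {f : ℕ → ℕ} (hf : Antitone f)
    (hle : ∀ j, f j ≤ ξ.rowLen j) : ∃ ν ≤ ξ, ∀ j, ν.rowLen j = f j := by
  let ν : YoungDiagram :=
    ⟨{c ∈ ξ.cells | c.2 < f c.1}, fun c c' hc' hc => by
      simp only [coe_filter, Set.mem_ofPred_eq] at hc ⊢
      exact ⟨ξ.isLowerSet hc' hc.1, lt_of_le_of_lt hc'.2 (hc.2.trans_le (hf hc'.1))⟩⟩
  have hmem : ∀ x y, (x, y) ∈ ν ↔ y < f x := fun x y => by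
    change (x, y) ∈ {c ∈ ξ.cells | c.2 < f c.1} ↔ _
    simp only [mem_filter, YoungDiagram.mem_cells, YoungDiagram.mem_iff_lt_rowLen]
    exact ⟨And.right, fun h => ⟨h.trans_le (hle x), h⟩⟩
  refine ⟨ν, filter_subset _ _, fun j => le_antisymm ?_ ?_⟩
  · exact not_lt.1 fun h => lt_irrefl _ ((hmem j _).1 (YoungDiagram.mem_iff_lt_rowLen.2 h))
  · exact not_lt.1 fun h => lt_irrefl _ (YoungDiagram.mem_iff_lt_rowLen.1 ((hmem j _).2 h))

lemma mem_betaSet_of_rowLen_eq_zero {N j m : ℕ} {ξ : YoungDiagram} (hj : j < N)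
    (h0 : ξ.rowLen j = 0) (hm : m ≤ N - 1 - j) : m ∈ betaSet N ξ := by
  have := ξ.rowLen_anti j (N - 1 - m) (by omega)
  exact mem_betaSet.2 ⟨N - 1 - m, by omega, by unfold betaNumber; omega⟩

lemma exists_isRimHook_of_notMem_betaSet {N A q : ℕ} {ξ : YoungDiagram} (hN : ξ.colLen 0 ≤ N)
    (hA : A < N) (hq : q < betaNumber N ξ A) (hgap : q ∉ betaSet N ξ) :
    ∃ ν ≤ ξ, ∃ a' < N, IsRimHook ν ξ A a' ∧ betaNumber N ν a' = q := by
  obtain ⟨a', ha'⟩ : ∃ a', Nat.findGreatest (fun j => q < betaNumber N ξ j) (N - 1) = a' := ⟨_, rfl⟩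
  have hAa' : A ≤ a' := ha' ▸ Nat.le_findGreatest (by omega) hq
  have ha'N : a' < N := ha' ▸ (Nat.findGreatest_le _).trans_lt (by omega)
  have hqa' : q < ξ.rowLen a' + (N - 1 - a') :=
    ha' ▸ Nat.findGreatest_spec (P := fun j => q < betaNumber N ξ j) (by omega) hq
  have hnext : ξ.rowLen (a' + 1) + (N - 1 - a') ≤ q := by
    rcases lt_or_ge (a' + 1) N with h | h
    · have hle := not_lt.1 (Nat.findGreatest_is_greatest (P := fun j => q < betaNumber N ξ j)
        (ha' ▸ lt_add_one a') (by omega))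
      have hne : betaNumber N ξ (a' + 1) ≠ q := fun he => hgap (mem_betaSet.2 ⟨a' + 1, h, he⟩)
      have := lt_of_le_of_ne (ha' ▸ hle) hne
      unfold betaNumber at this; omega
    · have := rowLen_eq_zero_of_colLen_le (lam := ξ) (j := a' + 1) (by omega)
      omega
  have hpos : ∀ j, A < j → j ≤ a' → 0 < ξ.rowLen j := fun j h1 h2 => by
    refine Nat.pos_of_ne_zero fun h0 => hgap (mem_betaSet_of_rowLen_eq_zero (by omega) h0 ?_)
    have := betaNumber_le_betaNumber (lam := ξ) h2 ha'N
    unfold betaNumber at this; omega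
  clear ha'
  -- inside the hook, row `j` of `ν` is row `j + 1` of `ξ` shortened by one; row `a'` ends at `q`
  let f : ℕ → ℕ := fun j =>
    if j = a' then q - (N - 1 - a') else if j < A ∨ a' < j then ξ.rowLen j else ξ.rowLen (j + 1) - 1
  have hf_le : ∀ j, f j ≤ ξ.rowLen j := fun j => by
    have := ξ.rowLen_anti j (j + 1) (by omega)
    simp only [f]; split_ifs <;> subst_vars <;> omega
  have hf : Antitone f := antitone_nat_of_succ_le fun j => by
    have := ξ.rowLen_anti j (j + 1) (by omega)
    have := ξ.rowLen_anti (j + 1) (j + 1 + 1) (by omega)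
    have := hf_le (j + 1)
    simp only [f] at this ⊢; split_ifs at this ⊢ <;> subst_vars <;> omega
  obtain ⟨ν, hνξ, hν⟩ := exists_le_rowLen_eq ξ hf hf_le
  refine ⟨ν, hνξ, a', ha'N, ⟨hAa', fun j h1 h2 => ?_, fun j hj => ?_, fun j h1 h2 => ?_⟩, ?_⟩
  · have := ξ.rowLen_anti j (j + 1) (by omega)
    rw [hν]; simp only [f]; split_ifs
    · subst_vars; omega
    · omega
    · have := hpos (j + 1) (by omega) (by omega); omega
  · rw [hν]; simp only [f, if_pos hj, if_neg (show j ≠ a' by omega)]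
  · have := hpos (j + 1) (by omega) (by omega)
    rw [hν]; simp only [f, if_neg (show j ≠ a' by omega), if_neg (show ¬(j < A ∨ a' < j) by omega)]
    omega
  · unfold betaNumber; rw [hν]; simp only [f, if_pos rfl]; omega

lemma IsECore.sub_mem_betaSet {e N p : ℕ} {ρ : YoungDiagram} (h : IsECore e ρ)
    (hN : ρ.colLen 0 ≤ N) (hp : p ∈ betaSet N ρ) (hpe : e ≤ p) : p - e ∈ betaSet N ρ := by
  rcases Nat.eq_zero_or_pos e with rfl | he
  · simpa using hp
  by_contra hgap
  obtain ⟨A, hA, rfl⟩ := mem_betaSet.1 hp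
  obtain ⟨ν, hνρ, a', ha', hr, hq⟩ := exists_isRimHook_of_notMem_betaSet hN hA (by omega) hgap
  refine h ⟨ν, hνρ, hr.isEHook ?_⟩
  have := hr.betaNumber_eq ha'
  omega

section Abacus

variable {e : ℕ} {B : Finset ℕ}

def runnerLevels (e i : ℕ) (B : Finset ℕ) : Finset ℕ := {m ∈ B | m % e = i}.image (· / e)

def abacusHeight (e : ℕ) (B : Finset ℕ) : ℕ := ∑ m ∈ B, m / e

/-- `abacusHeight e B - flushHeight e B` is the `e`-weight of the partition with beta-set `B`. -/
def flushHeight (e : ℕ) (B : Finset ℕ) : ℕ := ∑ i ∈ range e, ∑ j ∈ range #(runnerLevels e i B), j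

lemma div_injOn_filter_mod (i : ℕ) : Set.InjOn (· / e) ↑({m ∈ B | m % e = i} : Finset ℕ) := by
  intro x hx y hy hxy
  simp only [coe_filter, Set.mem_ofPred_eq] at hx hy
  rw [← Nat.div_add_mod x e, ← Nat.div_add_mod y e, hx.2, hy.2]
  exact congrArg (e * · + i) hxy

lemma card_runnerLevels (i : ℕ) : #(runnerLevels e i B) = #{m ∈ B | m % e = i} :=
  card_image_of_injOn (div_injOn_filter_mod i)

lemma mem_runnerLevels {i s : ℕ} (hi : i < e) : s ∈ runnerLevels e i B ↔ e * s + i ∈ B := by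
  simp only [runnerLevels, mem_image, mem_filter]
  constructor
  · rintro ⟨m, ⟨hm, rfl⟩, rfl⟩
    rwa [Nat.div_add_mod]
  · intro h
    refine ⟨e * s + i, ⟨h, ?_⟩, ?_⟩
    · rw [Nat.mul_add_mod, Nat.mod_eq_of_lt hi]
    · rw [Nat.mul_add_div (by omega), Nat.div_eq_of_lt hi, add_zero]

lemma sum_sum_runnerLevels (he : 0 < e) :
    ∑ i ∈ range e, ∑ s ∈ runnerLevels e i B, s = abacusHeight e B := by
  rw [abacusHeight, ← sum_fiberwise_of_maps_to (s := B) (g := (· % e)) (t := range e)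
    (fun m _ => mem_range.2 (Nat.mod_lt m he))]
  exact sum_congr rfl fun i _ => sum_image (div_injOn_filter_mod i)

lemma card_filter_mod_insert_erase {m : ℕ} (hm : m ∈ B) (hme : m + e ∉ B) (i : ℕ) :
    #{x ∈ insert (m + e) (B.erase m) | x % e = i} = #{x ∈ B | x % e = i} := by
  rw [filter_insert, filter_erase, Nat.add_mod_right]
  split_ifs with hi
  · have hmem : m ∈ {x ∈ B | x % e = i} := mem_filter.2 ⟨hm, hi⟩
    rw [card_insert_of_notMem fun h => hme (mem_filter.1 (mem_of_mem_erase h)).1,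
      card_erase_of_mem hmem, Nat.sub_add_cancel (card_pos.2 ⟨m, hmem⟩)]
  · rw [erase_eq_of_notMem (s := {x ∈ B | x % e = i}) fun h => hi (mem_filter.1 h).2]

lemma abacusHeight_insert_erase (he : 0 < e) {m : ℕ} (hm : m ∈ B) (hme : m + e ∉ B) :
    abacusHeight e (insert (m + e) (B.erase m)) = abacusHeight e B + 1 := by
  unfold abacusHeight
  rw [sum_insert fun h => hme (mem_of_mem_erase h), Nat.add_div_right m he,
    ← add_sum_erase B (· / e) hm]
  ring

lemma flushHeight_congr {B' : Finset ℕ} (h : ∀ i, #{m ∈ B' | m % e = i} = #{m ∈ B | m % e = i}) :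
    flushHeight e B' = flushHeight e B := by
  simp only [flushHeight, card_runnerLevels, h]

lemma sum_range_card_le_sum (F : Finset ℕ) : ∑ i ∈ range #F, i ≤ ∑ x ∈ F, x := by
  have := Finset.sum_range_le_sum (s := F.map Nat.castEmbedding) (c := 0) (by simp)
  simp only [card_map, zero_add, sum_map, Nat.castEmbedding_apply] at this
  exact_mod_cast (by push_cast; exact this : ((∑ i ∈ range #F, i : ℕ) : ℤ) ≤ (∑ x ∈ F, x : ℕ))

/-- Move the bead at level `s` from `F` to `G` and apply `sum_range_card_le_sum` to both. -/
lemma sum_range_card_add_le_of_mem_of_notMem {F G : Finset ℕ} {s : ℕ} (hF : s ∈ F) (hG : s ∉ G) :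
    ∑ i ∈ range #F, i + ∑ i ∈ range #G, i + #G + 1 ≤ ∑ x ∈ F, x + ∑ x ∈ G, x + #F := by
  have hF' := sum_range_card_le_sum (F.erase s)
  have hG' := sum_range_card_le_sum (insert s G)
  rw [card_erase_of_mem hF] at hF'
  rw [card_insert_of_notMem hG, sum_range_succ, sum_insert hG] at hG'
  have hcard : #F = #F - 1 + 1 := (Nat.sub_add_cancel (card_pos.2 ⟨s, hF⟩)).symm
  rw [← add_sum_erase F (fun x => x) hF, hcard, sum_range_succ]
  omega

lemma eq_range_card_of_forall_succ_mem {F : Finset ℕ} (h : ∀ s, s + 1 ∈ F → s ∈ F) :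
    F = range #F := by
  have hdown : ∀ x ∈ F, ∀ y ≤ x, y ∈ F := fun x hx y hy => by
    induction hy using Nat.decreasingInduction with
    | self => exact hx
    | of_succ y _ ih => exact h y ih
  refine eq_of_subset_of_card_le (fun x hx => mem_range.2 ?_) (by simp)
  simpa using card_le_card (show range (x + 1) ⊆ F from fun y hy =>
    hdown x hx y (Nat.lt_succ_iff.1 (mem_range.1 hy)))

lemma abacusHeight_eq_flushHeight (he : 0 < e) (hB : ∀ p ∈ B, e ≤ p → p - e ∈ B) :
    abacusHeight e B = flushHeight e B := by
  rw [← sum_sum_runnerLevels he]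
  refine sum_congr rfl fun i hi => ?_
  have hi := mem_range.1 hi
  conv_lhs => rw [eq_range_card_of_forall_succ_mem (F := runnerLevels e i B) fun s hs => by
    rw [mem_runnerLevels hi] at hs ⊢
    have := hB _ hs (by nlinarith)
    rwa [mul_add, mul_one, add_right_comm, Nat.add_sub_cancel] at this]

lemma flushHeight_add_lt_of_mem_of_notMem {u v s : ℕ} (hu : u < e) (hv : v < e) (huv : u ≠ v)
    (hbead : e * s + u ∈ B) (hgap : e * s + v ∉ B) :
    flushHeight e B + #(runnerLevels e v B) < abacusHeight e B + #(runnerLevels e u B) := by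
  have he : 0 < e := by omega
  rw [← sum_sum_runnerLevels he, flushHeight]
  have hvu : v ∈ (range e).erase u := mem_erase.2 ⟨huv.symm, mem_range.2 hv⟩
  rw [← add_sum_erase _ _ (mem_range.2 hu), ← add_sum_erase _ _ hvu,
    ← add_sum_erase _ _ (mem_range.2 hu), ← add_sum_erase _ _ hvu]
  have hrest := sum_le_sum fun i (_ : i ∈ ((range e).erase u).erase v) =>
    sum_range_card_le_sum (runnerLevels e i B)
  have := sum_range_card_add_le_of_mem_of_notMem ((mem_runnerLevels hu).2 hbead)
    (mt (mem_runnerLevels hv).1 hgap)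
  omega

end Abacus

lemma IsEHook.card_filter_betaSet_and_abacusHeight {e N : ℕ} {ν ξ : YoungDiagram} (hle : ν ≤ ξ)
    (h : IsEHook e (ξ.cells \ ν.cells)) (he : 0 < e) (hN : ξ.colLen 0 ≤ N) :
    (∀ i, #{m ∈ betaSet N ξ | m % e = i} = #{m ∈ betaSet N ν | m % e = i}) ∧
      abacusHeight e (betaSet N ξ) = abacusHeight e (betaSet N ν) + 1 := by
  obtain ⟨m, hm, hme, hβ⟩ := h.betaSet_eq hle he hN
  rw [hβ]
  exact ⟨card_filter_mod_insert_erase hm hme, abacusHeight_insert_erase he hm hme⟩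

namespace HasCoreAndWeight

variable {e w N : ℕ} {ρ μ : YoungDiagram}

lemma card_filter_betaSet_and_abacusHeight (h : HasCoreAndWeight e w ρ μ) (he : 0 < e)
    (hN : μ.colLen 0 ≤ N) :
    (∀ i, #{m ∈ betaSet N μ | m % e = i} = #{m ∈ betaSet N ρ | m % e = i}) ∧
      abacusHeight e (betaSet N μ) = abacusHeight e (betaSet N ρ) + w := by
  obtain ⟨-, chain, rfl, rfl, hstep⟩ := h
  have hmono : Monotone chain := Fin.monotone_iff_le_succ.2 fun j => (hstep j).1
  suffices ∀ j, (∀ i,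
      #{m ∈ betaSet N (chain j) | m % e = i} = #{m ∈ betaSet N (chain 0) | m % e = i}) ∧
      abacusHeight e (betaSet N (chain j)) = abacusHeight e (betaSet N (chain 0)) + j from
    this (Fin.last w)
  intro j
  induction j using Fin.induction with
  | zero => simp
  | succ j ih =>
    have := (hstep j).2.card_filter_betaSet_and_abacusHeight (hstep j).1 he
      ((colLen_le_colLen (hmono (Fin.le_last _))).trans hN)
    refine ⟨fun i => (this.1 i).trans (ih.1 i), ?_⟩
    rw [this.2, ih.2, Fin.val_succ, Fin.val_castSucc, add_assoc]

lemma abacusHeight_eq (h : HasCoreAndWeight e w ρ μ) (he : 0 < e) (hN : μ.colLen 0 ≤ N)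
    (hρN : ρ.colLen 0 ≤ N) : abacusHeight e (betaSet N μ) = flushHeight e (betaSet N μ) + w := by
  obtain ⟨hcount, hheight⟩ := h.card_filter_betaSet_and_abacusHeight he hN
  rw [hheight, flushHeight_congr hcount,
    abacusHeight_eq_flushHeight he fun p hp hpe => h.1.sub_mem_betaSet hρN hp hpe]

end HasCoreAndWeight

/-- Otherwise the abacus would have weight at least `d`, since runner `v` carries at least `d - 1`
more beads than runner `u`. -/
lemma IsRouquierWitness.mem_betaSet_of_mem {e d N w c u v s : ℕ} {ρ μ : YoungDiagram}
    (hρ : IsRouquierWitness e d N ρ) (hμ : HasCoreAndWeight e w ρ μ) (hw : w ≤ d - 1)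
    (hN : μ.colLen 0 ≤ N + c * e) (huv : u < v) (hv : v < e)
    (hbead : e * s + u ∈ betaSet (N + c * e) μ) : e * s + v ∈ betaSet (N + c * e) μ := by
  by_contra hgap
  have hρ' := hρ.add_mul c
  have hlt := flushHeight_add_lt_of_mem_of_notMem (by omega) hv huv.ne hbead hgap
  have hheight := hμ.abacusHeight_eq (by omega) hN hρ'.1
  have hcount := (hμ.card_filter_betaSet_and_abacusHeight (by omega) hN).1
  have hrouq := hρ'.runnerBeads_add_le huv hv
  simp only [runnerBeads, ← hcount, ← card_runnerLevels] at hrouq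
  omega

lemma mem_image_hookCells_iff {e k a b x y : ℕ} (hk : 1 ≤ k) (hke : k ≤ e) :
    (x, y) ∈ (hookCells e k).image (fun c => (c.1 + a, c.2 + b)) ↔
      (x = a ∧ b ≤ y ∧ y < b + k) ∨ (y = b ∧ a ≤ x ∧ x ≤ a + (e - k)) := by
  simp only [hookCells, mem_image, mem_union, mem_range, Prod.mk.injEq, Prod.exists]
  constructor
  · rintro ⟨x', y', ⟨j, hj, rfl, rfl⟩ | ⟨i, hi, rfl, rfl⟩, rfl, rfl⟩ <;> omega
  · rintro (⟨rfl, h1, h2⟩ | ⟨rfl, h1, h2⟩)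
    · exact ⟨0, y - b, .inl ⟨y - b, by omega, rfl, rfl⟩, by omega, by omega⟩
    · exact ⟨x - a, 0, .inr ⟨x - a, by omega, rfl, rfl⟩, by omega, by omega⟩

lemma rowLen_of_cells_sdiff_eq {e k a b : ℕ} {μ lam : YoungDiagram} (hk : 1 ≤ k) (hke : k ≤ e)
    (hS : lam.cells \ μ.cells = (hookCells e k).image fun c => (c.1 + a, c.2 + b)) :
    (∀ x, a ≤ x → x ≤ a + (e - k) → μ.rowLen x = b) ∧ ∀ x < a, b + k ≤ μ.rowLen x := by
  have hmem : ∀ x y, μ.rowLen x ≤ y ∧ y < lam.rowLen x ↔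
      (x = a ∧ b ≤ y ∧ y < b + k) ∨ (y = b ∧ a ≤ x ∧ x ≤ a + (e - k)) := fun x y => by
    rw [← mem_cells_sdiff_iff, hS, mem_image_hookCells_iff hk hke]
  refine ⟨fun x h1 h2 => ?_, fun x hx => ?_⟩
  · have hb := (hmem x b).2 (.inr ⟨rfl, h1, h2⟩)
    have := (hmem x (μ.rowLen x)).1
    omega
  · have hcorner := (hmem a (b + k - 1)).2 (.inl ⟨rfl, by omega, by omega⟩)
    have := lam.rowLen_anti x a hx.le
    have := (hmem x (μ.rowLen x)).1
    omega

lemma add_mem_betaSet_iff {N a b h k s : ℕ} {μ : YoungDiagram} (hN : a + h < N)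
    (hrow : ∀ x, a ≤ x → x ≤ a + h → μ.rowLen x = b) (htop : ∀ x < a, b + k ≤ μ.rowLen x)
    (hs : s ≤ h + k) : betaNumber N μ (a + h) + s ∈ betaSet N μ ↔ s ≤ h := by
  have hbeta : ∀ x, a ≤ x → x ≤ a + h → betaNumber N μ x = betaNumber N μ (a + h) + (a + h - x) :=
    fun x h1 h2 => by unfold betaNumber; rw [hrow x h1 h2, hrow (a + h) (by omega) le_rfl]; omega
  rw [mem_betaSet]
  constructor
  · rintro ⟨x, hx, hxs⟩
    rcases lt_or_ge x a with hxa | hxa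
    · have := htop x hxa
      have := hrow (a + h) (by omega) le_rfl
      unfold betaNumber at hxs; omega
    · rcases le_or_gt x (a + h) with hxh | hxh
      · have := hbeta x hxa hxh; omega
      · have := betaNumber_lt_betaNumber (lam := μ) hxh hx; omega
  · intro hsh
    exact ⟨a + h - s, by omega, by rw [hbeta _ (by omega) (by omega)]; omega⟩

lemma mod_add_eq_of_add_mem_iff {e h m : ℕ} {B : Finset ℕ}
    (hB : ∀ s u v, u < v → v < e → e * s + u ∈ B → e * s + v ∈ B) (hh : h < e)
    (hm : ∀ s ≤ e, m + s ∈ B ↔ s ≤ h) : m % e + h + 1 = e := by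
  have hdiv := Nat.div_add_mod m e
  have hmod := Nat.mod_lt m (by omega : 0 < e)
  rcases lt_trichotomy (m % e + h + 1) e with hlt | heq | hgt
  -- the level of `m` would end in a gap on the last runner
  · have := hB (m / e) (m % e) (e - 1) (by omega) (by omega)
      (by rw [hdiv]; simpa using (hm 0 (by omega)).2 (by omega))
    have := (hm (e - 1 - m % e) (by omega)).1 (by convert this using 1; omega)
    omega
  · exact heq
  -- the next level would start with a bead but have a gap at `m + e`
  · have := hB (m / e + 1) 0 (m % e) (by omega) hmod
      (by convert (hm (e - m % e) (Nat.sub_le e _)).2 (by omega) using 1; rw [mul_add]; omega)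
    have := (hm e le_rfl).1 (by convert this using 1; rw [mul_add]; omega)
    omega

lemma boxRes_eq_neg {e N C a b h : ℕ} (hN : a + h < N + C * e)
    (hmod : (b + (N + C * e - 1 - (a + h))) % e + h + 1 = e) :
    boxRes e (a, b) = ((-(N : ℤ)) : ℤ) := by
  set m := b + (N + C * e - 1 - (a + h))
  have hm : (m : ℤ) = b + N + C * e - 1 - (a + h) := by simp only [m]; push_cast [hN]; omega
  have hdiv : (m : ℤ) = e * (m / e : ℕ) + (m % e : ℕ) := by
    exact_mod_cast (Nat.div_add_mod m e).symm
  have hmod' : ((m % e : ℕ) : ℤ) + h + 1 = e := by exact_mod_cast hmod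
  unfold boxRes
  rw [ZMod.intCast_eq_intCast_iff_dvd_sub]
  exact ⟨C - 1 - (m / e : ℕ), by linear_combination hm - hdiv - hmod'⟩

theorem rock_skew_hook_corner_residue_general (e d N r : ℕ) (hrd : r ≤ d) (ρ μ lam : YoungDiagram)
    (hrouq : IsRouquierWitness e d N ρ)
    (hμ : HasCoreAndWeight e (r - 1) ρ μ)
    (htrans : ∃ (k a b : ℕ), 1 ≤ k ∧ k ≤ e ∧
      lam.cells \ μ.cells = (hookCells e k).image fun c => (c.1 + a, c.2 + b)) :
    ∀ c ∈ lam.cells \ μ.cells,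
      (∀ c' ∈ lam.cells \ μ.cells, c.1 ≤ c'.1 ∧ c.2 ≤ c'.2) →
      boxRes e c = ((-(N : ℤ)) : ℤ) := by
  rintro ⟨x, y⟩ hc hmin
  obtain ⟨k, a, b, hk, hke, hS⟩ := htrans
  have hmem := fun x y => hS ▸ mem_image_hookCells_iff (x := x) (y := y) (a := a) (b := b) hk hke
  obtain ⟨rfl, rfl⟩ : x = a ∧ y = b := by
    have := hmin (a, b) ((hmem a b).2 (.inl ⟨rfl, le_rfl, by omega⟩))
    have := (hmem x y).1 hc
    omega
  obtain ⟨hrow, htop⟩ := rowLen_of_cells_sdiff_eq hk hke hS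
  set C := μ.colLen 0 + x + e
  have hC : C ≤ N + C * e := by nlinarith
  have hbeads : ∀ s ≤ e, betaNumber (N + C * e) μ (x + (e - k)) + s ∈ betaSet (N + C * e) μ ↔
      s ≤ e - k := fun s hs => add_mem_betaSet_iff (by omega) hrow htop (by omega)
  have hmod := mod_add_eq_of_add_mem_iff
    (fun s u v huv hv => hrouq.mem_betaSet_of_mem hμ (by omega) (by omega) huv hv) (by omega) hbeads
  rw [betaNumber, hrow _ (by omega) (by omega)] at hmod
  exact boxRes_eq_neg (by omega) hmod

/-- In a RoCK block: if `μ ∈ Par_e(ρ, r-1)` and `λ ∈ Par_e(ρ, r)` with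
`μ ⊆ λ`, where `ρ` is a Rouquier core for `d` witnessed by `Ab_N(ρ)`, and
`λ \ μ` is a translate of the Young diagram of an `e`-hook partition
(Chuang–Kessar), then the top-left corner of `λ \ μ` has residue `-N mod e`. -/
theorem rock_skew_hook_corner_residue (e d N r : ℕ) (he : 2 ≤ e) (hd : 1 ≤ d)
    (hr1 : 1 ≤ r) (hrd : r ≤ d) (ρ μ lam : YoungDiagram)
    (hrouq : IsRouquierWitness e d N ρ)
    (hμ : HasCoreAndWeight e (r - 1) ρ μ) (hlam : HasCoreAndWeight e r ρ lam)
    (hsub : μ ≤ lam)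
    (htrans : ∃ (k a b : ℕ), 1 ≤ k ∧ k ≤ e ∧
      lam.cells \ μ.cells = (hookCells e k).image fun c => (c.1 + a, c.2 + b)) :
    ∀ c ∈ lam.cells \ μ.cells,
      (∀ c' ∈ lam.cells \ μ.cells, c.1 ≤ c'.1 ∧ c.2 ≤ c'.2) →
      boxRes e c = ((-(N : ℤ)) : ℤ) :=
  rock_skew_hook_corner_residue_general e d N r hrd ρ μ lam hrouq hμ htrans
end
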